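/- arXiv:2305.01903 — 13 statements merged into one kernel-verified Lean document; each statement's English description precedes it below -/
import Mathlib

section
/- For all indices 1 ≤ i, j ≤ k+1 with i ≠ j, the matrices P_i and P_j satisfy P_i P_j = 0. -/
open Matrix

/-- For all indices `1 ≤ i, j ≤ k+1` with `i ≠ j`, `P i * P j = 0`. -/
theorem stmt0 (k m : ℕ) (hk : 1 ≤ k) (p : Fin k → ℕ)
    (J : (i : Fin k) → Matrix (Fin (p i)) (Fin m) ℝ)
    (Jst : (i : Fin (k + 1)) →
      Matrix {x : (j : Fin k) × Fin (p j) // (x.1 : ℕ) < (i : ℕ)} (Fin m) ℝ)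
    (hJst : ∀ (i : Fin (k + 1)) (x) (c), Jst i x c = J x.1.1 x.1.2 c)
    (Jstp : (i : Fin (k + 1)) →
      Matrix (Fin m) {x : (j : Fin k) × Fin (p j) // (x.1 : ℕ) < (i : ℕ)} ℝ)
    (hJstp1 : ∀ i, Jst i * Jstp i * Jst i = Jst i)
    (hJstp2 : ∀ i, Jstp i * Jst i * Jstp i = Jstp i)
    (hJstp3 : ∀ i, (Jst i * Jstp i)ᵀ = Jst i * Jstp i)
    (hJstp4 : ∀ i, (Jstp i * Jst i)ᵀ = Jstp i * Jst i)
    (N : Fin (k + 1) → Matrix (Fin m) (Fin m) ℝ)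
    (hN0 : N 0 = 1)
    (hN : ∀ i : Fin (k + 1), N i = 1 - Jstp i * Jst i)
    (M : (i : Fin k) → Matrix (Fin (p i)) (Fin m) ℝ)
    (hM : ∀ i, M i = J i * N i.castSucc)
    (Mp : (i : Fin k) → Matrix (Fin m) (Fin (p i)) ℝ)
    (hMp1 : ∀ i, M i * Mp i * M i = M i)
    (hMp2 : ∀ i, Mp i * M i * Mp i = Mp i)
    (hMp3 : ∀ i, (M i * Mp i)ᵀ = M i * Mp i)
    (hMp4 : ∀ i, (Mp i * M i)ᵀ = Mp i * M i)
    (P : Fin (k + 1) → Matrix (Fin m) (Fin m) ℝ)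
    (hP : ∀ i : Fin k, P i.castSucc = Mp i * M i)
    (hPlast : P (Fin.last k) = 1 - ∑ i : Fin k, P i.castSucc) :
    ∀ i j : Fin (k + 1), i ≠ j → P i * P j = 0 := by
  have hNsymm : ∀ b, (N b)ᵀ = N b := by
    intro b; rw [hN b, transpose_sub, transpose_one, hJstp4]
  have hJstNb : ∀ b, Jst b * N b = 0 := by
    intro b; rw [hN b, Matrix.mul_sub, Matrix.mul_one, ← Matrix.mul_assoc, hJstp1, sub_self]
  have hJN : ∀ (i : Fin k) (b : Fin (k + 1)), (i : ℕ) < (b : ℕ) → J i * N b = 0 := by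
    intro i b hib
    ext r c
    have h := congrFun (congrFun (hJstNb b) ⟨⟨i, r⟩, hib⟩) c
    rw [Matrix.mul_apply] at h
    simp only [hJst] at h
    simpa [Matrix.mul_apply] using h
  have hJstle : ∀ a b : Fin (k + 1), (a : ℕ) ≤ (b : ℕ) → Jst a * N b = 0 := by
    intro a b hab
    ext x c
    have h := congrFun (congrFun (hJN x.1.1 b (lt_of_lt_of_le x.2 hab)) x.1.2) c
    rw [Matrix.mul_apply] at h
    simpa [Matrix.mul_apply, hJst] using h
  have hNnest : ∀ a b : Fin (k + 1), (a : ℕ) ≤ (b : ℕ) → N a * N b = N b := by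
    intro a b hab
    rw [hN a, Matrix.sub_mul, Matrix.one_mul, Matrix.mul_assoc, hJstle a b hab, Matrix.mul_zero, sub_zero]
  have hMN : ∀ (i : Fin k) (b : Fin (k + 1)), (i : ℕ) < (b : ℕ) → M i * N b = 0 := by
    intro i b hib
    rw [hM i, Matrix.mul_assoc, hNnest i.castSucc b (by simpa using hib.le), hJN i b hib]
  have hPN : ∀ (i : Fin k) (b : Fin (k + 1)), (i : ℕ) < (b : ℕ) →
      P i.castSucc * N b = 0 := by
    intro i b hib
    rw [hP i, Matrix.mul_assoc, hMN i b hib, Matrix.mul_zero]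
  have hPsymm : ∀ i : Fin k, (P i.castSucc)ᵀ = P i.castSucc := by
    intro i; rw [hP i, hMp4]
  have hNP : ∀ (i : Fin k) (b : Fin (k + 1)), (i : ℕ) < (b : ℕ) →
      N b * P i.castSucc = 0 := by
    intro i b hib
    have h := congrArg Matrix.transpose (hPN i b hib)
    rwa [transpose_mul, hNsymm, hPsymm, transpose_zero] at h
  have hPPlt : ∀ i j : Fin k, (i : ℕ) < (j : ℕ) →
      P j.castSucc * P i.castSucc = 0 := by
    intro i j hij
    rw [hP j, hM j, Matrix.mul_assoc, Matrix.mul_assoc,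
      hNP i j.castSucc (by simpa using hij), Matrix.mul_zero, Matrix.mul_zero]
  have hPPne : ∀ i j : Fin k, i ≠ j → P i.castSucc * P j.castSucc = 0 := by
    intro i j hij
    rcases hij.lt_or_gt with h | h
    · have h2 := congrArg Matrix.transpose (hPPlt i j h)
      rwa [transpose_mul, hPsymm, hPsymm, transpose_zero] at h2
    · exact hPPlt j i h
  have hPidem : ∀ i : Fin k, P i.castSucc * P i.castSucc = P i.castSucc := by
    intro i; rw [hP i, ← Matrix.mul_assoc, hMp2]
  have hPsumR : ∀ i : Fin k,
      P i.castSucc * (∑ j : Fin k, P j.castSucc) = P i.castSucc := by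
    intro i
    rw [Finset.mul_sum, Finset.sum_eq_single i
      (fun j _ hji => hPPne i j (Ne.symm hji)) (by simp), hPidem]
  have hPsumL : ∀ i : Fin k,
      (∑ j : Fin k, P j.castSucc) * P i.castSucc = P i.castSucc := by
    intro i
    rw [Finset.sum_mul, Finset.sum_eq_single i
      (fun j _ hji => hPPne j i hji) (by simp), hPidem]
  intro i j hij
  rcases Fin.eq_castSucc_or_eq_last i with ⟨i', rfl⟩ | rfl
  · rcases Fin.eq_castSucc_or_eq_last j with ⟨j', rfl⟩ | rfl
    · exact hPPne i' j' (fun h => hij (by rw [h]))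
    · rw [hPlast, mul_sub, mul_one, hPsumR i', sub_self]
  · rcases Fin.eq_castSucc_or_eq_last j with ⟨j', rfl⟩ | rfl
    · rw [hPlast, sub_mul, one_mul, hPsumL j', sub_self]
    · exact absurd rfl hij
end

section
/- For every 1 ≤ i ≤ k, N_{1:i} = I_m − P_{1:i}, i.e., I_m − J_{1:i}⁺ J_{1:i} = I_m − (P_1 + ⋯ + P_i). -/
open Matrix

private lemma penrose_unique {n γ : Type*} [Fintype n] [DecidableEq n] [Fintype γ]
    (C : Matrix γ n ℝ) (Cp : Matrix n γ ℝ) (S : Matrix n n ℝ)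
    (hSsym : Sᵀ = S) (hC4 : (Cp * C)ᵀ = Cp * C)
    (hCS : C * S = C) (hSC : S * (Cp * C) = S) : S = Cp * C := by
  have h1 : Cp * C * S = Cp * C := by rw [Matrix.mul_assoc, hCS]
  have h2 := congrArg Matrix.transpose h1
  rw [Matrix.transpose_mul, hC4, hSsym] at h2
  rw [← hSC, h2]

private lemma key_AB {n α β : Type*} [Fintype n] [DecidableEq n]
    [Fintype α] [Fintype β]
    (A : Matrix α n ℝ) (Ap : Matrix n α ℝ)
    (hA1 : A * Ap * A = A) (hA2 : Ap * A * Ap = Ap) (hA4 : (Ap * A)ᵀ = Ap * A)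
    (B : Matrix β n ℝ) (M : Matrix β n ℝ) (Mp : Matrix n β ℝ)
    (hMdef : M = B * (1 - Ap * A))
    (hM1 : M * Mp * M = M) (hM4 : (Mp * M)ᵀ = Mp * M) :
    A * (Ap * A + Mp * M) = A ∧ B * (Ap * A + Mp * M) = B := by
  have hAQ : A * (Ap * A) = A := by rw [← Matrix.mul_assoc, hA1]
  have hAN : A * (1 - Ap * A) = 0 := by
    rw [Matrix.mul_sub, Matrix.mul_one, hAQ, sub_self]
  have hQ2 : Ap * A * (Ap * A) = Ap * A := by rw [← Matrix.mul_assoc, hA2]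
  have hMT : Mᵀ = (1 - Ap * A) * Bᵀ := by
    rw [hMdef, Matrix.transpose_mul, Matrix.transpose_sub, Matrix.transpose_one, hA4]
  have hAP : A * (Mp * M) = 0 := by
    rw [← hM4, Matrix.transpose_mul, hMT, ← Matrix.mul_assoc, ← Matrix.mul_assoc,
      hAN, Matrix.zero_mul, Matrix.zero_mul]
  have hMQ : M * (Ap * A) = 0 := by
    rw [hMdef, Matrix.mul_assoc, Matrix.sub_mul, Matrix.one_mul, hQ2, sub_self,
      Matrix.mul_zero]
  have hPQ : Mp * M * (Ap * A) = 0 := by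
    rw [Matrix.mul_assoc, hMQ, Matrix.mul_zero]
  have hQP : Ap * A * (Mp * M) = 0 := by
    have h := congrArg Matrix.transpose hPQ
    rw [Matrix.transpose_mul, hA4, hM4, Matrix.transpose_zero] at h
    exact h
  have hB : B = M + B * (Ap * A) := by
    rw [hMdef, Matrix.mul_sub, Matrix.mul_one]; abel
  constructor
  · rw [Matrix.mul_add, hAQ, hAP, add_zero]
  · have hMP : M * (Mp * M) = M := by rw [← Matrix.mul_assoc, hM1]
    have hBP : B * (Mp * M) = M := by
      conv_lhs => rw [hB]
      rw [Matrix.add_mul, hMP, Matrix.mul_assoc B, hQP, Matrix.mul_zero, add_zero]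
    rw [Matrix.mul_add, hBP]
    conv_rhs => rw [hB]
    abel

private lemma key_conclude {n α β γ : Type*} [Fintype n] [DecidableEq n]
    [Fintype α] [Fintype β] [Fintype γ]
    (A : Matrix α n ℝ) (Ap : Matrix n α ℝ)
    (hA4 : (Ap * A)ᵀ = Ap * A)
    (B : Matrix β n ℝ) (M : Matrix β n ℝ) (Mp : Matrix n β ℝ)
    (hMdef : M = B * (1 - Ap * A))
    (hM4 : (Mp * M)ᵀ = Mp * M)
    (C : Matrix γ n ℝ) (Cp : Matrix n γ ℝ)
    (hC4 : (Cp * C)ᵀ = Cp * C)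
    (hAC : A * (Cp * C) = A) (hBC : B * (Cp * C) = B)
    (hCS : C * (Ap * A + Mp * M) = C) :
    Ap * A + Mp * M = Cp * C := by
  have hSsym : (Ap * A + Mp * M)ᵀ = Ap * A + Mp * M := by
    rw [Matrix.transpose_add, hA4, hM4]
  have hQC : Ap * A * (Cp * C) = Ap * A := by rw [Matrix.mul_assoc, hAC]
  have hMC : M * (Cp * C) = M := by
    rw [hMdef, Matrix.mul_sub, Matrix.mul_one, Matrix.sub_mul, hBC, Matrix.mul_assoc B, hQC]
  have hPC : Mp * M * (Cp * C) = Mp * M := by rw [Matrix.mul_assoc, hMC]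
  have hSC : (Ap * A + Mp * M) * (Cp * C) = Ap * A + Mp * M := by
    rw [Matrix.add_mul, hQC, hPC]
  exact penrose_unique C Cp _ hSsym hC4 hCS hSC

theorem stmt1 (k m : ℕ) (hk : 1 ≤ k) (p : Fin k → ℕ)
    (J : (i : Fin k) → Matrix (Fin (p i)) (Fin m) ℝ)
    (Jst : (i : Fin (k + 1)) →
      Matrix {x : (j : Fin k) × Fin (p j) // (x.1 : ℕ) < (i : ℕ)} (Fin m) ℝ)
    (hJst : ∀ (i : Fin (k + 1)) (x) (c), Jst i x c = J x.1.1 x.1.2 c)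
    (Jstp : (i : Fin (k + 1)) →
      Matrix (Fin m) {x : (j : Fin k) × Fin (p j) // (x.1 : ℕ) < (i : ℕ)} ℝ)
    (hJstp1 : ∀ i, Jst i * Jstp i * Jst i = Jst i)
    (hJstp2 : ∀ i, Jstp i * Jst i * Jstp i = Jstp i)
    (hJstp3 : ∀ i, (Jst i * Jstp i)ᵀ = Jst i * Jstp i)
    (hJstp4 : ∀ i, (Jstp i * Jst i)ᵀ = Jstp i * Jst i)
    (N : Fin (k + 1) → Matrix (Fin m) (Fin m) ℝ)
    (hN0 : N 0 = 1)
    (hN : ∀ i : Fin (k + 1), N i = 1 - Jstp i * Jst i)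
    (M : (i : Fin k) → Matrix (Fin (p i)) (Fin m) ℝ)
    (hM : ∀ i, M i = J i * N i.castSucc)
    (Mp : (i : Fin k) → Matrix (Fin m) (Fin (p i)) ℝ)
    (hMp1 : ∀ i, M i * Mp i * M i = M i)
    (hMp2 : ∀ i, Mp i * M i * Mp i = Mp i)
    (hMp3 : ∀ i, (M i * Mp i)ᵀ = M i * Mp i)
    (hMp4 : ∀ i, (Mp i * M i)ᵀ = Mp i * M i)
    (P : Fin (k + 1) → Matrix (Fin m) (Fin m) ℝ)
    (hP : ∀ i : Fin k, P i.castSucc = Mp i * M i)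
    (hPlast : P (Fin.last k) = 1 - ∑ i : Fin k, P i.castSucc) :
    ∀ i : Fin k, N i.succ = 1 - ∑ j ∈ Finset.Iic i, P j.castSucc := by
  -- abbreviations
  have hMdef : ∀ i : Fin k, M i = J i * (1 - Jstp i.castSucc * Jst i.castSucc) := by
    intro i; rw [hM i, hN i.castSucc]
  -- the step identity
  have step : ∀ i : Fin k,
      Jstp i.castSucc * Jst i.castSucc + P i.castSucc = Jstp i.succ * Jst i.succ := by
    intro i
    obtain ⟨hAS, hBS⟩ := key_AB (Jst i.castSucc) (Jstp i.castSucc) (hJstp1 _) (hJstp2 _) (hJstp4 _)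
      (J i) (M i) (Mp i) (hMdef i) (hMp1 i) (hMp4 i)
    have hCC : (Jst i.succ) * ((Jstp i.succ) * (Jst i.succ)) = (Jst i.succ) := by rw [← Matrix.mul_assoc, hJstp1]
    -- rows of (Jst i.castSucc) are rows of (Jst i.succ)
    have hrowA : ∀ (x : {x : (j : Fin k) × Fin (p j) // (x.1 : ℕ) < ((i.castSucc : Fin (k+1)) : ℕ)})
        (hx' : (x.1.1 : ℕ) < ((i.succ : Fin (k+1)) : ℕ)) (c : Fin m),
        (Jst i.castSucc) x c = (Jst i.succ) ⟨x.1, hx'⟩ c := by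
      intro x hx' c; rw [hJst, hJst]
    have hltAC : ∀ (x : {x : (j : Fin k) × Fin (p j) // (x.1 : ℕ) < ((i.castSucc : Fin (k+1)) : ℕ)}),
        (x.1.1 : ℕ) < ((i.succ : Fin (k+1)) : ℕ) := by
      intro x
      have := x.2
      simp only [Fin.coe_castSucc] at this
      simp only [Fin.val_succ]
      omega
    have hAC : (Jst i.castSucc) * ((Jstp i.succ) * (Jst i.succ)) = (Jst i.castSucc) := by
      ext x c
      have h1 : ((Jst i.castSucc) * ((Jstp i.succ) * (Jst i.succ))) x c = ((Jst i.succ) * ((Jstp i.succ) * (Jst i.succ))) ⟨x.1, hltAC x⟩ c := by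
        simp only [Matrix.mul_apply]
        exact Finset.sum_congr rfl fun y _ => by rw [hrowA x (hltAC x) y]
      rw [h1, hCC, ← hrowA x (hltAC x) c]
    -- rows of B are rows of (Jst i.succ)
    have hltBC : ∀ (x : Fin (p i)),
        (((⟨i, x⟩ : (j : Fin k) × Fin (p j)).1 : ℕ)) < ((i.succ : Fin (k+1)) : ℕ) := by
      intro x; simp [Fin.val_succ]
    have hrowB : ∀ (x : Fin (p i)) (c : Fin m),
        J i x c = (Jst i.succ) ⟨⟨i, x⟩, hltBC x⟩ c := by
      intro x c; rw [hJst]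
    have hBC : J i * ((Jstp i.succ) * (Jst i.succ)) = J i := by
      ext x c
      have h1 : (J i * ((Jstp i.succ) * (Jst i.succ))) x c = ((Jst i.succ) * ((Jstp i.succ) * (Jst i.succ))) ⟨⟨i, x⟩, hltBC x⟩ c := by
        simp only [Matrix.mul_apply]
        exact Finset.sum_congr rfl fun y _ => by rw [hrowB x y]
      rw [h1, hCC, ← hrowB x c]
    -- (Jst i.succ) * S = (Jst i.succ), rowwise
    have hCS : (Jst i.succ) * ((Jstp i.castSucc) * (Jst i.castSucc) + Mp i * M i) = (Jst i.succ) := by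
      ext x c
      obtain ⟨⟨j, xj⟩, hx⟩ := x
      by_cases hji : j = i
      · subst hji
        have h1 : ((Jst j.succ) * ((Jstp j.castSucc) * (Jst j.castSucc) + Mp j * M j)) ⟨⟨j, xj⟩, hx⟩ c
            = (J j * ((Jstp j.castSucc) * (Jst j.castSucc) + Mp j * M j)) xj c := by
          simp only [Matrix.mul_apply]
          exact Finset.sum_congr rfl fun y _ => by rw [hJst]
        rw [h1, hBS, hJst]
      · have hj' : (j : ℕ) < ((i.castSucc : Fin (k+1)) : ℕ) := by
          have h2 : (j : ℕ) ≠ (i : ℕ) := fun h => hji (Fin.ext h)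
          simp only [Fin.val_succ] at hx
          simp only [Fin.coe_castSucc]
          omega
        have h1 : ((Jst i.succ) * ((Jstp i.castSucc) * (Jst i.castSucc) + Mp i * M i)) ⟨⟨j, xj⟩, hx⟩ c
            = ((Jst i.castSucc) * ((Jstp i.castSucc) * (Jst i.castSucc) + Mp i * M i)) ⟨⟨j, xj⟩, hj'⟩ c := by
          simp only [Matrix.mul_apply]
          refine Finset.sum_congr rfl fun y _ => ?_
          rw [hJst, hJst]
        rw [h1, hAS, hJst, hJst]
    have := key_conclude (Jst i.castSucc) (Jstp i.castSucc) (hJstp4 _) (J i) (M i) (Mp i) (hMdef i) (hMp4 i)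
      (Jst i.succ) (Jstp i.succ) (hJstp4 _) hAC hBC hCS
    rw [hP i, this]
  -- Q at 0 is 0
  have hQ0 : Jstp 0 * Jst 0 = (0 : Matrix (Fin m) (Fin m) ℝ) := by
    have h := (hN 0).symm.trans hN0
    exact sub_eq_self.mp h
  -- main claim by induction on the value
  have main : ∀ n (hn : n < k),
      Jstp (⟨n, hn⟩ : Fin k).succ * Jst (⟨n, hn⟩ : Fin k).succ
        = ∑ j ∈ Finset.Iic (⟨n, hn⟩ : Fin k), P j.castSucc := by
    intro n
    induction n with
    | zero =>
      intro hn
      have hc : ((⟨0, hn⟩ : Fin k).castSucc : Fin (k+1)) = 0 := by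
        ext; simp
      have hIic : Finset.Iic (⟨0, hn⟩ : Fin k) = {⟨0, hn⟩} := by
        ext x
        simp only [Finset.mem_Iic, Finset.mem_singleton, Fin.le_def, Fin.ext_iff]
        omega
      rw [← step ⟨0, hn⟩, hIic, Finset.sum_singleton, hc, hQ0, zero_add]
    | succ n ih =>
      intro hn
      have hn' : n < k := Nat.lt_of_succ_lt hn
      have hcs : ((⟨n+1, hn⟩ : Fin k).castSucc : Fin (k+1)) = (⟨n, hn'⟩ : Fin k).succ := by
        ext; simp
      have hIic : Finset.Iic (⟨n+1, hn⟩ : Fin k)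
          = insert (⟨n+1, hn⟩ : Fin k) (Finset.Iic (⟨n, hn'⟩ : Fin k)) := by
        ext x
        simp only [Finset.mem_Iic, Finset.mem_insert, Fin.le_def, Fin.ext_iff]
        omega
      have hnotmem : (⟨n+1, hn⟩ : Fin k) ∉ Finset.Iic (⟨n, hn'⟩ : Fin k) := by
        simp only [Finset.mem_Iic, Fin.le_def]
        omega
      rw [← step ⟨n+1, hn⟩, hcs, ih hn', hIic, Finset.sum_insert hnotmem]
      abel
  intro i
  rw [hN i.succ, show i = (⟨(i : ℕ), i.2⟩ : Fin k) from rfl, main (i : ℕ) i.2]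
end

section
/- For every 1 ≤ i ≤ k, J_i P_{1:i} = J_i and J_i P_i = J_i N_{1:i−1}. -/
open Matrix

theorem stmt2 (k m : ℕ) (hk : 1 ≤ k) (p : Fin k → ℕ)
    (J : (i : Fin k) → Matrix (Fin (p i)) (Fin m) ℝ)
    (Jst : (i : Fin (k + 1)) →
      Matrix {x : (j : Fin k) × Fin (p j) // (x.1 : ℕ) < (i : ℕ)} (Fin m) ℝ)
    (hJst : ∀ (i : Fin (k + 1)) (x) (c), Jst i x c = J x.1.1 x.1.2 c)
    (Jstp : (i : Fin (k + 1)) →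
      Matrix (Fin m) {x : (j : Fin k) × Fin (p j) // (x.1 : ℕ) < (i : ℕ)} ℝ)
    (hJstp1 : ∀ i, Jst i * Jstp i * Jst i = Jst i)
    (hJstp2 : ∀ i, Jstp i * Jst i * Jstp i = Jstp i)
    (hJstp3 : ∀ i, (Jst i * Jstp i)ᵀ = Jst i * Jstp i)
    (hJstp4 : ∀ i, (Jstp i * Jst i)ᵀ = Jstp i * Jst i)
    (N : Fin (k + 1) → Matrix (Fin m) (Fin m) ℝ)
    (hN0 : N 0 = 1)
    (hN : ∀ i : Fin (k + 1), N i = 1 - Jstp i * Jst i)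
    (M : (i : Fin k) → Matrix (Fin (p i)) (Fin m) ℝ)
    (hM : ∀ i, M i = J i * N i.castSucc)
    (Mp : (i : Fin k) → Matrix (Fin m) (Fin (p i)) ℝ)
    (hMp1 : ∀ i, M i * Mp i * M i = M i)
    (hMp2 : ∀ i, Mp i * M i * Mp i = Mp i)
    (hMp3 : ∀ i, (M i * Mp i)ᵀ = M i * Mp i)
    (hMp4 : ∀ i, (Mp i * M i)ᵀ = Mp i * M i)
    (P : Fin (k + 1) → Matrix (Fin m) (Fin m) ℝ)
    (hP : ∀ i : Fin k, P i.castSucc = Mp i * M i)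
    (hPlast : P (Fin.last k) = 1 - ∑ i : Fin k, P i.castSucc) :
    ∀ i : Fin k,
      J i * (∑ j ∈ Finset.Iic i, P j.castSucc) = J i ∧
      J i * P i.castSucc = J i * N i.castSucc := by

  -- Idempotency of Q := Jstp i * Jst i
  have hQ : ∀ i, (Jstp i * Jst i) * (Jstp i * Jst i) = Jstp i * Jst i := by
    intro i
    calc (Jstp i * Jst i) * (Jstp i * Jst i)
        = (Jstp i * Jst i * Jstp i) * Jst i := by rw [← Matrix.mul_assoc]
      _ = Jstp i * Jst i := by rw [hJstp2 i]
  have hNidem : ∀ i, N i * N i = N i := by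
    intro i
    rw [hN i, Matrix.sub_mul, Matrix.one_mul, Matrix.mul_sub, Matrix.mul_one, hQ i]
    abel
  have hJstN0 : ∀ i, Jst i * N i = 0 := by
    intro i
    rw [hN i, Matrix.mul_sub, Matrix.mul_one, ← Matrix.mul_assoc, hJstp1 i, sub_self]
  have hJN : ∀ (i : Fin (k+1)) (l : Fin k), (l : ℕ) < (i : ℕ) → J l * N i = 0 := by
    intro i l hl
    ext r c
    have h0 := congrFun (congrFun (hJstN0 i) ⟨⟨l, r⟩, hl⟩) c
    rw [Matrix.mul_apply] at h0
    simp only [hJst] at h0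
    rw [Matrix.mul_apply]
    simpa using h0
  have hNsymm : ∀ i, (N i)ᵀ = N i := by
    intro i
    rw [hN i, transpose_sub, transpose_one, hJstp4 i]
  have hPsymm : ∀ i : Fin k, (P i.castSucc)ᵀ = P i.castSucc := by
    intro i
    rw [hP i, hMp4 i]
  have hPN : ∀ i : Fin k, P i.castSucc * N i.castSucc = P i.castSucc := by
    intro i
    rw [hP i, Matrix.mul_assoc, hM i, Matrix.mul_assoc, hNidem _, ← hM i]
  have hNP : ∀ i : Fin k, N i.castSucc * P i.castSucc = P i.castSucc := by
    intro i
    calc N i.castSucc * P i.castSucc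
        = ((P i.castSucc)ᵀ * (N i.castSucc)ᵀ)ᵀ := by
          rw [← transpose_mul, transpose_transpose]
      _ = P i.castSucc := by rw [hPsymm i, hNsymm, hPN i, hPsymm i]
  have hJstP0 : ∀ i : Fin k, Jst i.castSucc * P i.castSucc = 0 := by
    intro i
    rw [← hNP i, ← Matrix.mul_assoc, hJstN0, Matrix.zero_mul]
  have hQN : ∀ i : Fin (k+1), Jstp i * Jst i = 1 - N i := by
    intro i
    rw [hN i, sub_sub_cancel]
  -- (B)
  have hJP : ∀ i : Fin k, J i * P i.castSucc = J i * N i.castSucc := by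
    intro i
    have h1 : (1 : Matrix (Fin m) (Fin m) ℝ)
        = N i.castSucc + Jstp i.castSucc * Jst i.castSucc := by
      rw [hQN i.castSucc]; abel
    calc J i * P i.castSucc
        = J i * ((N i.castSucc + Jstp i.castSucc * Jst i.castSucc) * P i.castSucc) := by
          rw [← h1, Matrix.one_mul]
      _ = J i * (N i.castSucc * P i.castSucc)
          + J i * (Jstp i.castSucc * (Jst i.castSucc * P i.castSucc)) := by
          rw [Matrix.add_mul, Matrix.mul_add, Matrix.mul_assoc]
      _ = J i * N i.castSucc * P i.castSucc := by
          rw [hJstP0 i, Matrix.mul_zero, Matrix.mul_zero, add_zero, Matrix.mul_assoc]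
      _ = M i * (Mp i * M i) := by rw [← hM i, hP i]
      _ = M i := by rw [← Matrix.mul_assoc, hMp1 i]
      _ = J i * N i.castSucc := hM i
  -- (A)
  have hJP0 : ∀ l i : Fin k, (l : ℕ) < (i : ℕ) → J l * P i.castSucc = 0 := by
    intro l i h
    rw [← hNP i, ← Matrix.mul_assoc, hJN i.castSucc l (by simpa using h), Matrix.zero_mul]
  have hJstN2 : ∀ (j i : Fin (k+1)), (j : ℕ) ≤ (i : ℕ) → Jst j * N i = 0 := by
    intro j i h
    ext x c
    have h0 := congrFun (congrFun (hJN i x.1.1 (lt_of_lt_of_le x.2 h)) x.1.2) c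
    rw [Matrix.mul_apply] at h0
    rw [Matrix.mul_apply]
    simp only [hJst]
    simpa using h0
  -- (C)
  have hNP0 : ∀ i j : Fin k, (j : ℕ) < (i : ℕ) → N i.castSucc * P j.castSucc = 0 := by
    intro i j h
    have hNN : N j.castSucc * N i.castSucc = N i.castSucc := by
      rw [hN j.castSucc, Matrix.sub_mul, Matrix.one_mul, Matrix.mul_assoc,
        hJstN2 j.castSucc i.castSucc (by simpa using le_of_lt h), Matrix.mul_zero, sub_zero]
    have hPN0 : P j.castSucc * N i.castSucc = 0 := by
      rw [hP j, Matrix.mul_assoc, hM j, Matrix.mul_assoc, hNN,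
        hJN i.castSucc j (by simpa using h), Matrix.mul_zero]
    calc N i.castSucc * P j.castSucc
        = ((P j.castSucc)ᵀ * (N i.castSucc)ᵀ)ᵀ := by
          rw [← transpose_mul, transpose_transpose]
      _ = 0 := by rw [hPsymm j, hNsymm, hPN0, transpose_zero]
  -- main claim by strong induction
  have main : ∀ n : ℕ, ∀ i : Fin k, (i : ℕ) < n →
      J i * (∑ j ∈ Finset.Iic i, P j.castSucc) = J i := by
    intro n
    induction n with
    | zero => exact fun i hi => absurd hi (Nat.not_lt_zero _)
    | succ n IHn =>
      intro i hi
      have hsplit : Finset.Iic i = insert i (Finset.Iio i) := (Finset.Iio_insert i).symm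
      rw [hsplit, Finset.sum_insert (by simp)]
      set T := ∑ j ∈ Finset.Iio i, P j.castSucc with hT
      have hJstT : Jst i.castSucc * T = Jst i.castSucc := by
        ext x c
        have hl : (x.1.1 : ℕ) < (i : ℕ) := by simpa using x.2
        have hlf : x.1.1 < i := hl
        have hJlT : J x.1.1 * T = J x.1.1 := by
          have hsub : Finset.Iic x.1.1 ⊆ Finset.Iio i := by
            intro j hj
            simp only [Finset.mem_Iic] at hj
            simp only [Finset.mem_Iio]
            exact lt_of_le_of_lt hj hlf
          rw [hT, ← Finset.sum_sdiff hsub, Matrix.mul_add]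
          have hz : J x.1.1 * ∑ j ∈ Finset.Iio i \ Finset.Iic x.1.1, P j.castSucc = 0 := by
            rw [Matrix.mul_sum]
            apply Finset.sum_eq_zero
            intro j hj
            rw [Finset.mem_sdiff, Finset.mem_Iic] at hj
            exact hJP0 x.1.1 j (Fin.lt_def.mp (lt_of_not_ge hj.2))
          rw [hz, zero_add,
            IHn x.1.1 (lt_of_lt_of_le hl (Nat.lt_succ_iff.mp hi))]
        calc (Jst i.castSucc * T) x c = (J x.1.1 * T) x.1.2 c := by
              rw [Matrix.mul_apply, Matrix.mul_apply]
              simp only [hJst]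
          _ = J x.1.1 x.1.2 c := by rw [hJlT]
          _ = Jst i.castSucc x c := (hJst _ _ _).symm
      have hNT : N i.castSucc * T = 0 := by
        rw [hT, Matrix.mul_sum]
        apply Finset.sum_eq_zero
        intro j hj
        exact hNP0 i j (Fin.lt_def.mp (Finset.mem_Iio.mp hj))
      have hJiT : J i * T = J i - J i * N i.castSucc := by
        have h1 : (1 : Matrix (Fin m) (Fin m) ℝ)
            = N i.castSucc + Jstp i.castSucc * Jst i.castSucc := by
          rw [hQN i.castSucc]; abel
        calc J i * T
            = J i * ((N i.castSucc + Jstp i.castSucc * Jst i.castSucc) * T) := by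
              rw [← h1, Matrix.one_mul]
          _ = J i * (N i.castSucc * T)
              + J i * (Jstp i.castSucc * (Jst i.castSucc * T)) := by
              rw [Matrix.add_mul, Matrix.mul_add, Matrix.mul_assoc]
          _ = J i * (Jstp i.castSucc * Jst i.castSucc) := by
              rw [hNT, Matrix.mul_zero, hJstT, zero_add]
          _ = J i - J i * N i.castSucc := by
              rw [hQN i.castSucc, Matrix.mul_sub, Matrix.mul_one]
      rw [Matrix.mul_add, hJP i, hJiT]
      abel
  exact fun i => ⟨main ((i : ℕ) + 1) i (Nat.lt_succ_self _), hJP i⟩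
end

section
/- For every 1 ≤ i ≤ k, rank(P_{1:i}) = rank(J_{1:i}) ≤ p_1 + ⋯ + p_i, and moreover rank(P_{1:i}) = rank(P_1) + ⋯ + rank(P_i). -/
open Matrix

lemma rank_add_of_ortho {n : Type*} [Fintype n] [DecidableEq n]
    (A B : Matrix n n ℝ) (hA : A * A = A) (hB : B * B = B)
    (hAB : A * B = 0) (hBA : B * A = 0) : (A + B).rank = A.rank + B.rank := by
  classical
  have key : ∀ (X Y : Matrix n n ℝ), X * X = X → Y * X = 0 →
      LinearMap.range X.mulVecLin ≤ LinearMap.range (X + Y).mulVecLin := by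
    intro X Y hX hYX
    rintro x ⟨v, rfl⟩
    refine ⟨X.mulVec v, ?_⟩
    simp only [mulVecLin_apply, mulVec_mulVec]
    rw [add_mul, hX, hYX, add_zero]
  have hr : LinearMap.range (A + B).mulVecLin
      = LinearMap.range A.mulVecLin ⊔ LinearMap.range B.mulVecLin := by
    refine le_antisymm ?_ (sup_le (key A B hA hBA) ?_)
    · rintro x ⟨v, rfl⟩
      rw [mulVecLin_apply, add_mulVec]
      exact Submodule.add_mem_sup ⟨v, rfl⟩ ⟨v, rfl⟩
    · rw [add_comm]; exact key B A hB hAB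
  have hdisj : LinearMap.range A.mulVecLin ⊓ LinearMap.range B.mulVecLin = ⊥ := by
    rw [Submodule.eq_bot_iff]
    rintro x ⟨⟨u, hu⟩, ⟨w, hw⟩⟩
    simp only [mulVecLin_apply] at hu hw
    have h1 : A.mulVec x = x := by rw [← hu, mulVec_mulVec, hA]
    have h2 : A.mulVec x = 0 := by rw [← hw, mulVec_mulVec, hAB, zero_mulVec]
    rw [← h1, h2]
  have := Submodule.finrank_sup_add_finrank_inf_eq
    (LinearMap.range A.mulVecLin) (LinearMap.range B.mulVecLin)
  rw [hdisj, finrank_bot, add_zero] at this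
  rw [Matrix.rank, Matrix.rank, Matrix.rank, hr, this]

theorem stmt4 (k m : ℕ) (hk : 1 ≤ k) (p : Fin k → ℕ)
    (J : (i : Fin k) → Matrix (Fin (p i)) (Fin m) ℝ)
    (Jst : (i : Fin (k + 1)) →
      Matrix {x : (j : Fin k) × Fin (p j) // (x.1 : ℕ) < (i : ℕ)} (Fin m) ℝ)
    (hJst : ∀ (i : Fin (k + 1)) (x) (c), Jst i x c = J x.1.1 x.1.2 c)
    (Jstp : (i : Fin (k + 1)) →
      Matrix (Fin m) {x : (j : Fin k) × Fin (p j) // (x.1 : ℕ) < (i : ℕ)} ℝ)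
    (hJstp1 : ∀ i, Jst i * Jstp i * Jst i = Jst i)
    (hJstp2 : ∀ i, Jstp i * Jst i * Jstp i = Jstp i)
    (hJstp3 : ∀ i, (Jst i * Jstp i)ᵀ = Jst i * Jstp i)
    (hJstp4 : ∀ i, (Jstp i * Jst i)ᵀ = Jstp i * Jst i)
    (N : Fin (k + 1) → Matrix (Fin m) (Fin m) ℝ)
    (hN0 : N 0 = 1)
    (hN : ∀ i : Fin (k + 1), N i = 1 - Jstp i * Jst i)
    (M : (i : Fin k) → Matrix (Fin (p i)) (Fin m) ℝ)
    (hM : ∀ i, M i = J i * N i.castSucc)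
    (Mp : (i : Fin k) → Matrix (Fin m) (Fin (p i)) ℝ)
    (hMp1 : ∀ i, M i * Mp i * M i = M i)
    (hMp2 : ∀ i, Mp i * M i * Mp i = Mp i)
    (hMp3 : ∀ i, (M i * Mp i)ᵀ = M i * Mp i)
    (hMp4 : ∀ i, (Mp i * M i)ᵀ = Mp i * M i)
    (P : Fin (k + 1) → Matrix (Fin m) (Fin m) ℝ)
    (hP : ∀ i : Fin k, P i.castSucc = Mp i * M i)
    (hPlast : P (Fin.last k) = 1 - ∑ i : Fin k, P i.castSucc) :
    ∀ i : Fin k,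
      (∑ j ∈ Finset.Iic i, P j.castSucc).rank = (Jst i.succ).rank ∧
      (Jst i.succ).rank ≤ ∑ j ∈ Finset.Iic i, p j ∧
      (∑ j ∈ Finset.Iic i, P j.castSucc).rank = ∑ j ∈ Finset.Iic i, (P j.castSucc).rank := by
  classical
  set Q : Fin (k + 1) → Matrix (Fin m) (Fin m) ℝ := fun j => Jstp j * Jst j with hQ
  have Qdef : ∀ j, Q j = Jstp j * Jst j := fun _ => rfl
  -- entrywise description of products with the stacked matrix
  have JstX : ∀ (a : Fin (k + 1)) (X : Matrix (Fin m) (Fin m) ℝ) (x) (c),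
      (Jst a * X) x c = (J x.1.1 * X) x.1.2 c := by
    intro a X x c
    simp [Matrix.mul_apply, hJst]
  have Qsym : ∀ j, (Q j)ᵀ = Q j := hJstp4
  have Qidem : ∀ j, Q j * Q j = Q j := by
    intro j
    show Jstp j * Jst j * (Jstp j * Jst j) = Jstp j * Jst j
    rw [← Matrix.mul_assoc, hJstp2 j]
  -- rows of J l are fixed by Q j whenever l < j
  have JQ : ∀ (l : Fin k) (j : Fin (k + 1)), (l : ℕ) < (j : ℕ) → J l * Q j = J l := by
    intro l j hlj
    have h1 : Jst j * Q j = Jst j := by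
      show Jst j * (Jstp j * Jst j) = Jst j
      rw [← Matrix.mul_assoc]
      exact hJstp1 j
    funext r c
    have h2 := congrFun (congrFun h1 ⟨⟨l, r⟩, hlj⟩) c
    rw [JstX, hJst] at h2
    exact h2
  have JstQ : ∀ (a b : Fin (k + 1)), (a : ℕ) ≤ (b : ℕ) → Jst a * Q b = Jst a := by
    intro a b hab
    funext x c
    rw [JstX, JQ x.1.1 b (lt_of_lt_of_le x.2 hab), hJst]
  have QQ : ∀ (a b : Fin (k + 1)), (a : ℕ) ≤ (b : ℕ) → Q b * Q a = Q a := by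
    intro a b hab
    have h1 : Q b * (Jst a)ᵀ = (Jst a)ᵀ := by
      rw [← Qsym b, ← Matrix.transpose_mul, JstQ a b hab]
    calc Q b * Q a = Q b * (Q a)ᵀ := by rw [Qsym]
      _ = Q b * ((Jst a)ᵀ * (Jstp a)ᵀ) := by rw [Qdef, Matrix.transpose_mul]
      _ = Q b * (Jst a)ᵀ * (Jstp a)ᵀ := (Matrix.mul_assoc _ _ _).symm
      _ = (Jst a)ᵀ * (Jstp a)ᵀ := by rw [h1]
      _ = (Q a)ᵀ := by rw [Qdef, Matrix.transpose_mul]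
      _ = Q a := Qsym a
  have QQ' : ∀ (a b : Fin (k + 1)), (a : ℕ) ≤ (b : ℕ) → Q a * Q b = Q a := by
    intro a b hab
    have := congrArg Matrix.transpose (QQ a b hab)
    rwa [Matrix.transpose_mul, Qsym, Qsym] at this
  have Nval : ∀ j, N j = 1 - Q j := hN
  have Nsym : ∀ j, (N j)ᵀ = N j := by
    intro j; rw [Nval, Matrix.transpose_sub, Matrix.transpose_one, Qsym]
  have Nidem : ∀ j, N j * N j = N j := by
    intro j
    rw [Nval]
    have h : (1 - Q j) * (1 - Q j) = 1 - Q j - Q j + Q j * Q j := by noncomm_ring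
    rw [h, Qidem]
    abel
  have Psym : ∀ i : Fin k, (P i.castSucc)ᵀ = P i.castSucc := by
    intro i; rw [hP]; exact hMp4 i
  have Pidem : ∀ i : Fin k, P i.castSucc * P i.castSucc = P i.castSucc := by
    intro i
    rw [hP, ← Matrix.mul_assoc, hMp2 i]
  have MN : ∀ i : Fin k, M i * N i.castSucc = M i := by
    intro i; rw [hM, Matrix.mul_assoc, Nidem]
  have PN : ∀ i : Fin k, P i.castSucc * N i.castSucc = P i.castSucc := by
    intro i; rw [hP, Matrix.mul_assoc, MN]
  have NP : ∀ i : Fin k, N i.castSucc * P i.castSucc = P i.castSucc := by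
    intro i
    have := congrArg Matrix.transpose (PN i)
    rwa [Matrix.transpose_mul, Nsym, Psym] at this
  have QP0 : ∀ i : Fin k, Q i.castSucc * P i.castSucc = 0 := by
    intro i
    have h := NP i
    rw [Nval, Matrix.sub_mul, Matrix.one_mul] at h
    exact sub_eq_self.mp h
  have PQ0 : ∀ i : Fin k, P i.castSucc * Q i.castSucc = 0 := by
    intro i
    have := congrArg Matrix.transpose (QP0 i)
    rwa [Matrix.transpose_mul, Qsym, Psym, Matrix.transpose_zero] at this
  -- M i is fixed by Q j for i < j
  have MQ : ∀ (i : Fin k) (j : Fin (k + 1)), (i : ℕ) < (j : ℕ) → M i * Q j = M i := by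
    intro i j hij
    have hc : ((i.castSucc : Fin (k + 1)) : ℕ) ≤ (j : ℕ) := by
      simpa using Nat.le_of_lt hij
    rw [hM, Nval, Matrix.mul_sub, Matrix.mul_one, Matrix.sub_mul, Matrix.mul_assoc,
      QQ' i.castSucc j hc, JQ i j hij]
  have QbP : ∀ (i : Fin k) (j : Fin (k + 1)), (i : ℕ) < (j : ℕ) →
      Q j * P i.castSucc = P i.castSucc := by
    intro i j hij
    have hM' : Q j * (M i)ᵀ = (M i)ᵀ := by
      rw [← Qsym j, ← Matrix.transpose_mul, MQ i j hij]
    calc Q j * P i.castSucc = Q j * (P i.castSucc)ᵀ := by rw [Psym]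
      _ = Q j * ((M i)ᵀ * (Mp i)ᵀ) := by rw [hP, Matrix.transpose_mul]
      _ = Q j * (M i)ᵀ * (Mp i)ᵀ := (Matrix.mul_assoc _ _ _).symm
      _ = (M i)ᵀ * (Mp i)ᵀ := by rw [hM']
      _ = (P i.castSucc)ᵀ := by rw [hP, Matrix.transpose_mul]
      _ = P i.castSucc := Psym i
  -- key step: Q (i+1) = Q i + P i
  have step : ∀ i : Fin k, Q i.succ = Q i.castSucc + P i.castSucc := by
    intro i
    have hJiP : J i * P i.castSucc = J i - J i * Q i.castSucc := by
      have hMP : M i * P i.castSucc = M i := by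
        rw [hP, ← Matrix.mul_assoc, hMp1 i]
      have hMi : M i = J i - J i * Q i.castSucc := by
        rw [hM, Nval, Matrix.mul_sub, Matrix.mul_one]
      have hQP : J i * Q i.castSucc * P i.castSucc = 0 := by
        rw [Matrix.mul_assoc, QP0, Matrix.mul_zero]
      rw [hMi, Matrix.sub_mul, hQP, sub_zero] at hMP
      rw [hMP]
    have hJS : Jst i.succ * (Q i.castSucc + P i.castSucc) = Jst i.succ := by
      funext x c
      obtain ⟨⟨l, r⟩, hy⟩ := x
      rw [JstX, hJst]
      have hx : (l : ℕ) < (i : ℕ) + 1 := by simpa using hy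
      have key : J l * (Q i.castSucc + P i.castSucc) = J l := by
        rcases Nat.lt_succ_iff_lt_or_eq.mp hx with hlt | heq
        · have h1 : J l * Q i.castSucc = J l := JQ l i.castSucc (by simpa using hlt)
          have hN2 : J l * N i.castSucc = 0 := by
            rw [Nval, Matrix.mul_sub, Matrix.mul_one, h1, sub_self]
          have h2 : J l * P i.castSucc = 0 := by
            rw [← NP i, ← Matrix.mul_assoc, hN2, Matrix.zero_mul]
          rw [Matrix.mul_add, h1, h2, add_zero]
        · have hli : l = i := Fin.ext heq
          subst hli
          rw [Matrix.mul_add, hJiP]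
          abel
      rw [key]
    have h1 : Q i.succ * (Q i.castSucc + P i.castSucc) = Q i.succ := by
      show Jstp i.succ * Jst i.succ * (Q i.castSucc + P i.castSucc) = _
      rw [Matrix.mul_assoc, hJS]
    have h2 : Q i.succ * (Q i.castSucc + P i.castSucc)
        = Q i.castSucc + P i.castSucc := by
      rw [Matrix.mul_add, QQ i.castSucc i.succ (by simp), QbP i i.succ (by simp)]
    exact h1.symm.trans h2
  -- Q at the bottom is zero
  have Q0 : ∀ z : Fin k, (z : ℕ) = 0 → Q z.castSucc = 0 := by
    intro z hz
    haveI : IsEmpty {x : (j : Fin k) × Fin (p j) //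
        (x.1 : ℕ) < ((z.castSucc : Fin (k + 1)) : ℕ)} :=
      ⟨fun x => by have := x.2; simp [hz] at this⟩
    funext a b
    show (Jstp z.castSucc * Jst z.castSucc) a b = (0 : Matrix (Fin m) (Fin m) ℝ) a b
    rw [Matrix.mul_apply, Finset.univ_eq_empty, Finset.sum_empty, Matrix.zero_apply]
  -- the sum of the P's equals Q
  have sumC : ∀ (n : ℕ) (hn : n < k),
      Q (⟨n, hn⟩ : Fin k).succ = ∑ j ∈ Finset.Iic (⟨n, hn⟩ : Fin k), P j.castSucc := by
    intro n
    induction n with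
    | zero =>
      intro hn
      have hIic : Finset.Iic (⟨0, hn⟩ : Fin k) = {⟨0, hn⟩} := by
        ext j; simp [Fin.le_def, Fin.ext_iff, Nat.le_zero]
      rw [step ⟨0, hn⟩, Q0 ⟨0, hn⟩ rfl, zero_add, hIic, Finset.sum_singleton]
    | succ n ih =>
      intro hn
      have hn' : n < k := Nat.lt_of_succ_lt hn
      have hcs : (⟨n + 1, hn⟩ : Fin k).castSucc = (⟨n, hn'⟩ : Fin k).succ := by
        apply Fin.ext; simp
      have hIic : Finset.Iic (⟨n + 1, hn⟩ : Fin k)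
          = insert (⟨n + 1, hn⟩ : Fin k) (Finset.Iic (⟨n, hn'⟩ : Fin k)) := by
        ext j; simp [Fin.le_def, Fin.ext_iff]; omega
      have hnot : (⟨n + 1, hn⟩ : Fin k) ∉ Finset.Iic (⟨n, hn'⟩ : Fin k) := by
        simp [Fin.le_def]
      rw [step ⟨n + 1, hn⟩, hcs, ih hn', hIic, Finset.sum_insert hnot, add_comm, hcs]
  -- rank additivity
  have sumR : ∀ (n : ℕ) (hn : n < k),
      (Q (⟨n, hn⟩ : Fin k).succ).rank
        = ∑ j ∈ Finset.Iic (⟨n, hn⟩ : Fin k), (P j.castSucc).rank := by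
    intro n
    induction n with
    | zero =>
      intro hn
      have hIic : Finset.Iic (⟨0, hn⟩ : Fin k) = {⟨0, hn⟩} := by
        ext j; simp [Fin.le_def, Fin.ext_iff, Nat.le_zero]
      rw [step ⟨0, hn⟩, Q0 ⟨0, hn⟩ rfl, zero_add, hIic, Finset.sum_singleton]
    | succ n ih =>
      intro hn
      have hn' : n < k := Nat.lt_of_succ_lt hn
      have hcs : (⟨n + 1, hn⟩ : Fin k).castSucc = (⟨n, hn'⟩ : Fin k).succ := by
        apply Fin.ext; simp
      have hIic : Finset.Iic (⟨n + 1, hn⟩ : Fin k)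
          = insert (⟨n + 1, hn⟩ : Fin k) (Finset.Iic (⟨n, hn'⟩ : Fin k)) := by
        ext j; simp [Fin.le_def, Fin.ext_iff]; omega
      have hnot : (⟨n + 1, hn⟩ : Fin k) ∉ Finset.Iic (⟨n, hn'⟩ : Fin k) := by
        simp [Fin.le_def]
      rw [step ⟨n + 1, hn⟩,
        rank_add_of_ortho _ _ (Qidem _) (Pidem _) (QP0 _) (PQ0 _),
        hcs, ih hn', hIic, Finset.sum_insert hnot, add_comm, hcs]
  -- final assembly
  intro i
  obtain ⟨n, hn⟩ := i
  have hC := sumC n hn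
  have hR := sumR n hn
  have hrankQJ : (Q (⟨n, hn⟩ : Fin k).succ).rank = (Jst (⟨n, hn⟩ : Fin k).succ).rank := by
    apply le_antisymm
    · exact Matrix.rank_mul_le_right _ _
    · have h := JstQ (⟨n, hn⟩ : Fin k).succ (⟨n, hn⟩ : Fin k).succ le_rfl
      calc (Jst (⟨n, hn⟩ : Fin k).succ).rank
          = (Jst (⟨n, hn⟩ : Fin k).succ * Q (⟨n, hn⟩ : Fin k).succ).rank := by rw [h]
        _ ≤ (Q (⟨n, hn⟩ : Fin k).succ).rank := Matrix.rank_mul_le_right _ _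
  refine ⟨?_, ?_, ?_⟩
  · rw [← hC]; exact hrankQJ
  · have hcard : Fintype.card {x : (j : Fin k) × Fin (p j) //
        (x.1 : ℕ) < (((⟨n, hn⟩ : Fin k).succ : Fin (k + 1)) : ℕ)}
        = ∑ j ∈ Finset.Iic (⟨n, hn⟩ : Fin k), p j := by
      rw [Fintype.card_subtype]
      have h1 : (Finset.univ.filter fun x : (j : Fin k) × Fin (p j) =>
          (x.1 : ℕ) < (((⟨n, hn⟩ : Fin k).succ : Fin (k + 1)) : ℕ)).card
          = ∑ j : Fin k, if (j : ℕ) < n + 1 then p j else 0 := by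
        rw [Finset.card_filter, ← Finset.univ_sigma_univ, Finset.sum_sigma]
        apply Finset.sum_congr rfl
        intro j _
        by_cases hj : (j : ℕ) < n + 1 <;> simp [hj, Fin.val_succ]
      rw [h1, ← Finset.sum_filter]
      congr 1
      ext j
      simp [Fin.le_def]
    exact le_trans (Matrix.rank_le_card_height _) (le_of_eq hcard)
  · rw [← hC, hR]
end

section
/- Set ρ_j = rank(P_j) for 1 ≤ j ≤ k+1. Then there exist matrices L_{ij} ∈ ℝ^{p_i×ρ_j} for 1 ≤ i ≤ k and 1 ≤ j ≤ k+1, and matrices Q_j ∈ ℝ^{ρ_j×m} for 1 ≤ j ≤ k+1, such that: (i) Q_j Q_jᵀ = I_{ρ_j} for each j and Q_j Q_lᵀ = 0 for j ≠ l; (ii) Σ_{j=1}^{k+1} Q_jᵀ Q_j = I_m (so in particular ρ_1 + ⋯ + ρ_{k+1} = m); (iii) P_j = Q_jᵀ Q_j for every 1 ≤ j ≤ k+1; (iv) J_i P_j = L_{ij} Q_j for all 1 ≤ i ≤ k and 1 ≤ j ≤ k+1; (v) L_{ij} = 0 whenever j > i (in particular L_{i,k+1} = 0), so that J_i = Σ_{j=1}^{i}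 L_{ij} Q_j; and (vi) rank(L_{ii}) = ρ_i for every 1 ≤ i ≤ k. -/
/-!
Let `R_a = J_{1:a}⁺ J_{1:a}`, the orthogonal projector onto the row space of `J_{1:a}`, so that
`N_{1:a} = 1 - R_a`. An orthogonal projector is determined by its kernel, and
`ker R_{a+1} = ker R_a ∩ ker J_{a+1} = ker R_a ∩ ker (J_{a+1} N_{1:a})`; hence
`R_{a+1} = R_a + P_{a+1}`. Setting `R_{k+1} = 1`, every `P_j = R_j - R_{j-1}` is a difference of
consecutive terms of the increasing chain `0 = R_0 ≤ ⋯ ≤ R_{k+1} = 1`, so the `P_j` are mutually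
orthogonal projectors summing to `1`, and `J_i P_j = 0` for `j > i` since `J_i R_a = J_i` for
`a ≥ i`. Factor `P_j = Q_jᵀ Q_j` with orthonormal rows (spectral theorem) and put
`L_{ij} = J_i Q_jᵀ`; finally `L_{ii} Q_i = J_i P_i = J_i N_{1:i-1}` has the rank of `P_i`.
-/

open Matrix

namespace IsStarProjection

variable {A : Type*} [Ring A] [StarRing A] {p q : A}

theorem mul_eq_self_of_mul_eq_zero_imp (hp : IsStarProjection p)
    (h : ∀ x, p * x = 0 → q * x = 0) : q * p = q := by
  have := h _ hp.mul_one_sub_self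
  rwa [mul_sub, mul_one, sub_eq_zero, eq_comm] at this

theorem eq_of_mul_eq_zero_iff (hp : IsStarProjection p) (hq : IsStarProjection q)
    (h : ∀ x, p * x = 0 ↔ q * x = 0) : p = q := by
  have hqp := hp.mul_eq_self_of_mul_eq_zero_imp fun x => (h x).1
  have hpq := hq.mul_eq_self_of_mul_eq_zero_imp fun x => (h x).2
  calc p = star (p * q) := by rw [hpq, hp.isSelfAdjoint.star_eq]
    _ = q := by rw [star_mul, hp.isSelfAdjoint.star_eq, hq.isSelfAdjoint.star_eq, hqp]

end IsStarProjection

section Chain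

variable {A : Type*} [Ring A] [StarRing A] {R : ℕ → A}

theorem isStarProjection_succ_sub (hR : ∀ a, IsStarProjection (R a))
    (hmono : ∀ a b, a ≤ b → R a * R b = R a) (a : ℕ) :
    IsStarProjection (R (a + 1) - R a) :=
  (hR a).sub_of_mul_eq_left (hR _) (hmono _ _ a.le_succ)

theorem succ_sub_mul_succ_sub_eq_zero (hR : ∀ a, IsStarProjection (R a))
    (hmono : ∀ a b, a ≤ b → R a * R b = R a) {a b : ℕ} (hab : a ≠ b) :
    (R (a + 1) - R a) * (R (b + 1) - R b) = 0 := by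
  have hmono' : ∀ a b, a ≤ b → R b * R a = R a := fun a b h => by
    simpa [star_mul, (hR a).isSelfAdjoint.star_eq, (hR b).isSelfAdjoint.star_eq]
      using congrArg star (hmono a b h)
  simp only [mul_sub, sub_mul]
  rcases hab.lt_or_gt with h | h
  · rw [hmono _ _ h, hmono _ _ h.le, hmono _ _ (by omega), hmono _ _ (by omega)]; abel
  · rw [hmono' _ _ h, hmono' _ _ h.le, hmono' _ _ (by omega), hmono' _ _ (by omega)]; abel

end Chain

namespace Matrix

theorem mul_eq_zero_iff_of_blocks {n o ι α : Type*} [Fintype n] [Semiring α] {r : ι → Type*}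
    {s : ι → Prop} {B : (i : ι) → Matrix (r i) n α} {S : Matrix {x : (i : ι) × r i // s x.1} n α}
    (hS : ∀ x c, S x c = B x.1.1 x.1.2 c) (X : Matrix n o α) :
    S * X = 0 ↔ ∀ i, s i → B i * X = 0 := by
  simp only [← ext_iff, mul_apply, hS, zero_apply]
  exact ⟨fun h i hi a c => h ⟨⟨i, a⟩, hi⟩ c, fun h x c => h _ x.2 _ c⟩

variable {n : Type*} [Fintype n]

section PseudoInverse

variable {q : Type*} [Fintype q] {A : Matrix q n ℝ} {A' : Matrix n q ℝ}

theorem isIdempotentElem_pinv_mul (h1 : A * A' * A = A) : IsIdempotentElem (A' * A) := by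
  rw [IsIdempotentElem, Matrix.mul_assoc, ← Matrix.mul_assoc A, h1]

theorem isStarProjection_pinv_mul [DecidableEq n] (h1 : A * A' * A = A)
    (h4 : (A' * A)ᵀ = A' * A) : IsStarProjection (A' * A) :=
  ⟨isIdempotentElem_pinv_mul h1, by
    rwa [isSelfAdjoint_iff, star_eq_conjTranspose, conjTranspose_eq_transpose_of_trivial]⟩

theorem pinv_mul_mul_eq_zero_iff {o : Type*} (h1 : A * A' * A = A) (X : Matrix n o ℝ) :
    A' * A * X = 0 ↔ A * X = 0 := by
  refine ⟨fun h => ?_, fun h => by rw [Matrix.mul_assoc, h, Matrix.mul_zero]⟩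
  rw [← h1, Matrix.mul_assoc, Matrix.mul_assoc, ← Matrix.mul_assoc A', h, Matrix.mul_zero]

theorem rank_pinv_mul (h1 : A * A' * A = A) : (A' * A).rank = A.rank :=
  le_antisymm (rank_mul_le_right _ _) <| by
    conv_lhs => rw [← h1, Matrix.mul_assoc]
    exact rank_mul_le_right _ _

end PseudoInverse

section Orthonormal

variable {r : Type*} [Fintype r] [DecidableEq r] {Q : Matrix r n ℝ}

theorem mul_transpose_mul_self (hQ : Q * Qᵀ = 1) : Q * (Qᵀ * Q) = Q := by
  rw [← Matrix.mul_assoc, hQ, Matrix.one_mul]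

theorem transpose_mul_self_mul_transpose (hQ : Q * Qᵀ = 1) : Qᵀ * Q * Qᵀ = Qᵀ := by
  rw [Matrix.mul_assoc, hQ, Matrix.mul_one]

theorem rank_mul_transpose_eq_rank_mul_transpose_mul {p : Type*} (hQ : Q * Qᵀ = 1)
    (B : Matrix p n ℝ) :
    (B * Qᵀ).rank = (B * (Qᵀ * Q)).rank := by
  refine le_antisymm ?_ ?_
  · conv_lhs => rw [← Matrix.mul_one (B * Qᵀ), ← hQ, ← Matrix.mul_assoc, Matrix.mul_assoc B]
    exact rank_mul_le_left _ _
  · rw [← Matrix.mul_assoc]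
    exact rank_mul_le_left _ _

end Orthonormal

variable [DecidableEq n]

theorem eq_add_of_mul_eq_zero_iff {q : Type*} {A : Matrix q n ℝ} {R R' E : Matrix n n ℝ}
    (hR : IsStarProjection R) (hR' : IsStarProjection R') (hE : IsStarProjection E)
    (hR'ker : ∀ X, R' * X = 0 ↔ R * X = 0 ∧ A * X = 0)
    (hEker : ∀ X, E * X = 0 ↔ A * (1 - R) * X = 0) : R' = R + E := by
  have hER : E * R = 0 :=
    (hEker R).2 <| by rw [Matrix.mul_assoc, hR.one_sub_mul_self, Matrix.mul_zero]
  have hRE : R * E = 0 := by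
    simpa [hR.isSelfAdjoint.star_eq, hE.isSelfAdjoint.star_eq] using congrArg star hER
  have hEker' : ∀ X, R * X = 0 → (E * X = 0 ↔ A * X = 0) := fun X hX => by
    rw [hEker, Matrix.mul_assoc, Matrix.sub_mul, Matrix.one_mul, hX, sub_zero]
  refine hR'.eq_of_mul_eq_zero_iff (hR.add hE hRE) fun X => ?_
  rw [hR'ker]
  constructor
  · rintro ⟨hX, hA⟩
    rw [add_mul, hX, zero_add, hEker' X hX]
    exact hA
  · intro h
    have hX : R * X = 0 := by
      simpa [← mul_assoc, mul_add, hR.isIdempotentElem.eq, hRE] using congrArg (R * ·) h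
    rw [add_mul, hX, zero_add, hEker' X hX] at h
    exact ⟨hX, h⟩

theorem exists_mul_transpose_eq_one_and_transpose_mul_eq {P : Matrix n n ℝ}
    (hP : IsStarProjection P) : ∃ Q : Matrix (Fin P.rank) n ℝ, Q * Qᵀ = 1 ∧ Qᵀ * Q = P := by
  have hH : P.IsHermitian := hP.isSelfAdjoint
  set ev := hH.eigenvalues
  have hev : ∀ i, ev i = 0 ∨ ev i = 1 := fun i =>
    hP.isIdempotentElem.spectrum_subset ℝ (hH.eigenvalues_mem_spectrum_real i)
  obtain ⟨U, hUU, hspec⟩ : ∃ U : Matrix n n ℝ, Uᵀ * U = 1 ∧ P = U * diagonal ev * Uᵀ := by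
    have hstar : star (hH.eigenvectorUnitary : Matrix n n ℝ) = (hH.eigenvectorUnitary)ᵀ :=
      conjTranspose_eq_transpose_of_trivial _
    refine ⟨hH.eigenvectorUnitary, ?_, ?_⟩
    · rw [← hstar, Unitary.coe_star_mul_self]
    · conv_lhs => rw [hH.spectral_theorem]
      simp [ev, hstar]
  -- `Q` consists of the eigenvectors for the eigenvalue `1`, as rows.
  let e : Fin P.rank ≃ {i // ev i ≠ 0} :=
    Fintype.equivOfCardEq (by rw [Fintype.card_fin, hH.rank_eq_card_non_zero_eigs])
  let f : Fin P.rank → n := fun r => e r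
  have hf : Function.Injective f := Subtype.val_injective.comp e.injective
  have hsum : ∀ g : n → ℝ, ∑ r, g (f r) = ∑ i, ev i * g i := fun g => by
    rw [Fintype.sum_equiv e _ (fun i => g i) fun _ => rfl,
      ← Finset.sum_subtype (Finset.univ.filter fun i => ev i ≠ 0) (by simp), Finset.sum_filter]
    refine Finset.sum_congr rfl fun i _ => ?_
    rcases hev i with h | h <;> simp [h]
  refine ⟨Uᵀ.submatrix f id, ?_, ?_⟩
  · rw [transpose_submatrix, transpose_transpose, ← submatrix_mul _ _ _ _ _ Function.bijective_id,
      hUU, submatrix_one _ hf]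
  · ext a b
    simp only [hspec, mul_apply, transpose_apply, submatrix_apply, id, diagonal_apply, mul_ite,
      mul_zero, Finset.sum_ite_eq', Finset.mem_univ, if_true, hsum fun i => U a i * U b i]
    exact Finset.sum_congr rfl fun i _ => by ring

theorem trace_eq_rank_of_isStarProjection {P : Matrix n n ℝ} (hP : IsStarProjection P) :
    P.trace = P.rank := by
  obtain ⟨Q, hQQ, hQP⟩ := exists_mul_transpose_eq_one_and_transpose_mul_eq hP
  conv_lhs => rw [← hQP]
  rw [trace_mul_comm, hQQ, trace_one, Fintype.card_fin]

theorem sum_rank_eq_card_of_sum_eq_one {ι : Type*} [Fintype ι] {P : ι → Matrix n n ℝ}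
    (hP : ∀ j, IsStarProjection (P j)) (hsum : ∑ j, P j = 1) :
    ∑ j, (P j).rank = Fintype.card n := by
  have htr := congrArg trace hsum
  rw [trace_sum, trace_one,
    Finset.sum_congr rfl fun j _ => trace_eq_rank_of_isStarProjection (hP j)] at htr
  exact_mod_cast htr

theorem exists_orthonormal_factorization {ι : Type*} {P : ι → Matrix n n ℝ}
    (hP : ∀ j, IsStarProjection (P j)) (horth : ∀ j l, j ≠ l → P j * P l = 0) :
    ∃ Q : (j : ι) → Matrix (Fin (P j).rank) n ℝ, (∀ j, Q j * (Q j)ᵀ = 1) ∧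
      (∀ j l, j ≠ l → Q j * (Q l)ᵀ = 0) ∧ ∀ j, (Q j)ᵀ * Q j = P j := by
  choose Q hQQ hQP using fun j => exists_mul_transpose_eq_one_and_transpose_mul_eq (hP j)
  refine ⟨Q, hQQ, fun j l hjl => ?_, hQP⟩
  calc Q j * (Q l)ᵀ = Q j * ((Q j)ᵀ * Q j) * ((Q l)ᵀ * Q l * (Q l)ᵀ) := by
        rw [mul_transpose_mul_self (hQQ j), transpose_mul_self_mul_transpose (hQQ l)]
    _ = Q j * ((Q j)ᵀ * Q j * ((Q l)ᵀ * Q l)) * (Q l)ᵀ := by simp only [Matrix.mul_assoc]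
    _ = 0 := by rw [hQP, hQP, horth j l hjl, Matrix.mul_zero, Matrix.zero_mul]

theorem exists_lowerTriangular_decomposition {k : ℕ} {p : Fin k → ℕ}
    (J : (i : Fin k) → Matrix (Fin (p i)) n ℝ) {P : Fin (k + 1) → Matrix n n ℝ}
    (hP : ∀ j, IsStarProjection (P j)) (horth : ∀ j l, j ≠ l → P j * P l = 0)
    (hsum : ∑ j, P j = 1) (hJP : ∀ (i : Fin k) (j : Fin (k + 1)), (i : ℕ) < j → J i * P j = 0) :
    ∃ Q : (j : Fin (k + 1)) → Matrix (Fin (P j).rank) n ℝ,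
      (∀ j, Q j * (Q j)ᵀ = 1) ∧ (∀ j l, j ≠ l → Q j * (Q l)ᵀ = 0) ∧ (∀ j, (Q j)ᵀ * Q j = P j) ∧
      (∀ (i : Fin k) (j : Fin (k + 1)), (i : ℕ) < j → J i * (Q j)ᵀ = 0) ∧
      ∀ i, J i = ∑ j ∈ Finset.Iic i.castSucc, J i * (Q j)ᵀ * Q j := by
  obtain ⟨Q, hQQ, hQorth, hQP⟩ := exists_orthonormal_factorization hP horth
  refine ⟨Q, hQQ, hQorth, hQP, fun i j hij => ?_, fun i => ?_⟩
  · rw [← transpose_mul_self_mul_transpose (hQQ j), hQP, ← Matrix.mul_assoc, hJP i j hij,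
      Matrix.zero_mul]
  · calc J i = ∑ j, J i * P j := by rw [← Matrix.mul_sum, hsum, Matrix.mul_one]
      _ = ∑ j ∈ Finset.Iic i.castSucc, J i * P j := (Finset.sum_subset (Finset.subset_univ _)
          fun j _ hj => hJP i j (by simpa [Fin.lt_def] using hj)).symm
      _ = _ := Finset.sum_congr rfl fun j _ => by rw [Matrix.mul_assoc, hQP]

end Matrix

section RowSpaceProj

variable {n : Type*} [DecidableEq n] {k : ℕ} {p : Fin k → ℕ}
  {J : (i : Fin k) → Matrix (Fin (p i)) n ℝ}
  {Jst : (i : Fin (k + 1)) → Matrix {x : (j : Fin k) × Fin (p j) // (x.1 : ℕ) < (i : ℕ)} n ℝ}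
  {Jstp : (i : Fin (k + 1)) → Matrix n {x : (j : Fin k) × Fin (p j) // (x.1 : ℕ) < (i : ℕ)} ℝ}

variable (Jst Jstp) in
/-- `R_a = J_{1:a}⁺ J_{1:a}`, continued by `1` past `a = k` so that `P_{k+1} = 1 - P_{1:k}` is a
difference of consecutive terms as well. -/
noncomputable def rowSpaceProj (a : ℕ) : Matrix n n ℝ :=
  if h : a < k + 1 then Jstp ⟨a, h⟩ * Jst ⟨a, h⟩ else 1

theorem rowSpaceProj_coe (i : Fin (k + 1)) : rowSpaceProj Jst Jstp i = Jstp i * Jst i :=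
  dif_pos i.isLt

theorem rowSpaceProj_of_lt {a : ℕ} (h : k < a) : rowSpaceProj Jst Jstp a = 1 :=
  dif_neg (by omega)

variable [Fintype n]

theorem isIdempotentElem_rowSpaceProj (hJstp1 : ∀ i, Jst i * Jstp i * Jst i = Jst i) (a : ℕ) :
    IsIdempotentElem (rowSpaceProj Jst Jstp a) := by
  rcases lt_or_ge a (k + 1) with h | h
  · rw [← Fin.val_mk h, rowSpaceProj_coe]
    exact isIdempotentElem_pinv_mul (hJstp1 _)
  · rw [rowSpaceProj_of_lt h]
    exact IsIdempotentElem.one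

theorem isStarProjection_rowSpaceProj (hJstp1 : ∀ i, Jst i * Jstp i * Jst i = Jst i)
    (hJstp4 : ∀ i, (Jstp i * Jst i)ᵀ = Jstp i * Jst i) (a : ℕ) :
    IsStarProjection (rowSpaceProj Jst Jstp a) := by
  rcases lt_or_ge a (k + 1) with h | h
  · rw [← Fin.val_mk h, rowSpaceProj_coe]
    exact isStarProjection_pinv_mul (hJstp1 _) (hJstp4 _)
  · rw [rowSpaceProj_of_lt h]
    exact IsStarProjection.one _

theorem rowSpaceProj_mul_eq_zero_iff
    (hJst : ∀ (i : Fin (k + 1)) (x) (c), Jst i x c = J x.1.1 x.1.2 c)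
    (hJstp1 : ∀ i, Jst i * Jstp i * Jst i = Jst i) {a : ℕ} (ha : a ≤ k) (X : Matrix n n ℝ) :
    rowSpaceProj Jst Jstp a * X = 0 ↔ ∀ i : Fin k, (i : ℕ) < a → J i * X = 0 := by
  obtain ⟨a, rfl⟩ : ∃ a' : Fin (k + 1), (a' : ℕ) = a := ⟨⟨a, by omega⟩, rfl⟩
  rw [rowSpaceProj_coe, pinv_mul_mul_eq_zero_iff (hJstp1 _)]
  exact mul_eq_zero_iff_of_blocks (s := fun j : Fin k => (j : ℕ) < a) (hJst a) X

theorem rowSpaceProj_zero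
    (hJst : ∀ (i : Fin (k + 1)) (x) (c), Jst i x c = J x.1.1 x.1.2 c)
    (hJstp1 : ∀ i, Jst i * Jstp i * Jst i = Jst i) :
    rowSpaceProj Jst Jstp 0 = 0 := by
  simpa using (rowSpaceProj_mul_eq_zero_iff hJst hJstp1 k.zero_le 1).2 fun i hi =>
    absurd hi i.val.not_lt_zero

theorem mul_one_sub_rowSpaceProj
    (hJst : ∀ (i : Fin (k + 1)) (x) (c), Jst i x c = J x.1.1 x.1.2 c)
    (hJstp1 : ∀ i, Jst i * Jstp i * Jst i = Jst i)
    {i : Fin k} {a : ℕ} (hia : (i : ℕ) < a) : J i * (1 - rowSpaceProj Jst Jstp a) = 0 := by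
  rcases le_or_gt a k with ha | ha
  · exact (rowSpaceProj_mul_eq_zero_iff hJst hJstp1 ha _).1
      (isIdempotentElem_rowSpaceProj hJstp1 a).mul_one_sub_self i hia
  · rw [rowSpaceProj_of_lt ha, sub_self, Matrix.mul_zero]

theorem mul_rowSpaceProj_succ_sub
    (hJst : ∀ (i : Fin (k + 1)) (x) (c), Jst i x c = J x.1.1 x.1.2 c)
    (hJstp1 : ∀ i, Jst i * Jstp i * Jst i = Jst i) {i : Fin k} {a : ℕ} (hia : (i : ℕ) ≤ a) :
    J i * (rowSpaceProj Jst Jstp (a + 1) - rowSpaceProj Jst Jstp a) =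
      J i * (1 - rowSpaceProj Jst Jstp a) := by
  rw [← sub_sub_sub_cancel_left _ _ 1, Matrix.mul_sub,
    mul_one_sub_rowSpaceProj hJst hJstp1 (Nat.lt_succ_of_le hia), sub_zero]

theorem rowSpaceProj_mul_of_le
    (hJst : ∀ (i : Fin (k + 1)) (x) (c), Jst i x c = J x.1.1 x.1.2 c)
    (hJstp1 : ∀ i, Jst i * Jstp i * Jst i = Jst i) {a b : ℕ} (hab : a ≤ b) :
    rowSpaceProj Jst Jstp a * rowSpaceProj Jst Jstp b = rowSpaceProj Jst Jstp a := by
  rcases le_or_gt b k with hb | hb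
  · have := (rowSpaceProj_mul_eq_zero_iff hJst hJstp1 (hab.trans hb) _).2 fun i hi =>
      mul_one_sub_rowSpaceProj hJst hJstp1 (hi.trans_le hab)
    rwa [mul_sub, mul_one, sub_eq_zero, eq_comm] at this
  · rw [rowSpaceProj_of_lt hb, mul_one]

theorem rowSpaceProj_succ_eq_add
    (hJst : ∀ (i : Fin (k + 1)) (x) (c), Jst i x c = J x.1.1 x.1.2 c)
    (hJstp1 : ∀ i, Jst i * Jstp i * Jst i = Jst i)
    (hJstp4 : ∀ i, (Jstp i * Jst i)ᵀ = Jstp i * Jst i) (i : Fin k) {M : Matrix (Fin (p i)) n ℝ}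
    {Mp : Matrix n (Fin (p i)) ℝ} (hM : M = J i * (1 - rowSpaceProj Jst Jstp i))
    (hMp1 : M * Mp * M = M) (hMp4 : (Mp * M)ᵀ = Mp * M) :
    rowSpaceProj Jst Jstp (i + 1) = rowSpaceProj Jst Jstp i + Mp * M := by
  refine eq_add_of_mul_eq_zero_iff (A := J i) (isStarProjection_rowSpaceProj hJstp1 hJstp4 _)
    (isStarProjection_rowSpaceProj hJstp1 hJstp4 _) (isStarProjection_pinv_mul hMp1 hMp4)
    (fun X => ?_) (fun X => by rw [pinv_mul_mul_eq_zero_iff hMp1, hM])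
  rw [rowSpaceProj_mul_eq_zero_iff hJst hJstp1 i.isLt,
    rowSpaceProj_mul_eq_zero_iff hJst hJstp1 i.isLt.le]
  refine ⟨fun h => ⟨fun l hl => h l (by omega), h i (by omega)⟩, fun ⟨h, hi⟩ l hl => ?_⟩
  rcases Nat.lt_succ_iff_lt_or_eq.1 hl with hl | hl
  · exact h l hl
  · rwa [Fin.ext hl]

end RowSpaceProj

theorem stmt5_general (k m : ℕ) (p : Fin k → ℕ)
    (J : (i : Fin k) → Matrix (Fin (p i)) (Fin m) ℝ)
    (Jst : (i : Fin (k + 1)) →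
      Matrix {x : (j : Fin k) × Fin (p j) // (x.1 : ℕ) < (i : ℕ)} (Fin m) ℝ)
    (hJst : ∀ (i : Fin (k + 1)) (x) (c), Jst i x c = J x.1.1 x.1.2 c)
    (Jstp : (i : Fin (k + 1)) →
      Matrix (Fin m) {x : (j : Fin k) × Fin (p j) // (x.1 : ℕ) < (i : ℕ)} ℝ)
    (hJstp1 : ∀ i, Jst i * Jstp i * Jst i = Jst i)
    (hJstp4 : ∀ i, (Jstp i * Jst i)ᵀ = Jstp i * Jst i)
    (N : Fin (k + 1) → Matrix (Fin m) (Fin m) ℝ)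
    (hN : ∀ i : Fin (k + 1), N i = 1 - Jstp i * Jst i)
    (M : (i : Fin k) → Matrix (Fin (p i)) (Fin m) ℝ)
    (hM : ∀ i, M i = J i * N i.castSucc)
    (Mp : (i : Fin k) → Matrix (Fin m) (Fin (p i)) ℝ)
    (hMp1 : ∀ i, M i * Mp i * M i = M i)
    (hMp4 : ∀ i, (Mp i * M i)ᵀ = Mp i * M i)
    (P : Fin (k + 1) → Matrix (Fin m) (Fin m) ℝ)
    (hP : ∀ i : Fin k, P i.castSucc = Mp i * M i)
    (hPlast : P (Fin.last k) = 1 - ∑ i : Fin k, P i.castSucc) :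
    ∃ (L : (i : Fin k) → (j : Fin (k + 1)) → Matrix (Fin (p i)) (Fin ((P j).rank)) ℝ)
      (Q : (j : Fin (k + 1)) → Matrix (Fin ((P j).rank)) (Fin m) ℝ),
      (∀ j, Q j * (Q j)ᵀ = 1) ∧
      (∀ j l, j ≠ l → Q j * (Q l)ᵀ = 0) ∧
      (∑ j : Fin (k + 1), (Q j)ᵀ * Q j = 1) ∧
      (∑ j : Fin (k + 1), (P j).rank = m) ∧
      (∀ j, P j = (Q j)ᵀ * Q j) ∧
      (∀ (i : Fin k) (j : Fin (k + 1)), J i * P j = L i j * Q j) ∧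
      (∀ (i : Fin k) (j : Fin (k + 1)), (i : ℕ) < (j : ℕ) → L i j = 0) ∧
      (∀ i : Fin k, J i = ∑ j ∈ Finset.Iic (i.castSucc : Fin (k + 1)), L i j * Q j) ∧
      (∀ i : Fin k, (L i i.castSucc).rank = (P i.castSucc).rank) := by
  set R := rowSpaceProj Jst Jstp
  have hM' : ∀ i : Fin k, M i = J i * (1 - R i) := fun i => by
    rw [hM, hN, ← rowSpaceProj_coe]; rfl
  have hPi : ∀ i : Fin k, P i.castSucc = R (i + 1) - R i := fun i => by
    have : R (i + 1) = R i + Mp i * M i :=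
      rowSpaceProj_succ_eq_add hJst hJstp1 hJstp4 i (hM' i) (hMp1 i) (hMp4 i)
    rw [hP, this, add_sub_cancel_left]
  have hR0 : R 0 = 0 := rowSpaceProj_zero hJst hJstp1
  have hRlast : R (k + 1) = 1 := rowSpaceProj_of_lt k.lt_succ_self
  have hPR : ∀ j : Fin (k + 1), P j = R (j + 1) - R j := by
    refine Fin.lastCases ?_ hPi
    rw [hPlast, Finset.sum_congr rfl fun i _ => hPi i,
      Fin.sum_univ_eq_sum_range (fun a => R (a + 1) - R a), Finset.sum_range_sub, hR0,
      Fin.val_last, hRlast, sub_zero]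
  have hRproj := isStarProjection_rowSpaceProj hJstp1 hJstp4
  have hRmono : ∀ a b, a ≤ b → R a * R b = R a := fun _ _ => rowSpaceProj_mul_of_le hJst hJstp1
  have hsum : ∑ j, P j = 1 := by rw [Fin.sum_univ_castSucc, hPlast, add_sub_cancel]
  have hJP : ∀ (i : Fin k) (j : Fin (k + 1)), (i : ℕ) ≤ j → J i * P j = J i * (1 - R j) :=
    fun i j hij => by rw [hPR, mul_rowSpaceProj_succ_sub hJst hJstp1 hij]
  have hproj : ∀ j, IsStarProjection (P j) := fun j =>
    hPR j ▸ isStarProjection_succ_sub hRproj hRmono j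
  obtain ⟨Q, hQQ, hQorth, hQP, hL0, hJL⟩ := exists_lowerTriangular_decomposition J hproj
    (fun j l hjl => by
      rw [hPR, hPR]; exact succ_sub_mul_succ_sub_eq_zero hRproj hRmono (Fin.val_injective.ne hjl))
    hsum (fun i j hij => by rw [hJP i j hij.le, mul_one_sub_rowSpaceProj hJst hJstp1 hij])
  refine ⟨fun i j => J i * (Q j)ᵀ, Q, hQQ, hQorth, by simp only [hQP, hsum],
    by simpa using sum_rank_eq_card_of_sum_eq_one hproj hsum, fun j => (hQP j).symm,
    fun i j => by rw [Matrix.mul_assoc, hQP], hL0, hJL, fun i => ?_⟩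
  rw [rank_mul_transpose_eq_rank_mul_transpose_mul (hQQ _), hQP, hJP i _ le_rfl, hP,
    rank_pinv_mul (hMp1 i), hM']
  rfl

theorem stmt5 (k m : ℕ) (hk : 1 ≤ k) (p : Fin k → ℕ)
    (J : (i : Fin k) → Matrix (Fin (p i)) (Fin m) ℝ)
    (Jst : (i : Fin (k + 1)) →
      Matrix {x : (j : Fin k) × Fin (p j) // (x.1 : ℕ) < (i : ℕ)} (Fin m) ℝ)
    (hJst : ∀ (i : Fin (k + 1)) (x) (c), Jst i x c = J x.1.1 x.1.2 c)
    (Jstp : (i : Fin (k + 1)) →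
      Matrix (Fin m) {x : (j : Fin k) × Fin (p j) // (x.1 : ℕ) < (i : ℕ)} ℝ)
    (hJstp1 : ∀ i, Jst i * Jstp i * Jst i = Jst i)
    (hJstp2 : ∀ i, Jstp i * Jst i * Jstp i = Jstp i)
    (hJstp3 : ∀ i, (Jst i * Jstp i)ᵀ = Jst i * Jstp i)
    (hJstp4 : ∀ i, (Jstp i * Jst i)ᵀ = Jstp i * Jst i)
    (N : Fin (k + 1) → Matrix (Fin m) (Fin m) ℝ)
    (hN0 : N 0 = 1)
    (hN : ∀ i : Fin (k + 1), N i = 1 - Jstp i * Jst i)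
    (M : (i : Fin k) → Matrix (Fin (p i)) (Fin m) ℝ)
    (hM : ∀ i, M i = J i * N i.castSucc)
    (Mp : (i : Fin k) → Matrix (Fin m) (Fin (p i)) ℝ)
    (hMp1 : ∀ i, M i * Mp i * M i = M i)
    (hMp2 : ∀ i, Mp i * M i * Mp i = Mp i)
    (hMp3 : ∀ i, (M i * Mp i)ᵀ = M i * Mp i)
    (hMp4 : ∀ i, (Mp i * M i)ᵀ = Mp i * M i)
    (P : Fin (k + 1) → Matrix (Fin m) (Fin m) ℝ)
    (hP : ∀ i : Fin k, P i.castSucc = Mp i * M i)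
    (hPlast : P (Fin.last k) = 1 - ∑ i : Fin k, P i.castSucc) :
    ∃ (L : (i : Fin k) → (j : Fin (k + 1)) → Matrix (Fin (p i)) (Fin ((P j).rank)) ℝ)
      (Q : (j : Fin (k + 1)) → Matrix (Fin ((P j).rank)) (Fin m) ℝ),
      (∀ j, Q j * (Q j)ᵀ = 1) ∧
      (∀ j l, j ≠ l → Q j * (Q l)ᵀ = 0) ∧
      (∑ j : Fin (k + 1), (Q j)ᵀ * Q j = 1) ∧
      (∑ j : Fin (k + 1), (P j).rank = m) ∧
      (∀ j, P j = (Q j)ᵀ * Q j) ∧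
      (∀ (i : Fin k) (j : Fin (k + 1)), J i * P j = L i j * Q j) ∧
      (∀ (i : Fin k) (j : Fin (k + 1)), (i : ℕ) < (j : ℕ) → L i j = 0) ∧
      (∀ i : Fin k, J i = ∑ j ∈ Finset.Iic (i.castSucc : Fin (k + 1)), L i j * Q j) ∧
      (∀ i : Fin k, (L i i.castSucc).rank = (P i.castSucc).rank) :=
  stmt5_general k m p J Jst hJst Jstp hJstp1 hJstp4 N hN M hM Mp hMp1 hMp4 P hP hPlast
end

section
/- For every 1 ≤ i ≤ k, the column space of P_{1:i} equals the column space of J_{1:i}ᵀ. Consequently, range(J_{1:i}ᵀ) = range(J_{1:i−1}ᵀ) + range(P_i), and range(J_{1:i−1}ᵀ) is orthogonal to range(P_i), i.e., xᵀy = 0 for every x ∈ range(J_{1:i−1}ᵀ) and y ∈ range(P_i). -/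
open Matrix

/-!
`Q_i := J_{1:i}⁺ J_{1:i}` and `P_i` are symmetric idempotents with ranges `range (J_{1:i}ᵀ)` and
`range ((J_i N_{1:i-1})ᵀ) = N_{1:i-1} range (J_iᵀ)`. As `N_{1:i-1} = 1 - Q_{i-1}`, the latter is
orthogonal to `range Q_{i-1}`, and together with it spans
`range Q_{i-1} + range (J_iᵀ) = range (J_{1:i}ᵀ)`. A symmetric idempotent is determined by its
range, so `Q_i = Q_{i-1} + P_i`, and `P_{1:i}` telescopes to `Q_i`.
-/

namespace Matrix

variable {R l n : Type*} [CommRing R] [Fintype l] [Fintype n]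

lemma isIdempotentElem_mul_of_mul_mul_self {A : Matrix l n R} {Ap : Matrix n l R}
    (h : A * Ap * A = A) : IsIdempotentElem (Ap * A) := by
  rw [IsIdempotentElem, Matrix.mul_assoc, ← Matrix.mul_assoc A, h]

lemma range_mulVecLin_mul_eq_range_transpose {A : Matrix l n R} {Ap : Matrix n l R}
    (h1 : A * Ap * A = A) (h4 : (Ap * A)ᵀ = Ap * A) :
    LinearMap.range (Ap * A).mulVecLin = LinearMap.range Aᵀ.mulVecLin := by
  apply le_antisymm
  · rintro _ ⟨x, rfl⟩
    refine ⟨Apᵀ *ᵥ x, ?_⟩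
    rw [mulVecLin_apply, mulVecLin_apply, mulVec_mulVec, ← transpose_mul, h4]
  · rintro _ ⟨x, rfl⟩
    refine ⟨Aᵀ *ᵥ x, ?_⟩
    have hA : Ap * A * Aᵀ = Aᵀ := by
      rw [← h4, ← transpose_mul, ← Matrix.mul_assoc, h1]
    rw [mulVecLin_apply, mulVecLin_apply, mulVec_mulVec, hA]

lemma mul_eq_right_of_range_le {Q : Matrix n n R} {B : Matrix n l R} (hQ : IsIdempotentElem Q)
    (h : LinearMap.range B.mulVecLin ≤ LinearMap.range Q.mulVecLin) : Q * B = B := by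
  refine ext_iff_mulVec.mpr fun x => ?_
  obtain ⟨y, hy⟩ := h ⟨x, rfl⟩
  simp only [mulVecLin_apply] at hy
  rw [← mulVec_mulVec, ← hy, mulVec_mulVec, hQ.eq]

lemma eq_of_range_mulVecLin_eq {P Q : Matrix n n R} (hP : IsIdempotentElem P)
    (hQ : IsIdempotentElem Q) (hPs : Pᵀ = P) (hQs : Qᵀ = Q)
    (h : LinearMap.range P.mulVecLin = LinearMap.range Q.mulVecLin) : P = Q :=
  calc P = (Q * P)ᵀ := by rw [mul_eq_right_of_range_le hQ h.le, hPs]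
    _ = P * Q := by rw [transpose_mul, hPs, hQs]
    _ = Q := mul_eq_right_of_range_le hP h.ge

lemma range_mulVecLin_add {P Q : Matrix n n R} (hP : IsIdempotentElem P)
    (hQ : IsIdempotentElem Q) (hPQ : P * Q = 0) (hQP : Q * P = 0) :
    LinearMap.range (P + Q).mulVecLin =
      LinearMap.range P.mulVecLin ⊔ LinearMap.range Q.mulVecLin := by
  apply le_antisymm
  · rintro _ ⟨x, rfl⟩
    rw [mulVecLin_apply, add_mulVec]
    exact Submodule.add_mem_sup ⟨x, rfl⟩ ⟨x, rfl⟩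
  · refine sup_le ?_ ?_ <;> rintro _ ⟨x, rfl⟩
    · exact ⟨P *ᵥ x, by
        simp only [mulVecLin_apply, mulVec_mulVec, add_mul, hP.eq, hQP, add_zero]⟩
    · exact ⟨Q *ᵥ x, by
        simp only [mulVecLin_apply, mulVec_mulVec, add_mul, hQ.eq, hPQ, zero_add]⟩

lemma range_mulVecLin_sup_one_sub_mul [DecidableEq n] (Q : Matrix n n R) (B : Matrix n l R) :
    LinearMap.range Q.mulVecLin ⊔ LinearMap.range ((1 - Q) * B).mulVecLin =
      LinearMap.range Q.mulVecLin ⊔ LinearMap.range B.mulVecLin := by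
  have hsplit (x : l → R) : B *ᵥ x = Q *ᵥ (B *ᵥ x) + ((1 - Q) * B) *ᵥ x := by
    rw [Matrix.sub_mul, Matrix.one_mul, sub_mulVec, mulVec_mulVec, add_sub_cancel]
  apply le_antisymm <;> refine sup_le le_sup_left ?_ <;> rintro _ ⟨x, rfl⟩
  · rw [mulVecLin_apply, eq_sub_of_add_eq' (hsplit x).symm]
    exact Submodule.sub_mem _ (Submodule.mem_sup_right ⟨x, rfl⟩)
      (Submodule.mem_sup_left ⟨B *ᵥ x, rfl⟩)
  · rw [mulVecLin_apply, hsplit x]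
    exact Submodule.add_mem _ (Submodule.mem_sup_left ⟨B *ᵥ x, rfl⟩)
      (Submodule.mem_sup_right ⟨x, rfl⟩)

lemma dotProduct_eq_zero_of_mem_range {P Q : Matrix n n R} (hPs : Pᵀ = P) (hPQ : P * Q = 0)
    {x y : n → R} (hx : x ∈ LinearMap.range P.mulVecLin)
    (hy : y ∈ LinearMap.range Q.mulVecLin) :
    x ⬝ᵥ y = 0 := by
  obtain ⟨x, rfl⟩ := hx
  obtain ⟨y, rfl⟩ := hy
  rw [mulVecLin_apply, mulVecLin_apply, ← hPs, mulVec_transpose, ← dotProduct_mulVec,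
    mulVec_mulVec, hPQ, zero_mulVec, dotProduct_zero]

section Update

variable [DecidableEq n] {l' l'' : Type*} [Fintype l'] [Fintype l'']
  {A : Matrix l n R} {Ap : Matrix n l R} (hA1 : A * Ap * A = A) (hA4 : (Ap * A)ᵀ = Ap * A)
  {B : Matrix l' n R} {M : Matrix l' n R} {Mp : Matrix n l' R} (hM : M = B * (1 - Ap * A))
include hA1 hM

lemma pinv_mul_mul_pinv_mul_eq_zero : Mp * M * (Ap * A) = 0 := by
  rw [hM, Matrix.mul_assoc, Matrix.mul_assoc, Matrix.sub_mul, Matrix.one_mul,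
    (isIdempotentElem_mul_of_mul_mul_self hA1).eq, sub_self, Matrix.mul_zero, Matrix.mul_zero]

include hA4

lemma pinv_mul_mul_pinv_mul_eq_zero_of_transpose_eq (hM4 : (Mp * M)ᵀ = Mp * M) :
    Ap * A * (Mp * M) = 0 := by
  rw [← hA4, ← hM4, ← transpose_mul, pinv_mul_mul_pinv_mul_eq_zero hA1 hM, transpose_zero]

lemma range_transpose_sup_eq_sup_range_pinv_mul (hM1 : M * Mp * M = M)
    (hM4 : (Mp * M)ᵀ = Mp * M) :
    LinearMap.range Aᵀ.mulVecLin ⊔ LinearMap.range Bᵀ.mulVecLin =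
      LinearMap.range Aᵀ.mulVecLin ⊔ LinearMap.range (Mp * M).mulVecLin := by
  have hMt : Mᵀ = (1 - Ap * A) * Bᵀ := by
    rw [hM, transpose_mul, transpose_sub, transpose_one, hA4]
  rw [range_mulVecLin_mul_eq_range_transpose hM1 hM4, hMt,
    ← range_mulVecLin_mul_eq_range_transpose hA1 hA4, range_mulVecLin_sup_one_sub_mul]

lemma pinv_mul_eq_add_of_range_transpose_eq_sup (hM1 : M * Mp * M = M)
    (hM4 : (Mp * M)ᵀ = Mp * M) {C : Matrix l'' n R} {Cp : Matrix n l'' R}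
    (hC1 : C * Cp * C = C) (hC4 : (Cp * C)ᵀ = Cp * C)
    (hC : LinearMap.range Cᵀ.mulVecLin =
      LinearMap.range Aᵀ.mulVecLin ⊔ LinearMap.range Bᵀ.mulVecLin) :
    Cp * C = Ap * A + Mp * M := by
  have hQ := isIdempotentElem_mul_of_mul_mul_self hA1
  have hP := isIdempotentElem_mul_of_mul_mul_self hM1
  have hQP := pinv_mul_mul_pinv_mul_eq_zero_of_transpose_eq hA1 hA4 hM hM4
  have hPQ := pinv_mul_mul_pinv_mul_eq_zero (Mp := Mp) hA1 hM
  refine eq_of_range_mulVecLin_eq (isIdempotentElem_mul_of_mul_mul_self hC1)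
    (hQ.add hP (by rw [hQP, hPQ, add_zero])) hC4 (by rw [transpose_add, hA4, hM4]) ?_
  rw [range_mulVecLin_add hQ hP hQP hPQ, range_mulVecLin_mul_eq_range_transpose hC1 hC4, hC,
    range_transpose_sup_eq_sup_range_pinv_mul hA1 hA4 hM hM1 hM4,
    range_mulVecLin_mul_eq_range_transpose hA1 hA4]

end Update

end Matrix

section Stack

variable {k m : ℕ} {p : Fin k → ℕ} {J : (i : Fin k) → Matrix (Fin (p i)) (Fin m) ℝ}
  {Jst : (i : Fin (k + 1)) →
    Matrix {x : (j : Fin k) × Fin (p j) // (x.1 : ℕ) < (i : ℕ)} (Fin m) ℝ}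
  (hJst : ∀ (i : Fin (k + 1)) (x) (c), Jst i x c = J x.1.1 x.1.2 c)
include hJst

lemma range_row_stack_succ (i : Fin k) :
    Set.range (Jst i.succ).row = Set.range (Jst i.castSucc).row ∪ Set.range (J i).row := by
  ext v
  constructor
  · rintro ⟨⟨⟨a, b⟩, hab⟩, rfl⟩
    rcases (Nat.lt_succ_iff.mp (by simpa only [Fin.val_succ] using hab)).lt_or_eq with h | h
    · exact Or.inl ⟨⟨⟨a, b⟩, by simpa using h⟩, funext fun c => by
        simp only [row, hJst]⟩
    · obtain rfl : a = i := Fin.ext h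
      exact Or.inr ⟨b, funext fun c => by simp only [row, hJst]⟩
  · rintro (⟨⟨⟨a, b⟩, hab⟩, rfl⟩ | ⟨b, rfl⟩)
    · exact ⟨⟨⟨a, b⟩, by simp at hab ⊢; omega⟩, funext fun c => by
        simp only [row, hJst]⟩
    · exact ⟨⟨⟨i, b⟩, by simp⟩, funext fun c => by simp only [row, hJst]⟩

lemma range_transpose_stack_succ (i : Fin k) :
    LinearMap.range (Jst i.succ)ᵀ.mulVecLin =
      LinearMap.range (Jst i.castSucc)ᵀ.mulVecLin ⊔ LinearMap.range (J i)ᵀ.mulVecLin := by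
  simp only [range_mulVecLin, col_transpose, range_row_stack_succ hJst, Submodule.span_union]

end Stack

theorem stmt6_general (k m : ℕ) (p : Fin k → ℕ)
    (J : (i : Fin k) → Matrix (Fin (p i)) (Fin m) ℝ)
    (Jst : (i : Fin (k + 1)) →
      Matrix {x : (j : Fin k) × Fin (p j) // (x.1 : ℕ) < (i : ℕ)} (Fin m) ℝ)
    (hJst : ∀ (i : Fin (k + 1)) (x) (c), Jst i x c = J x.1.1 x.1.2 c)
    (Jstp : (i : Fin (k + 1)) →
      Matrix (Fin m) {x : (j : Fin k) × Fin (p j) // (x.1 : ℕ) < (i : ℕ)} ℝ)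
    (hJstp1 : ∀ i, Jst i * Jstp i * Jst i = Jst i)
    (hJstp4 : ∀ i, (Jstp i * Jst i)ᵀ = Jstp i * Jst i)
    (N : Fin (k + 1) → Matrix (Fin m) (Fin m) ℝ)
    (hN : ∀ i : Fin (k + 1), N i = 1 - Jstp i * Jst i)
    (M : (i : Fin k) → Matrix (Fin (p i)) (Fin m) ℝ)
    (hM : ∀ i, M i = J i * N i.castSucc)
    (Mp : (i : Fin k) → Matrix (Fin m) (Fin (p i)) ℝ)
    (hMp1 : ∀ i, M i * Mp i * M i = M i)
    (hMp4 : ∀ i, (Mp i * M i)ᵀ = Mp i * M i)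
    (P : Fin (k + 1) → Matrix (Fin m) (Fin m) ℝ)
    (hP : ∀ i : Fin k, P i.castSucc = Mp i * M i) :
    ∀ i : Fin k,
      LinearMap.range (Matrix.mulVecLin (∑ j ∈ Finset.Iic i, P j.castSucc)) =
        LinearMap.range (Matrix.mulVecLin (Jst i.succ)ᵀ) ∧
      LinearMap.range (Matrix.mulVecLin (Jst i.succ)ᵀ) =
        LinearMap.range (Matrix.mulVecLin (Jst i.castSucc)ᵀ) ⊔
          LinearMap.range (Matrix.mulVecLin (P i.castSucc)) ∧
      ∀ x ∈ LinearMap.range (Matrix.mulVecLin (Jst i.castSucc)ᵀ),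
        ∀ y ∈ LinearMap.range (Matrix.mulVecLin (P i.castSucc)), x ⬝ᵥ y = 0 := by
  have hMJ (i : Fin k) : M i = J i * (1 - Jstp i.castSucc * Jst i.castSucc) := by rw [hM, hN]
  have hPstep (i : Fin k) :
      P i.castSucc = Jstp i.succ * Jst i.succ - Jstp i.castSucc * Jst i.castSucc := by
    rw [pinv_mul_eq_add_of_range_transpose_eq_sup (hJstp1 _) (hJstp4 _) (hMJ i) (hMp1 i)
      (hMp4 i) (hJstp1 _) (hJstp4 _) (range_transpose_stack_succ hJst i), hP, add_sub_cancel_left]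
  have hproj_zero : Jstp 0 * Jst 0 = 0 := by
    have : IsEmpty {x : (j : Fin k) × Fin (p j) // (x.1 : ℕ) < ((0 : Fin (k + 1)) : ℕ)} :=
      ⟨fun x => Nat.not_lt_zero _ x.2⟩
    rw [Subsingleton.elim (Jst 0) 0, Matrix.mul_zero]
  intro i
  refine ⟨?_, ?_, fun x hx y hy => ?_⟩
  · rw [Finset.sum_congr rfl fun j _ => hPstep j, Fin.sum_Iic_sub i fun j => Jstp j * Jst j,
      hproj_zero, sub_zero]
    exact range_mulVecLin_mul_eq_range_transpose (hJstp1 _) (hJstp4 _)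
  · rw [range_transpose_stack_succ hJst, hP,
      range_transpose_sup_eq_sup_range_pinv_mul (hJstp1 _) (hJstp4 _) (hMJ i) (hMp1 i) (hMp4 i)]
  · rw [← range_mulVecLin_mul_eq_range_transpose (hJstp1 _) (hJstp4 _)] at hx
    rw [hP] at hy
    exact dotProduct_eq_zero_of_mem_range (hJstp4 _)
      (pinv_mul_mul_pinv_mul_eq_zero_of_transpose_eq (hJstp1 _) (hJstp4 _) (hMJ i) (hMp4 i)) hx hy

theorem stmt6 (k m : ℕ) (hk : 1 ≤ k) (p : Fin k → ℕ)
    (J : (i : Fin k) → Matrix (Fin (p i)) (Fin m) ℝ)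
    (Jst : (i : Fin (k + 1)) →
      Matrix {x : (j : Fin k) × Fin (p j) // (x.1 : ℕ) < (i : ℕ)} (Fin m) ℝ)
    (hJst : ∀ (i : Fin (k + 1)) (x) (c), Jst i x c = J x.1.1 x.1.2 c)
    (Jstp : (i : Fin (k + 1)) →
      Matrix (Fin m) {x : (j : Fin k) × Fin (p j) // (x.1 : ℕ) < (i : ℕ)} ℝ)
    (hJstp1 : ∀ i, Jst i * Jstp i * Jst i = Jst i)
    (hJstp2 : ∀ i, Jstp i * Jst i * Jstp i = Jstp i)
    (hJstp3 : ∀ i, (Jst i * Jstp i)ᵀ = Jst i * Jstp i)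
    (hJstp4 : ∀ i, (Jstp i * Jst i)ᵀ = Jstp i * Jst i)
    (N : Fin (k + 1) → Matrix (Fin m) (Fin m) ℝ)
    (hN0 : N 0 = 1)
    (hN : ∀ i : Fin (k + 1), N i = 1 - Jstp i * Jst i)
    (M : (i : Fin k) → Matrix (Fin (p i)) (Fin m) ℝ)
    (hM : ∀ i, M i = J i * N i.castSucc)
    (Mp : (i : Fin k) → Matrix (Fin m) (Fin (p i)) ℝ)
    (hMp1 : ∀ i, M i * Mp i * M i = M i)
    (hMp2 : ∀ i, Mp i * M i * Mp i = Mp i)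
    (hMp3 : ∀ i, (M i * Mp i)ᵀ = M i * Mp i)
    (hMp4 : ∀ i, (Mp i * M i)ᵀ = Mp i * M i)
    (P : Fin (k + 1) → Matrix (Fin m) (Fin m) ℝ)
    (hP : ∀ i : Fin k, P i.castSucc = Mp i * M i)
    (hPlast : P (Fin.last k) = 1 - ∑ i : Fin k, P i.castSucc) :
    ∀ i : Fin k,
      LinearMap.range (Matrix.mulVecLin (∑ j ∈ Finset.Iic i, P j.castSucc)) =
        LinearMap.range (Matrix.mulVecLin (Jst i.succ)ᵀ) ∧
      LinearMap.range (Matrix.mulVecLin (Jst i.succ)ᵀ) =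
        LinearMap.range (Matrix.mulVecLin (Jst i.castSucc)ᵀ) ⊔
          LinearMap.range (Matrix.mulVecLin (P i.castSucc)) ∧
      ∀ x ∈ LinearMap.range (Matrix.mulVecLin (Jst i.castSucc)ᵀ),
        ∀ y ∈ LinearMap.range (Matrix.mulVecLin (P i.castSucc)), x ⬝ᵥ y = 0 :=
  stmt6_general k m p J Jst hJst Jstp hJstp1 hJstp4 N hN M hM Mp hMp1 hMp4 P hP
end

section
/- Given λ = (λ_1, …, λ_k) ∈ [0,∞]^k, let L_D^{+(λ)} = diag(L_{11}^{+(λ_1)}, …, L_{kk}^{+(λ_k)}) ∈ ℝ^{ρ×p}. Let v_i, κ_i ∈ ℝ^{p_i} for 1 ≤ i ≤ k and let v, κ ∈ ℝ^p be their vertical stacks. Define u_{1:0} = 0 ∈ ℝ^m and, recursively, u_{1:i} = u_{1:i−1} + Q_iᵀ L_{ii}^{+(λ_i)} (v_i − κ_i − J_i u_{1:i−1}) for 1 ≤ i ≤ k. Then the matrix I_p + L_L L_D^{+(λ)} is invertible and u_{1:k} = Qᵀ L_D^{+(λ)} (I_p + L_L L_D^{+(λ)})^{-1} (v − κ). -/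
open Matrix

private lemma sigma_sum_eq {k : ℕ} {p : Fin k → ℕ} (f : ((i : Fin k) × Fin (p i)) → ℝ) :
    ∑ x : (i : Fin k) × Fin (p i), f x = ∑ i : Fin k, ∑ a : Fin (p i), f ⟨i, a⟩ := by
  rw [← Finset.univ_sigma_univ, Finset.sum_sigma]

private lemma mulVec_finset_sum {n m' : Type*} [Fintype n] {ι : Type*} (s : Finset ι)
    (M : Matrix m' n ℝ) (f : ι → n → ℝ) :
    M *ᵥ (∑ j ∈ s, f j) = ∑ j ∈ s, M *ᵥ f j := by
  ext i
  simp [Matrix.mulVec, dotProduct, Finset.mul_sum, Finset.sum_apply]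
  rw [Finset.sum_comm]

theorem stmt7 (k m : ℕ) (hk : 1 ≤ k) (p ρ : Fin k → ℕ)
    (Lb : (i j : Fin k) → Matrix (Fin (p i)) (Fin (ρ j)) ℝ)
    (hLb : ∀ i j : Fin k, i < j → Lb i j = 0)
    (Q : (i : Fin k) → Matrix (Fin (ρ i)) (Fin m) ℝ)
    (hQorth : ∀ i, Q i * (Q i)ᵀ = 1)
    (hQperp : ∀ i j, i ≠ j → Q i * (Q j)ᵀ = 0)
    (J : (i : Fin k) → Matrix (Fin (p i)) (Fin m) ℝ)
    (hJ : ∀ i, J i = ∑ j ∈ Finset.Iic i, Lb i j * Q j)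
    (Qst : Matrix ((i : Fin k) × Fin (ρ i)) (Fin m) ℝ)
    (hQst : ∀ x c, Qst x c = Q x.1 x.2 c)
    (L : Matrix ((i : Fin k) × Fin (p i)) ((i : Fin k) × Fin (ρ i)) ℝ)
    (hL : ∀ x y, L x y = Lb x.1 y.1 x.2 y.2)
    (LD LL : Matrix ((i : Fin k) × Fin (p i)) ((i : Fin k) × Fin (ρ i)) ℝ)
    (hLD : LD = Matrix.blockDiagonal' fun i => Lb i i)
    (hLL : LL = L - LD)
    (lam : Fin k → ENNReal)
    (Lp : (i : Fin k) → Matrix (Fin (ρ i)) (Fin (p i)) ℝ)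
    (hLp0 : ∀ i, lam i = 0 →
      Lb i i * Lp i * Lb i i = Lb i i ∧ Lp i * Lb i i * Lp i = Lp i ∧
      (Lb i i * Lp i)ᵀ = Lb i i * Lp i ∧ (Lp i * Lb i i)ᵀ = Lp i * Lb i i)
    (hLpmid : ∀ i, lam i ≠ 0 → lam i ≠ ⊤ →
      Lp i = (Lb i i)ᵀ *
        (Lb i i * (Lb i i)ᵀ + ((lam i).toReal) ^ 2 • (1 : Matrix (Fin (p i)) (Fin (p i)) ℝ))⁻¹)
    (hLptop : ∀ i, lam i = ⊤ → Lp i = 0)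
    (LDp : Matrix ((i : Fin k) × Fin (ρ i)) ((i : Fin k) × Fin (p i)) ℝ)
    (hLDp : LDp = Matrix.blockDiagonal' Lp)
    (v κ : (i : Fin k) → Fin (p i) → ℝ)
    (vst κst : ((i : Fin k) × Fin (p i)) → ℝ)
    (hvst : ∀ x, vst x = v x.1 x.2) (hκst : ∀ x, κst x = κ x.1 x.2)
    (u : Fin (k + 1) → Fin m → ℝ)
    (hu0 : u 0 = 0)
    (hurec : ∀ i : Fin k,
      u i.succ = u i.castSucc + (Q i)ᵀ *ᵥ (Lp i *ᵥ (v i - κ i - J i *ᵥ u i.castSucc))) :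
    IsUnit ((1 : Matrix ((i : Fin k) × Fin (p i)) ((i : Fin k) × Fin (p i)) ℝ) + LL * LDp) ∧
    u (Fin.last k) =
      (Qstᵀ * LDp *
        ((1 : Matrix ((i : Fin k) × Fin (p i)) ((i : Fin k) × Fin (p i)) ℝ) + LL * LDp)⁻¹) *ᵥ
        (vst - κst) := by
  classical
  -- entries of LL
  have hLLe : ∀ (i : Fin k) (a : Fin (p i)) (j : Fin k) (c : Fin (ρ j)),
      LL ⟨i, a⟩ ⟨j, c⟩ = if j < i then Lb i j a c else 0 := by
    intro i a j c
    rw [hLL, hLD]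
    rw [Matrix.sub_apply, hL]
    rcases lt_trichotomy j i with h | h | h
    · rw [if_pos h, Matrix.blockDiagonal'_apply_ne _ _ _ (fun hh => absurd hh h.ne'), sub_zero]
    · subst h
      rw [Matrix.blockDiagonal'_apply_eq, if_neg (lt_irrefl j)]
      simp
    · rw [if_neg (not_lt.mpr h.le), Matrix.blockDiagonal'_apply_ne _ _ _ (fun hh => absurd hh h.ne),
        hLb i j h]
      simp
  -- entries of LDp as mulVec
  have hLDpV : ∀ (z : ((i : Fin k) × Fin (p i)) → ℝ) (j : Fin k) (b : Fin (ρ j)),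
      (LDp *ᵥ z) ⟨j, b⟩ = (Lp j *ᵥ fun a => z ⟨j, a⟩) b := by
    intro z j b
    show ∑ x : (i : Fin k) × Fin (p i), LDp ⟨j, b⟩ x * z x = _
    rw [sigma_sum_eq (fun x => LDp ⟨j, b⟩ x * z x)]
    rw [Finset.sum_eq_single j]
    · rw [hLDp]
      simp [Matrix.blockDiagonal'_apply_eq, Matrix.mulVec, dotProduct]
    · intro j' _ hne
      apply Finset.sum_eq_zero; intro a _
      rw [hLDp, Matrix.blockDiagonal'_apply_ne _ _ _ (Ne.symm hne), zero_mul]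
    · intro h; exact absurd (Finset.mem_univ j) h
  -- mulVec by LL
  have hLLV : ∀ (z : ((i : Fin k) × Fin (ρ i)) → ℝ) (i : Fin k) (a : Fin (p i)),
      (LL *ᵥ z) ⟨i, a⟩ = ∑ j ∈ Finset.Iio i, (Lb i j *ᵥ fun c => z ⟨j, c⟩) a := by
    intro z i a
    show ∑ x : (i : Fin k) × Fin (ρ i), LL ⟨i, a⟩ x * z x = _
    rw [sigma_sum_eq (fun x => LL ⟨i, a⟩ x * z x)]
    rw [← Finset.sum_subset (Finset.subset_univ (Finset.Iio i))]
    · apply Finset.sum_congr rfl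
      intro j hj
      rw [Finset.mem_Iio] at hj
      simp [Matrix.mulVec, dotProduct, hLLe, hj]
    · intro j _ hj
      rw [Finset.mem_Iio, not_lt] at hj
      apply Finset.sum_eq_zero; intro c _
      rw [hLLe, if_neg (not_lt.mpr hj), zero_mul]
  -- LL * LDp entries vanish unless column block < row block
  have hNe : ∀ (x y : (i : Fin k) × Fin (p i)), ¬ (y.1 < x.1) → (LL * LDp) x y = 0 := by
    rintro ⟨i, a⟩ ⟨j, b⟩ h
    rw [Matrix.mul_apply, sigma_sum_eq (fun z => LL ⟨i, a⟩ z * LDp z ⟨j, b⟩)]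
    apply Finset.sum_eq_zero; intro j' _
    apply Finset.sum_eq_zero; intro c _
    by_cases hj : j' = j
    · subst hj
      rw [hLLe, if_neg (fun hc => h hc), zero_mul]
    · rw [hLDp, Matrix.blockDiagonal'_apply_ne _ _ _ hj, mul_zero]
  -- block triangularity and determinant
  have hBT : ((1 + LL * LDp)ᵀ).BlockTriangular (Sigma.fst) := by
    intro x y hlt
    rw [Matrix.transpose_apply, Matrix.add_apply, Matrix.one_apply,
      if_neg (fun hc : y = x => absurd (congrArg Sigma.fst hc) (ne_of_lt hlt)),
      hNe y x (fun hc => absurd hc (not_lt.mpr (le_of_lt hlt))), add_zero]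
  have hblk : ∀ i0 : Fin k, ((1 + LL * LDp)ᵀ.toSquareBlock Sigma.fst i0) = 1 := by
    intro i0
    ext x y
    rw [Matrix.toSquareBlock_def]
    show (1 + LL * LDp)ᵀ x.val y.val = _
    rw [Matrix.transpose_apply, Matrix.add_apply,
      hNe y.val x.val (by rw [x.2, y.2]; exact lt_irrefl i0), add_zero]
    rw [Matrix.one_apply, Matrix.one_apply]
    by_cases h : x = y
    · subst h; simp
    · rw [if_neg h, if_neg (fun hc : (y : (i : Fin k) × Fin (p i)) = x => h (Subtype.ext hc.symm))]
  have hdet : ((1 : Matrix ((i : Fin k) × Fin (p i)) ((i : Fin k) × Fin (p i)) ℝ) + LL * LDp).det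
      = 1 := by
    rw [← Matrix.det_transpose, hBT.det_fintype]
    apply Finset.prod_eq_one
    intro i0 _
    rw [hblk i0, Matrix.det_one]
  have hunit : IsUnit ((1 : Matrix ((i : Fin k) × Fin (p i)) ((i : Fin k) × Fin (p i)) ℝ)
      + LL * LDp) := by
    rw [Matrix.isUnit_iff_isUnit_det, hdet]; exact isUnit_one
  refine ⟨hunit, ?_⟩
  set A := (1 : Matrix ((i : Fin k) × Fin (p i)) ((i : Fin k) × Fin (p i)) ℝ) + LL * LDp with hA
  set wst : ((i : Fin k) × Fin (p i)) → ℝ := A⁻¹ *ᵥ (vst - κst) with hwst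
  have hAw : A *ᵥ wst = vst - κst := by
    rw [hwst, Matrix.mulVec_mulVec, Matrix.mul_nonsing_inv _ (by rw [hdet]; exact isUnit_one),
      Matrix.one_mulVec]
  -- the star equation
  have hstar : ∀ i : Fin k, (fun a => wst ⟨i, a⟩) =
      v i - κ i - ∑ j ∈ Finset.Iio i, Lb i j *ᵥ (Lp j *ᵥ fun a => wst ⟨j, a⟩) := by
    intro i
    funext a
    have h1 := congrFun hAw ⟨i, a⟩
    rw [hA, Matrix.add_mulVec, Matrix.one_mulVec, ← Matrix.mulVec_mulVec] at h1
    rw [Pi.add_apply, hLLV] at h1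
    simp only [hLDpV] at h1
    have h2 : (vst - κst) ⟨i, a⟩ = v i a - κ i a := by
      rw [Pi.sub_apply, hvst, hκst]
    rw [h2] at h1
    simp only [Pi.sub_apply, Finset.sum_apply]
    have h3 : (∑ j ∈ Finset.Iio i, (Lb i j *ᵥ fun c => (Lp j *ᵥ fun a => wst ⟨j, a⟩) c) a)
        = ∑ j ∈ Finset.Iio i, (Lb i j *ᵥ (Lp j *ᵥ fun a => wst ⟨j, a⟩)) a := by
      apply Finset.sum_congr rfl; intro j _; rfl
    rw [h3] at h1
    linarith
  -- induction
  have hind : ∀ n : ℕ, (hn : n ≤ k) → u ⟨n, Nat.lt_succ_of_le hn⟩ =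
      ∑ j ∈ Finset.univ.filter (fun j : Fin k => (j : ℕ) < n),
        (Q j)ᵀ *ᵥ (Lp j *ᵥ fun a => wst ⟨j, a⟩) := by
    intro n
    induction n with
    | zero =>
      intro _
      have : Finset.univ.filter (fun j : Fin k => (j : ℕ) < 0) = ∅ := by
        apply Finset.filter_false_of_mem; intro j _; omega
      rw [this, Finset.sum_empty]
      exact hu0
    | succ n ih =>
      intro hn
      have hnk : n < k := hn
      have hnk' : n ≤ k := le_of_lt hnk
      set i : Fin k := ⟨n, hnk⟩ with hi
      have hprev : u i.castSucc = ∑ j ∈ Finset.Iio i,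
          (Q j)ᵀ *ᵥ (Lp j *ᵥ fun a => wst ⟨j, a⟩) := by
        have hcast : i.castSucc = ⟨n, Nat.lt_succ_of_le hnk'⟩ := rfl
        rw [hcast, ih hnk']
        apply Finset.sum_congr _ (fun _ _ => rfl)
        ext j
        simp [Finset.mem_Iio, Fin.lt_def, hi]
      have hJQ : ∀ j' : Fin k, j' ≤ i → J i * (Q j')ᵀ = Lb i j' := by
        intro j' hj'
        rw [hJ, Matrix.sum_mul, Finset.sum_eq_single j']
        · rw [Matrix.mul_assoc, hQorth, Matrix.mul_one]
        · intro j _ hne; rw [Matrix.mul_assoc, hQperp j j' hne, Matrix.mul_zero]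
        · intro h; exact absurd (Finset.mem_Iic.mpr hj') h
      have hJu : J i *ᵥ u i.castSucc = ∑ j ∈ Finset.Iio i,
          Lb i j *ᵥ (Lp j *ᵥ fun a => wst ⟨j, a⟩) := by
        rw [hprev, mulVec_finset_sum]
        apply Finset.sum_congr rfl
        intro j hj
        rw [Matrix.mulVec_mulVec, hJQ j (le_of_lt (Finset.mem_Iio.mp hj))]
      have hwi : v i - κ i - J i *ᵥ u i.castSucc = fun a => wst ⟨i, a⟩ := by
        rw [hJu, hstar i]
      have hrec := hurec i
      rw [hwi, hprev] at hrec
      have hsucc : (⟨n + 1, Nat.lt_succ_of_le hn⟩ : Fin (k + 1)) = i.succ := rfl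
      rw [hsucc, hrec]
      have hfil : Finset.univ.filter (fun j : Fin k => (j : ℕ) < n + 1)
          = insert i (Finset.Iio i) := by
        ext j
        simp only [Finset.mem_filter, Finset.mem_univ, true_and, Finset.mem_insert,
          Finset.mem_Iio, Fin.lt_def, Fin.ext_iff, hi]
        omega
      rw [hfil, Finset.sum_insert (by simp [Finset.mem_Iio])]
      rw [add_comm]
  -- conclude
  have hlast : u (Fin.last k) = ∑ j : Fin k, (Q j)ᵀ *ᵥ (Lp j *ᵥ fun a => wst ⟨j, a⟩) := by
    have h := hind k le_rfl
    have : Fin.last k = ⟨k, Nat.lt_succ_of_le le_rfl⟩ := rfl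
    rw [this, h]
    apply Finset.sum_congr _ (fun _ _ => rfl)
    apply Finset.filter_true_of_mem
    intro j _
    exact j.2
  have hrhs : (Qstᵀ * LDp * A⁻¹) *ᵥ (vst - κst) = Qstᵀ *ᵥ (LDp *ᵥ wst) := by
    rw [hwst, Matrix.mulVec_mulVec, Matrix.mulVec_mulVec, Matrix.mul_assoc]
  rw [hrhs, hlast]
  funext c
  have hR : (Qstᵀ *ᵥ (LDp *ᵥ wst)) c
      = ∑ j : Fin k, ∑ b : Fin (ρ j), Q j b c * (Lp j *ᵥ fun a => wst ⟨j, a⟩) b := by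
    show ∑ x : (i : Fin k) × Fin (ρ i), Qstᵀ c x * (LDp *ᵥ wst) x = _
    rw [sigma_sum_eq (fun x => Qstᵀ c x * (LDp *ᵥ wst) x)]
    apply Finset.sum_congr rfl
    intro j _
    apply Finset.sum_congr rfl
    intro b _
    rw [Matrix.transpose_apply, hQst, hLDpV]
  rw [hR, Finset.sum_apply]
  apply Finset.sum_congr rfl
  intro j _
  show (∑ b : Fin (ρ j), (Q j)ᵀ c b * (Lp j *ᵥ fun a => wst ⟨j, a⟩) b)
      = ∑ b : Fin (ρ j), Q j b c * (Lp j *ᵥ fun a => wst ⟨j, a⟩) b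
  apply Finset.sum_congr rfl
  intro b _
  rw [Matrix.transpose_apply]
end

section
/- Assume in addition that rank(L_{ii}) = ρ_i for every 1 ≤ i ≤ k and that ρ = p (so each L_{ii} is a square invertible matrix and L is invertible). Then the Moore–Penrose pseudoinverse of J = L Q satisfies J⁺ = Qᵀ L_D⁺ (I_p + L_L L_D⁺)^{-1}, where L_D⁺ is the Moore–Penrose pseudoinverse of L_D. -/
/-!
Each diagonal block `L_ii` is square of full rank, hence invertible, so `L_D` is invertible and
`L_D⁺ = L_D⁻¹`. The matrix `N = L_L L_D⁻¹` is strictly block lower triangular, hence nilpotent,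
so `I + N` is invertible and `L = (I + N) L_D` has the two-sided inverse
`X = L_D⁻¹ (I + N)⁻¹`. As `Q Qᵀ = I`, the candidate `Qᵀ X` satisfies `J (Qᵀ X) = I` and
`(Qᵀ X) J = Qᵀ Q`, so it solves the four Penrose equations, which determine `J⁺` uniquely.
-/

namespace Matrix

variable {R ι : Type*} {m n o : Type*} {p q : ι → Type*}

section MoorePenrose

variable [Fintype m] [Fintype n]

/-- The Penrose equations with the transpose in place of the conjugate transpose, which is the
right notion over `ℝ`. -/
def IsMoorePenroseInverse [CommSemiring R] (A : Matrix m n R) (B : Matrix n m R) : Prop :=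
  A * B * A = A ∧ B * A * B = B ∧ (A * B)ᵀ = A * B ∧ (B * A)ᵀ = B * A

theorem IsMoorePenroseInverse.eq [CommSemiring R] {A : Matrix m n R} {B₁ B₂ : Matrix n m R}
    (h₁ : IsMoorePenroseInverse A B₁) (h₂ : IsMoorePenroseInverse A B₂) : B₁ = B₂ := by
  obtain ⟨h₁₁, h₁₂, h₁₃, h₁₄⟩ := h₁
  obtain ⟨h₂₁, h₂₂, h₂₃, h₂₄⟩ := h₂
  have hAB : A * B₁ = A * B₂ :=
    calc A * B₁ = (A * B₂) * (A * B₁) := by rw [← Matrix.mul_assoc, h₂₁]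
    _ = (A * B₂)ᵀ * (A * B₁)ᵀ := by rw [h₂₃, h₁₃]
    _ = (A * B₁ * A * B₂)ᵀ := by simp only [transpose_mul, Matrix.mul_assoc]
    _ = A * B₂ := by rw [h₁₁, h₂₃]
  have hBA : B₁ * A = B₂ * A :=
    calc B₁ * A = (B₁ * A) * (B₂ * A) := by rw [Matrix.mul_assoc, ← Matrix.mul_assoc A, h₂₁]
    _ = (B₁ * A)ᵀ * (B₂ * A)ᵀ := by rw [h₂₄, h₁₄]
    _ = (B₂ * (A * B₁ * A))ᵀ := by simp only [transpose_mul, Matrix.mul_assoc]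
    _ = B₂ * A := by rw [h₁₁, h₂₄]
  calc B₁ = B₁ * A * B₁ := h₁₂.symm
  _ = B₂ * A * B₂ := by rw [Matrix.mul_assoc, hAB, ← Matrix.mul_assoc, hBA]
  _ = B₂ := h₂₂

theorem isMoorePenroseInverse_mul_of_mul_transpose_eq_one [Fintype o] [CommSemiring R]
    [DecidableEq m] [DecidableEq n] {L : Matrix m n R} {X : Matrix n m R} {Q : Matrix n o R}
    (hLX : L * X = 1) (hXL : X * L = 1) (hQ : Q * Qᵀ = 1) :
    IsMoorePenroseInverse (L * Q) (Qᵀ * X) := by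
  have hright : L * Q * (Qᵀ * X) = 1 := by
    rw [Matrix.mul_assoc, ← Matrix.mul_assoc Q, hQ, Matrix.one_mul, hLX]
  have hleft : Qᵀ * X * (L * Q) = Qᵀ * Q := by
    rw [Matrix.mul_assoc, ← Matrix.mul_assoc X, hXL, Matrix.one_mul]
  refine ⟨by rw [hright, Matrix.one_mul], ?_, by rw [hright, transpose_one], ?_⟩
  · rw [hleft, Matrix.mul_assoc, ← Matrix.mul_assoc Q, hQ, Matrix.one_mul]
  · rw [hleft, transpose_mul, transpose_transpose]

end MoorePenrose

section Inverse

variable [Fintype m] [Fintype n] [DecidableEq m] [DecidableEq n]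

theorem eq_of_mul_mul_eq_self [Semiring R] {A : Matrix m n R} {B X : Matrix n m R}
    (hAB : A * B = 1) (hBA : B * A = 1) (hX : A * X * A = A) : X = B :=
  calc X = B * (A * X * A) * B := by
        simp only [Matrix.mul_assoc, hAB, Matrix.mul_one]
        rw [← Matrix.mul_assoc, hBA, Matrix.one_mul]
  _ = B := by rw [hX, Matrix.mul_assoc, hAB, Matrix.mul_one]

theorem exists_mul_eq_one_of_rank_eq_card {K : Type*} [Field K] (A : Matrix m n K)
    (hcard : Fintype.card m = Fintype.card n) (hA : A.rank = Fintype.card m) :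
    ∃ B : Matrix n m K, A * B = 1 ∧ B * A = 1 := by
  have hrange : LinearMap.range A.mulVecLin = ⊤ :=
    Submodule.eq_top_of_finrank_eq (by rw [← rank, hA, Module.finrank_fintype_fun_eq_card])
  obtain ⟨g, hg⟩ := A.mulVecLin.exists_rightInverse_of_surjective hrange
  have hAB : A * LinearMap.toMatrix' g = 1 := by
    apply Matrix.toLin'.injective
    rw [Matrix.toLin'_mul, Matrix.toLin'_toMatrix', Matrix.toLin'_one, ← hg]
    rfl
  exact ⟨_, hAB, (mul_eq_one_comm_of_card_eq m n K hcard).mp hAB⟩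

theorem mul_inv_one_add_mul_eq_one [CommRing R] {D N : Matrix m n R} {X : Matrix n m R}
    (hDX : D * X = 1) (hXD : X * D = 1) (hU : IsUnit (1 + N * X).det) :
    (D + N) * (X * (1 + N * X)⁻¹) = 1 ∧ X * (1 + N * X)⁻¹ * (D + N) = 1 := by
  have hfactor : D + N = (1 + N * X) * D := by
    rw [Matrix.add_mul, Matrix.one_mul, Matrix.mul_assoc, hXD, Matrix.mul_one]
  constructor
  · rw [← Matrix.mul_assoc, Matrix.add_mul, hDX, mul_nonsing_inv _ hU]
  · rw [hfactor, Matrix.mul_assoc, ← Matrix.mul_assoc _ (1 + N * X), nonsing_inv_mul _ hU,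
      Matrix.one_mul, hXD]

end Inverse

section Blocks

def sigmaStack (A : (i : ι) → Matrix (p i) o R) : Matrix (Σ i, p i) o R :=
  of fun x c => A x.1 x.2 c

def sigmaBlocks (A : (i j : ι) → Matrix (p i) (q j) R) : Matrix (Σ i, p i) (Σ j, q j) R :=
  of fun x y => A x.1 y.1 x.2 y.2

theorem sigmaBlocks_mul_sigmaStack [Fintype ι] [∀ i, Fintype (q i)] [Semiring R]
    (A : (i j : ι) → Matrix (p i) (q j) R) (B : (j : ι) → Matrix (q j) o R) :
    sigmaBlocks A * sigmaStack B = sigmaStack fun i => ∑ j, A i j * B j := by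
  ext x c
  simp [sigmaBlocks, sigmaStack, mul_apply, Fintype.sum_sigma, sum_apply]

theorem sigmaBlocks_mul_sigmaStack_of_lt [Fintype ι] [LinearOrder ι] [LocallyFiniteOrderBot ι]
    [∀ i, Fintype (q i)] [Semiring R] {A : (i j : ι) → Matrix (p i) (q j) R}
    (hA : ∀ i j, i < j → A i j = 0) (B : (j : ι) → Matrix (q j) o R) :
    sigmaBlocks A * sigmaStack B = sigmaStack fun i => ∑ j ∈ Finset.Iic i, A i j * B j := by
  rw [sigmaBlocks_mul_sigmaStack]
  congr! 2 with i
  exact (Finset.sum_subset (Finset.subset_univ _) fun j _ hj => by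
    rw [hA i j (by simpa using hj), Matrix.zero_mul]).symm

theorem sigmaStack_mul_transpose_sigmaStack [Fintype o] [Semiring R]
    (A : (i : ι) → Matrix (p i) o R) (B : (j : ι) → Matrix (q j) o R) :
    sigmaStack A * (sigmaStack B)ᵀ = sigmaBlocks fun i j => A i * (B j)ᵀ := by
  ext x y
  simp [sigmaBlocks, sigmaStack, mul_apply]

theorem sigmaBlocks_eq_one [DecidableEq ι] [∀ i, DecidableEq (p i)] [Zero R] [One R]
    {A : (i j : ι) → Matrix (p i) (p j) R}
    (hdiag : ∀ i, A i i = 1) (hoff : ∀ i j, i ≠ j → A i j = 0) : sigmaBlocks A = 1 := by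
  ext ⟨i, a⟩ ⟨j, b⟩
  by_cases hij : i = j
  · subst hij
    simp [sigmaBlocks, hdiag, one_apply]
  · simp [sigmaBlocks, hoff i j hij, hij]

theorem sigmaStack_mul_transpose_self_eq_one [DecidableEq ι] [∀ i, DecidableEq (p i)]
    [Fintype o] [Semiring R] {Q : (i : ι) → Matrix (p i) o R}
    (horth : ∀ i, Q i * (Q i)ᵀ = 1) (hperp : ∀ i j, i ≠ j → Q i * (Q j)ᵀ = 0) :
    sigmaStack Q * (sigmaStack Q)ᵀ = 1 := by
  rw [sigmaStack_mul_transpose_sigmaStack]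
  exact sigmaBlocks_eq_one horth hperp

theorem blockDiagonal'_mul_blockDiagonal'_eq_one [DecidableEq ι] [Fintype ι]
    [∀ i, Fintype (q i)] [∀ i, DecidableEq (p i)] [Semiring R]
    {A : (i : ι) → Matrix (p i) (q i) R} {B : (i : ι) → Matrix (q i) (p i) R}
    (h : ∀ i, A i * B i = 1) : blockDiagonal' A * blockDiagonal' B = 1 := by
  rw [← blockDiagonal'_mul]
  simp only [h]
  exact blockDiagonal'_one

def IsStrictBlockLowerTriangular {α : Type*} [Zero R] [LE α] (M : Matrix m n R) (b : m → α)
    (c : n → α) : Prop :=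
  ∀ x y, b x ≤ c y → M x y = 0

theorem isStrictBlockLowerTriangular_sigmaBlocks_sub_blockDiagonal' [LinearOrder ι]
    [AddGroup R] {A : (i j : ι) → Matrix (p i) (q j) R} (hA : ∀ i j, i < j → A i j = 0) :
    IsStrictBlockLowerTriangular (sigmaBlocks A - blockDiagonal' fun i => A i i)
      Sigma.fst Sigma.fst := by
  rintro ⟨i, a⟩ ⟨j, b⟩ (hij : i ≤ j)
  rcases hij.eq_or_lt with rfl | hlt
  · simp [sigmaBlocks, blockDiagonal'_apply_eq]
  · simp [sigmaBlocks, hA i j hlt, blockDiagonal'_apply_ne _ _ _ hlt.ne]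

theorem IsStrictBlockLowerTriangular.mul_blockDiagonal' [LE ι] [DecidableEq ι] [Fintype ι]
    [∀ i, Fintype (q i)] [NonUnitalNonAssocSemiring R] {M : Matrix m (Σ i, q i) R} {b : m → ι}
    (hM : IsStrictBlockLowerTriangular M b Sigma.fst) (C : (i : ι) → Matrix (q i) (p i) R) :
    IsStrictBlockLowerTriangular (M * blockDiagonal' C) b Sigma.fst := by
  rintro x ⟨j, c⟩ (hxj : b x ≤ j)
  rw [mul_apply]
  refine Finset.sum_eq_zero fun ⟨i, a⟩ _ => ?_
  by_cases hij : i = j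
  · subst hij
    rw [hM x ⟨i, a⟩ hxj, zero_mul]
  · rw [blockDiagonal'_apply_ne _ _ _ hij, mul_zero]

theorem IsStrictBlockLowerTriangular.pow_eq_zero [Fintype m] [DecidableEq m] [Semiring R]
    {k : ℕ} {M : Matrix m m R} {b : m → Fin k} (hM : IsStrictBlockLowerTriangular M b b) :
    M ^ k = 0 := by
  have hpow : ∀ n : ℕ, ∀ x y, (b x : ℕ) < b y + n → (M ^ n) x y = 0 := by
    intro n
    induction n with
    | zero =>
      intro x y hxy
      have hne : x ≠ y := by rintro rfl; omega
      rw [pow_zero, one_apply_ne hne]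
    | succ n ih =>
      intro x y hxy
      rw [pow_succ, mul_apply]
      refine Finset.sum_eq_zero fun z _ => ?_
      by_cases hzy : b z ≤ b y
      · rw [hM z y hzy, mul_zero]
      · rw [ih x z (by omega), zero_mul]
  ext x y
  exact hpow k x y (by omega)

end Blocks

end Matrix

open Matrix

theorem stmt9_general (k m : ℕ) (p ρ : Fin k → ℕ)
    (Lb : (i j : Fin k) → Matrix (Fin (p i)) (Fin (ρ j)) ℝ)
    (hLb : ∀ i j : Fin k, i < j → Lb i j = 0)
    (Q : (i : Fin k) → Matrix (Fin (ρ i)) (Fin m) ℝ)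
    (hQorth : ∀ i, Q i * (Q i)ᵀ = 1)
    (hQperp : ∀ i j, i ≠ j → Q i * (Q j)ᵀ = 0)
    (J : (i : Fin k) → Matrix (Fin (p i)) (Fin m) ℝ)
    (hJ : ∀ i, J i = ∑ j ∈ Finset.Iic i, Lb i j * Q j)
    (Jst : Matrix ((i : Fin k) × Fin (p i)) (Fin m) ℝ)
    (hJst : ∀ x c, Jst x c = J x.1 x.2 c)
    (Qst : Matrix ((i : Fin k) × Fin (ρ i)) (Fin m) ℝ)
    (hQst : ∀ x c, Qst x c = Q x.1 x.2 c)
    (L : Matrix ((i : Fin k) × Fin (p i)) ((i : Fin k) × Fin (ρ i)) ℝ)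
    (hL : ∀ x y, L x y = Lb x.1 y.1 x.2 y.2)
    (LD LL : Matrix ((i : Fin k) × Fin (p i)) ((i : Fin k) × Fin (ρ i)) ℝ)
    (hLD : LD = Matrix.blockDiagonal' fun i => Lb i i)
    (hLL : LL = L - LD)
    (hrank : ∀ i, (Lb i i).rank = ρ i)
    (hρp : ∑ i : Fin k, ρ i = ∑ i : Fin k, p i)
    (LDp : Matrix ((i : Fin k) × Fin (ρ i)) ((i : Fin k) × Fin (p i)) ℝ)
    (hLDp1 : LD * LDp * LD = LD)
    (Jp : Matrix (Fin m) ((i : Fin k) × Fin (p i)) ℝ)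
    (hJp1 : Jst * Jp * Jst = Jst) (hJp2 : Jp * Jst * Jp = Jp)
    (hJp3 : (Jst * Jp)ᵀ = Jst * Jp) (hJp4 : (Jp * Jst)ᵀ = Jp * Jst) :
    Jp = Qstᵀ * LDp *
      ((1 : Matrix ((i : Fin k) × Fin (p i)) ((i : Fin k) × Fin (p i)) ℝ) + LL * LDp)⁻¹ := by
  have hsquare : ∀ i, ρ i = p i := fun i =>
    (Finset.sum_eq_sum_iff_of_le fun j _ => by
      simpa [hrank j] using (Lb j j).rank_le_card_height).mp hρp i (Finset.mem_univ i)
  choose C hLC hCL using fun i => (Lb i i).exists_mul_eq_one_of_rank_eq_card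
    (by simp [hsquare i]) (by simp [hrank i, hsquare i])
  have hLDC : LD * blockDiagonal' C = 1 := hLD ▸ blockDiagonal'_mul_blockDiagonal'_eq_one hLC
  have hCLD : blockDiagonal' C * LD = 1 := hLD ▸ blockDiagonal'_mul_blockDiagonal'_eq_one hCL
  obtain rfl : LDp = blockDiagonal' C := eq_of_mul_mul_eq_self hLDC hCLD hLDp1
  obtain rfl : L = sigmaBlocks Lb := by ext x y; exact hL x y
  obtain rfl : Jst = sigmaStack J := by ext x c; exact hJst x c
  obtain rfl : Qst = sigmaStack Q := by ext x c; exact hQst x c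
  subst hLL
  have hnil : IsNilpotent ((sigmaBlocks Lb - LD) * blockDiagonal' C) := ⟨k, hLD ▸
    ((isStrictBlockLowerTriangular_sigmaBlocks_sub_blockDiagonal' hLb).mul_blockDiagonal'
      C).pow_eq_zero⟩
  obtain ⟨hright, hleft⟩ := mul_inv_one_add_mul_eq_one hLDC hCLD
    ((isUnit_iff_isUnit_det _).mp hnil.isUnit_one_add)
  rw [add_sub_cancel] at hright hleft
  have hJLQ : sigmaStack J = sigmaBlocks Lb * sigmaStack Q := by
    rw [sigmaBlocks_mul_sigmaStack_of_lt hLb, ← funext hJ]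
  rw [Matrix.mul_assoc]
  refine IsMoorePenroseInverse.eq ⟨hJp1, hJp2, hJp3, hJp4⟩ ?_
  rw [hJLQ]
  exact isMoorePenroseInverse_mul_of_mul_transpose_eq_one hright hleft
    (sigmaStack_mul_transpose_self_eq_one hQorth hQperp)

theorem stmt9 (k m : ℕ) (hk : 1 ≤ k) (p ρ : Fin k → ℕ)
    (Lb : (i j : Fin k) → Matrix (Fin (p i)) (Fin (ρ j)) ℝ)
    (hLb : ∀ i j : Fin k, i < j → Lb i j = 0)
    (Q : (i : Fin k) → Matrix (Fin (ρ i)) (Fin m) ℝ)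
    (hQorth : ∀ i, Q i * (Q i)ᵀ = 1)
    (hQperp : ∀ i j, i ≠ j → Q i * (Q j)ᵀ = 0)
    (J : (i : Fin k) → Matrix (Fin (p i)) (Fin m) ℝ)
    (hJ : ∀ i, J i = ∑ j ∈ Finset.Iic i, Lb i j * Q j)
    (Jst : Matrix ((i : Fin k) × Fin (p i)) (Fin m) ℝ)
    (hJst : ∀ x c, Jst x c = J x.1 x.2 c)
    (Qst : Matrix ((i : Fin k) × Fin (ρ i)) (Fin m) ℝ)
    (hQst : ∀ x c, Qst x c = Q x.1 x.2 c)
    (L : Matrix ((i : Fin k) × Fin (p i)) ((i : Fin k) × Fin (ρ i)) ℝ)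
    (hL : ∀ x y, L x y = Lb x.1 y.1 x.2 y.2)
    (LD LL : Matrix ((i : Fin k) × Fin (p i)) ((i : Fin k) × Fin (ρ i)) ℝ)
    (hLD : LD = Matrix.blockDiagonal' fun i => Lb i i)
    (hLL : LL = L - LD)
    (hrank : ∀ i, (Lb i i).rank = ρ i)
    (hρp : ∑ i : Fin k, ρ i = ∑ i : Fin k, p i)
    (LDp : Matrix ((i : Fin k) × Fin (ρ i)) ((i : Fin k) × Fin (p i)) ℝ)
    (hLDp1 : LD * LDp * LD = LD) (hLDp2 : LDp * LD * LDp = LDp)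
    (hLDp3 : (LD * LDp)ᵀ = LD * LDp) (hLDp4 : (LDp * LD)ᵀ = LDp * LD)
    (Jp : Matrix (Fin m) ((i : Fin k) × Fin (p i)) ℝ)
    (hJp1 : Jst * Jp * Jst = Jst) (hJp2 : Jp * Jst * Jp = Jp)
    (hJp3 : (Jst * Jp)ᵀ = Jst * Jp) (hJp4 : (Jp * Jst)ᵀ = Jp * Jst) :
    Jp = Qstᵀ * LDp *
      ((1 : Matrix ((i : Fin k) × Fin (p i)) ((i : Fin k) × Fin (p i)) ℝ) + LL * LDp)⁻¹ :=
  stmt9_general k m p ρ Lb hLb Q hQorth hQperp J hJ Jst hJst Qst hQst L hL LD LL hLD hLL hrank hρp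
    LDp hLDp1 Jp hJp1 hJp2 hJp3 hJp4
end

section
/- Let P_1, …, P_k ∈ ℝ^{m×m} be symmetric idempotent matrices with P_i P_j = 0 for all i ≠ j, and write P_{1:i} = P_1 + ⋯ + P_i. Let π_i : ℝ^m → [0,∞] (extended nonnegative reals) for 1 ≤ i ≤ k satisfy π_i(u) = π_i(P_{1:i} u) for all u ∈ ℝ^m. Suppose there exist vectors u_1*, …, u_k* ∈ ℝ^m such that, for each 1 ≤ i ≤ k, u_i* is the unique minimizer over u ∈ range(P_i) of the function u ↦ π_i(u_{1:i−1}* + u), where u_{1:i−1}* = u_1* + ⋯ + u_{i−1}* (and u_{1:0}* = 0). Then u* = u_1* + ⋯ + u_k* is the unique lexicographic minimizer of (π_1, …, π_k) over range(P_{1:k}); that is: (i) u* ∈ range(P_{1:k}); (ii) for every 1 ≤ i ≤ k and every u ∈ range(P_{1:k}) such that π_j(u) = π_j(u*) for all 1 ≤ j < i, one has π_i(u*) ≤ π_i(u); and (iii) every u ∈ range(P_{1:k}) satisfying (ii) in place of u* equals u*. -/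
/-!
Write `S = u₁* + ⋯ + uₖ*`. Since the `Pⱼ` are orthogonal idempotents, `Pⱼ S = uⱼ*`, and
`πᵢ u` only depends on the components `P₁ u, …, Pᵢ u`. By strong induction on `i`, any `u`
in the range of `P₁ + ⋯ + Pₖ` tying with `S` in `π₁, …, πᵢ` has `Pⱼ u = uⱼ*` for `j ≤ i`:
once the components before `i` agree, `πᵢ u = πᵢ(u*_{1:i-1} + Pᵢ u)`, and a tie with `S` at `i`
forces `Pᵢ u = uᵢ*` by the uniqueness of the `i`-th minimizer. This gives lexicographic
optimality of `S`, and a second lexicographic minimizer ties with `S` in every `πᵢ`, so all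
its components, hence itself, agree with those of `S`.
-/

open Matrix Finset

def IsLexMinOn {ι α β : Type*} [LT ι] [LE β] (π : ι → α → β) (V : Set α) (x : α) : Prop :=
  x ∈ V ∧ ∀ i, ∀ u ∈ V, (∀ j < i, π j u = π j x) → π i x ≤ π i u

theorem Matrix.mulVec_eq_self_of_mem_range {n R : Type*} [Fintype n] [CommSemiring R]
    {M : Matrix n n R} (hM : IsIdempotentElem M) {v : n → R}
    (hv : v ∈ LinearMap.range M.mulVecLin) : M *ᵥ v = v := by
  obtain ⟨w, rfl⟩ := hv
  rw [mulVecLin_apply, mulVec_mulVec, hM.eq]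

theorem OrthogonalIdempotents.sum_mulVec_of_mem_range {ι n R : Type*} [Fintype n] [DecidableEq n]
    [CommSemiring R] [DecidableEq ι] {P : ι → Matrix n n R} (hP : OrthogonalIdempotents P)
    {j : ι} {v : n → R}
    (hv : v ∈ LinearMap.range (P j).mulVecLin) (s : Finset ι) :
    (∑ l ∈ s, P l) *ᵥ v = if j ∈ s then v else 0 := by
  obtain ⟨w, rfl⟩ := hv
  simp only [mulVecLin_apply, mulVec_mulVec, sum_mul, hP.mul_eq, sum_ite_eq']
  split_ifs <;> simp

theorem OrthogonalIdempotents.mulVec_sum_of_mem_range {ι n R : Type*} [Fintype ι] [Fintype n]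
    [DecidableEq n] [CommSemiring R] {P : ι → Matrix n n R} (hP : OrthogonalIdempotents P)
    {v : ι → n → R} (hv : ∀ i, v i ∈ LinearMap.range (P i).mulVecLin) (j : ι) :
    P j *ᵥ ∑ l, v l = v j := by
  classical
  have hPj : P j = ∑ l ∈ {j}, P l := (sum_singleton _ _).symm
  simp only [mulVec_sum, hPj, hP.sum_mulVec_of_mem_range (hv _), mem_singleton, sum_ite_eq',
    mem_univ, if_true]

namespace LexMinOfProjections

variable {ι n R β : Type*} [LinearOrder ι] [LocallyFiniteOrderBot ι] [Fintype n] [CommSemiring R]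
  {P : ι → Matrix n n R} {π : ι → (n → R) → β} {ustar : ι → n → R}

theorem apply_eq_apply_components
    (hdep : ∀ i u, π i u = π i ((∑ j ∈ Iic i, P j) *ᵥ u)) (i : ι) (u : n → R) :
    π i u = π i (∑ j ∈ Iio i, P j *ᵥ u + P i *ᵥ u) := by
  rw [hdep, sum_mulVec, ← Iio_insert, sum_insert (by simp), add_comm]

theorem apply_eq_of_components_eq (hdep : ∀ i u, π i u = π i ((∑ j ∈ Iic i, P j) *ᵥ u))
    {i : ι} {u : n → R} (hu : ∀ j < i, P j *ᵥ u = ustar j) :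
    π i u = π i (∑ j ∈ Iio i, ustar j + P i *ᵥ u) := by
  rw [apply_eq_apply_components hdep, sum_congr rfl fun j hj => hu j (mem_Iio.mp hj)]

variable [Fintype ι] [DecidableEq n] (hP : OrthogonalIdempotents P)
  (hdep : ∀ i u, π i u = π i ((∑ j ∈ Iic i, P j) *ᵥ u))
  (hmem : ∀ i, ustar i ∈ LinearMap.range (P i).mulVecLin)
include hP hdep hmem

theorem apply_sum_eq (i : ι) :
    π i (∑ j, ustar j) = π i (∑ j ∈ Iio i, ustar j + ustar i) := by
  rw [apply_eq_of_components_eq hdep fun j _ => hP.mulVec_sum_of_mem_range hmem j,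
    hP.mulVec_sum_of_mem_range hmem]

variable [LinearOrder β] (hmin : ∀ i, ∀ u ∈ LinearMap.range (P i).mulVecLin, u ≠ ustar i →
    π i (∑ j ∈ Iio i, ustar j + ustar i) < π i (∑ j ∈ Iio i, ustar j + u))
include hmin

theorem apply_sum_le {i : ι} {u : n → R} (hu : ∀ j < i, P j *ᵥ u = ustar j) :
    π i (∑ j, ustar j) ≤ π i u := by
  rw [apply_sum_eq hP hdep hmem, apply_eq_of_components_eq hdep hu]
  by_cases h : P i *ᵥ u = ustar i
  · rw [h]
  · exact (hmin i (P i *ᵥ u) ⟨u, rfl⟩ h).le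

theorem mulVec_eq_of_apply_eq {u : n → R} {i : ι}
    (hu : ∀ j ≤ i, π j u = π j (∑ l, ustar l)) : P i *ᵥ u = ustar i := by
  induction i using WellFoundedLT.induction with
  | ind i ih =>
    have hpre : ∀ j < i, P j *ᵥ u = ustar j := fun j hj =>
      ih j hj fun l hl => hu l (hl.trans hj.le)
    by_contra hne
    have hlt := hmin i (P i *ᵥ u) ⟨u, rfl⟩ hne
    rw [← apply_sum_eq hP hdep hmem, ← apply_eq_of_components_eq hdep hpre,
      hu i le_rfl] at hlt
    exact hlt.false

theorem isLexMinOn_sum :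
    IsLexMinOn π (LinearMap.range (∑ j, P j).mulVecLin) (∑ j, ustar j) := by
  refine ⟨⟨∑ j, ustar j, ?_⟩, fun i u _ hu => ?_⟩
  · simp only [mulVecLin_apply, sum_mulVec, hP.mulVec_sum_of_mem_range hmem]
  · exact apply_sum_le hP hdep hmem hmin fun j hj =>
      mulVec_eq_of_apply_eq hP hdep hmem hmin fun l hl => hu l (hl.trans_lt hj)

theorem eq_sum_of_isLexMinOn {u : n → R}
    (hu : IsLexMinOn π (LinearMap.range (∑ j, P j).mulVecLin) u) : u = ∑ j, ustar j := by
  have hS := isLexMinOn_sum hP hdep hmem hmin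
  have htie : ∀ i, π i u = π i (∑ j, ustar j) := by
    intro i
    induction i using WellFoundedLT.induction with
    | ind i ih =>
      exact le_antisymm (hu.2 i _ hS.1 fun j hj => (ih j hj).symm) (hS.2 i u hu.1 ih)
  have hcomp (i : ι) : P i *ᵥ u = ustar i :=
    mulVec_eq_of_apply_eq hP hdep hmem hmin fun j _ => htie j
  calc u = (∑ j, P j) *ᵥ u := (mulVec_eq_self_of_mem_range hP.isIdempotentElem_sum hu.1).symm
    _ = ∑ j, ustar j := by simp only [sum_mulVec, hcomp]

end LexMinOfProjections

theorem stmt10_general (m k : ℕ)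
    (P : Fin k → Matrix (Fin m) (Fin m) ℝ)
    (hidem : ∀ i, P i * P i = P i)
    (horth : ∀ i j, i ≠ j → P i * P j = 0)
    (π : Fin k → (Fin m → ℝ) → ENNReal)
    (hdep : ∀ (i : Fin k) (u : Fin m → ℝ), π i u = π i ((∑ j ∈ Finset.Iic i, P j) *ᵥ u))
    (ustar : Fin k → Fin m → ℝ)
    (hmem : ∀ i, ustar i ∈ LinearMap.range (P i).mulVecLin)
    (hmin : ∀ i : Fin k, ∀ u ∈ LinearMap.range (P i).mulVecLin, u ≠ ustar i →
      π i ((∑ j ∈ Finset.Iio i, ustar j) + ustar i) <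
        π i ((∑ j ∈ Finset.Iio i, ustar j) + u)) :
    (∑ j : Fin k, ustar j) ∈ LinearMap.range (∑ j : Fin k, P j).mulVecLin ∧
    (∀ i : Fin k, ∀ u ∈ LinearMap.range (∑ j : Fin k, P j).mulVecLin,
      (∀ j : Fin k, j < i → π j u = π j (∑ j' : Fin k, ustar j')) →
      π i (∑ j' : Fin k, ustar j') ≤ π i u) ∧
    (∀ u ∈ LinearMap.range (∑ j : Fin k, P j).mulVecLin,
      (∀ i : Fin k, ∀ w ∈ LinearMap.range (∑ j : Fin k, P j).mulVecLin,
        (∀ j : Fin k, j < i → π j w = π j u) → π i u ≤ π i w) →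
      u = ∑ j' : Fin k, ustar j') := by
  have hP : OrthogonalIdempotents P := ⟨hidem, horth⟩
  obtain ⟨hSmem, hSmin⟩ := LexMinOfProjections.isLexMinOn_sum hP hdep hmem hmin
  exact ⟨hSmem, hSmin, fun u hu hlex =>
    LexMinOfProjections.eq_sum_of_isLexMinOn hP hdep hmem hmin ⟨hu, hlex⟩⟩

theorem stmt10 (m k : ℕ) (hk : 1 ≤ k)
    (P : Fin k → Matrix (Fin m) (Fin m) ℝ)
    (hsymm : ∀ i, (P i)ᵀ = P i)
    (hidem : ∀ i, P i * P i = P i)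
    (horth : ∀ i j, i ≠ j → P i * P j = 0)
    (π : Fin k → (Fin m → ℝ) → ENNReal)
    (hdep : ∀ (i : Fin k) (u : Fin m → ℝ), π i u = π i ((∑ j ∈ Finset.Iic i, P j) *ᵥ u))
    (ustar : Fin k → Fin m → ℝ)
    (hmem : ∀ i, ustar i ∈ LinearMap.range (P i).mulVecLin)
    (hmin : ∀ i : Fin k, ∀ u ∈ LinearMap.range (P i).mulVecLin, u ≠ ustar i →
      π i ((∑ j ∈ Finset.Iio i, ustar j) + ustar i) <
        π i ((∑ j ∈ Finset.Iio i, ustar j) + u)) :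
    (∑ j : Fin k, ustar j) ∈ LinearMap.range (∑ j : Fin k, P j).mulVecLin ∧
    (∀ i : Fin k, ∀ u ∈ LinearMap.range (∑ j : Fin k, P j).mulVecLin,
      (∀ j : Fin k, j < i → π j u = π j (∑ j' : Fin k, ustar j')) →
      π i (∑ j' : Fin k, ustar j') ≤ π i u) ∧
    (∀ u ∈ LinearMap.range (∑ j : Fin k, P j).mulVecLin,
      (∀ i : Fin k, ∀ w ∈ LinearMap.range (∑ j : Fin k, P j).mulVecLin,
        (∀ j : Fin k, j < i → π j w = π j u) → π i u ≤ π i w) →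
      u = ∑ j' : Fin k, ustar j') :=
  stmt10_general m k P hidem horth π hdep ustar hmem hmin
end

section
/- Let p, ρ, m ∈ ℕ, let L ∈ ℝ^{p×ρ} with rank(L) = ρ, let Q ∈ ℝ^{ρ×m} with Q Qᵀ = I_ρ, set P = Qᵀ Q, and let b ∈ ℝ^p and λ ∈ [0,∞). Define L^{+(λ)} = (Lᵀ L)^{-1} Lᵀ if λ = 0 and L^{+(λ)} = Lᵀ (L Lᵀ + λ² I_p)^{-1} if λ > 0 (both inverses exist). Then u* = Qᵀ L^{+(λ)} b is the unique minimizer of the function u ↦ ‖b − L Q u‖² + λ² ‖u‖² over the set {u ∈ ℝ^m : P u = u}. -/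
open Matrix

private lemma dp_nonneg {n : ℕ} (x : Fin n → ℝ) : 0 ≤ x ⬝ᵥ x :=
  Finset.sum_nonneg fun i _ => mul_self_nonneg _

private lemma dp_pos {n : ℕ} {x : Fin n → ℝ} (hx : x ≠ 0) : 0 < x ⬝ᵥ x :=
  (dp_nonneg x).lt_of_ne' (fun h => hx (dotProduct_self_eq_zero.mp h))

private lemma sum_sq_eq_dp {n : ℕ} (x : Fin n → ℝ) : (∑ j, (x j) ^ 2) = x ⬝ᵥ x := by
  simp [dotProduct, pow_two]

private lemma inj_of_rank {p ρ : ℕ} (L : Matrix (Fin p) (Fin ρ) ℝ) (hL : L.rank = ρ) :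
    Function.Injective L.mulVec := by
  have h := L.mulVecLin.finrank_range_add_finrank_ker
  rw [Matrix.rank] at hL
  rw [hL, Module.finrank_fintype_fun_eq_card, Fintype.card_fin] at h
  have hker : Module.finrank ℝ (LinearMap.ker L.mulVecLin) = 0 := by omega
  have hbot : LinearMap.ker L.mulVecLin = ⊥ := Submodule.finrank_eq_zero.mp hker
  exact LinearMap.ker_eq_bot.mp hbot

private lemma isUnit_of_ker {n : ℕ} (A : Matrix (Fin n) (Fin n) ℝ)
    (h : ∀ w, A *ᵥ w = 0 → w = 0) : IsUnit A := by
  refine Matrix.mulVec_injective_iff_isUnit.mp ?_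
  intro x y hxy
  have := h (x - y) (by rw [Matrix.mulVec_sub, hxy, sub_self])
  exact sub_eq_zero.mp this

private lemma core {p ρ : ℕ} (L : Matrix (Fin p) (Fin ρ) ℝ) (b : Fin p → ℝ)
    (lam : ℝ) (vs : Fin ρ → ℝ)
    (hstat : Lᵀ *ᵥ (L *ᵥ vs) + lam ^ 2 • vs = Lᵀ *ᵥ b)
    (hpos : ∀ w : Fin ρ → ℝ, w ≠ 0 →
      0 < (L *ᵥ w) ⬝ᵥ (L *ᵥ w) + lam ^ 2 * (w ⬝ᵥ w))
    (v : Fin ρ → ℝ) (hv : v ≠ vs) :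
    (b - L *ᵥ vs) ⬝ᵥ (b - L *ᵥ vs) + lam ^ 2 * (vs ⬝ᵥ vs) <
      (b - L *ᵥ v) ⬝ᵥ (b - L *ᵥ v) + lam ^ 2 * (v ⬝ᵥ v) := by
  set w : Fin ρ → ℝ := v - vs with hw
  have hwne : w ≠ 0 := sub_ne_zero.mpr hv
  have hvv : v = vs + w := by rw [hw]; abel
  set r : Fin p → ℝ := b - L *ᵥ vs with hr
  have hLr : Lᵀ *ᵥ r = lam ^ 2 • vs := by
    rw [hr, Matrix.mulVec_sub, ← hstat]; abel
  have h3 : r ⬝ᵥ (L *ᵥ w) = lam ^ 2 * (vs ⬝ᵥ w) := by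
    rw [Matrix.dotProduct_mulVec, ← Matrix.mulVec_transpose, hLr,
      smul_dotProduct, smul_eq_mul]
  have h1 : (b - L *ᵥ v) ⬝ᵥ (b - L *ᵥ v)
      = r ⬝ᵥ r - 2 * (r ⬝ᵥ (L *ᵥ w)) + (L *ᵥ w) ⬝ᵥ (L *ᵥ w) := by
    have hbv : b - L *ᵥ v = r - L *ᵥ w := by
      rw [hr, hvv, Matrix.mulVec_add]; abel
    rw [hbv]
    simp only [dotProduct_sub, sub_dotProduct]
    rw [dotProduct_comm (L *ᵥ w) r]
    ring
  have h2 : v ⬝ᵥ v = vs ⬝ᵥ vs + 2 * (vs ⬝ᵥ w) + w ⬝ᵥ w := by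
    rw [hvv]
    simp only [dotProduct_add, add_dotProduct]
    rw [dotProduct_comm w vs]
    ring
  have := hpos w hwne
  rw [h1, h2, h3]
  nlinarith [this]

theorem stmt11 (p ρ m : ℕ)
    (L : Matrix (Fin p) (Fin ρ) ℝ) (hL : L.rank = ρ)
    (Q : Matrix (Fin ρ) (Fin m) ℝ) (hQ : Q * Qᵀ = 1)
    (b : Fin p → ℝ) (lam : ℝ) (hlam : 0 ≤ lam)
    (Lp : Matrix (Fin ρ) (Fin p) ℝ)
    (hLp0 : lam = 0 → Lp = (Lᵀ * L)⁻¹ * Lᵀ)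
    (hLppos : 0 < lam →
      Lp = Lᵀ * (L * Lᵀ + lam ^ 2 • (1 : Matrix (Fin p) (Fin p) ℝ))⁻¹) :
    (Qᵀ * Q) *ᵥ ((Qᵀ * Lp) *ᵥ b) = (Qᵀ * Lp) *ᵥ b ∧
    ∀ u : Fin m → ℝ, (Qᵀ * Q) *ᵥ u = u → u ≠ (Qᵀ * Lp) *ᵥ b →
      (∑ j, (b j - ((L * Q) *ᵥ ((Qᵀ * Lp) *ᵥ b)) j) ^ 2) +
          lam ^ 2 * (∑ j, (((Qᵀ * Lp) *ᵥ b) j) ^ 2) <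
        (∑ j, (b j - ((L * Q) *ᵥ u) j) ^ 2) + lam ^ 2 * (∑ j, (u j) ^ 2) := by
  have hinj := inj_of_rank L hL
  have hLw : ∀ w : Fin ρ → ℝ, L *ᵥ w = 0 → w = 0 := by
    intro w hw
    apply hinj
    rw [hw, Matrix.mulVec_zero]
  have hstatM : (Lᵀ * L) * Lp + lam ^ 2 • Lp = Lᵀ := by
    rcases eq_or_lt_of_le hlam with h0 | hpos
    · rw [hLp0 h0.symm, ← h0]
      have hUnit : IsUnit (Lᵀ * L) := by
        apply isUnit_of_ker
        intro w hw
        apply hLw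
        apply dotProduct_self_eq_zero.mp
        calc (L *ᵥ w) ⬝ᵥ (L *ᵥ w) = w ⬝ᵥ ((Lᵀ * L) *ᵥ w) := by
              rw [← Matrix.mulVec_mulVec, Matrix.dotProduct_mulVec,
                ← Matrix.mulVec_transpose, dotProduct_comm,
                Matrix.dotProduct_mulVec, ← Matrix.mulVec_transpose]
          _ = 0 := by rw [hw, dotProduct_zero]
      have hinv := Matrix.mul_nonsing_inv (Lᵀ * L) ((Matrix.isUnit_iff_isUnit_det _).mp hUnit)
      rw [← Matrix.mul_assoc, hinv, Matrix.one_mul]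
      simp
    · set B : Matrix (Fin p) (Fin p) ℝ := L * Lᵀ + lam ^ 2 • 1 with hB
      have hUnit : IsUnit B := by
        apply isUnit_of_ker
        intro x hx
        have hxx : x ⬝ᵥ (B *ᵥ x) = 0 := by rw [hx, dotProduct_zero]
        rw [hB, Matrix.add_mulVec, dotProduct_add, ← Matrix.mulVec_mulVec,
          Matrix.dotProduct_mulVec, ← Matrix.mulVec_transpose,
          Matrix.smul_mulVec, Matrix.one_mulVec,
          dotProduct_smul, smul_eq_mul] at hxx
        have h1 : 0 ≤ (Lᵀ *ᵥ x) ⬝ᵥ (Lᵀ *ᵥ x) := dp_nonneg _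
        have h2 : 0 ≤ x ⬝ᵥ x := dp_nonneg _
        have hl2 : 0 < lam ^ 2 := pow_pos hpos 2
        have h3 : lam ^ 2 * (x ⬝ᵥ x) = 0 :=
          le_antisymm (by linarith) (mul_nonneg hl2.le h2)
        exact dotProduct_self_eq_zero.mp
          ((mul_eq_zero.mp h3).resolve_left hl2.ne')
      have hBinv := Matrix.mul_nonsing_inv B ((Matrix.isUnit_iff_isUnit_det _).mp hUnit)
      rw [hLppos hpos]
      calc (Lᵀ * L) * (Lᵀ * B⁻¹) + lam ^ 2 • (Lᵀ * B⁻¹)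
          = ((Lᵀ * L) * Lᵀ + lam ^ 2 • Lᵀ) * B⁻¹ := by
            simp only [Matrix.add_mul, Matrix.smul_mul, Matrix.mul_assoc]
        _ = (Lᵀ * B) * B⁻¹ := by
            simp only [hB, Matrix.mul_add, Matrix.mul_smul, Matrix.mul_one, Matrix.mul_assoc]
        _ = Lᵀ := by rw [Matrix.mul_assoc, hBinv, Matrix.mul_one]
  set vs : Fin ρ → ℝ := Lp *ᵥ b with hvs
  have hstat : Lᵀ *ᵥ (L *ᵥ vs) + lam ^ 2 • vs = Lᵀ *ᵥ b := by
    have h := congrArg (fun M => M *ᵥ b) hstatM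
    simp only [Matrix.add_mulVec, Matrix.smul_mulVec] at h
    rw [← Matrix.mulVec_mulVec, ← Matrix.mulVec_mulVec, ← hvs] at h
    exact h
  have hposw : ∀ w : Fin ρ → ℝ, w ≠ 0 →
      0 < (L *ᵥ w) ⬝ᵥ (L *ᵥ w) + lam ^ 2 * (w ⬝ᵥ w) := by
    intro w hw
    rcases eq_or_lt_of_le hlam with h0 | hp
    · have hne : L *ᵥ w ≠ 0 := fun h => hw (hLw w h)
      have := dp_pos hne
      nlinarith [dp_nonneg w]
    · have := dp_pos hw
      nlinarith [dp_nonneg (L *ᵥ w), mul_pos (pow_pos hp 2) this]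
  have hPP : (Qᵀ * Q) * (Qᵀ * Lp) = Qᵀ * Lp := by
    rw [Matrix.mul_assoc, ← Matrix.mul_assoc Q, hQ, Matrix.one_mul]
  have hus : (Qᵀ * Lp) *ᵥ b = Qᵀ *ᵥ vs := by
    rw [hvs, Matrix.mulVec_mulVec]
  have hdpQ : ∀ x : Fin ρ → ℝ, (Qᵀ *ᵥ x) ⬝ᵥ (Qᵀ *ᵥ x) = x ⬝ᵥ x := by
    intro x
    rw [Matrix.dotProduct_mulVec, Matrix.vecMul_transpose, Matrix.mulVec_mulVec, hQ,
      Matrix.one_mulVec]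
  have hLQ : ∀ x : Fin ρ → ℝ, (L * Q) *ᵥ (Qᵀ *ᵥ x) = L *ᵥ x := by
    intro x
    rw [Matrix.mulVec_mulVec, Matrix.mul_assoc, hQ, Matrix.mul_one]
  constructor
  · rw [Matrix.mulVec_mulVec, hPP]
  · intro u hu hne
    set v : Fin ρ → ℝ := Q *ᵥ u with hv
    have huv : u = Qᵀ *ᵥ v := by
      rw [hv, Matrix.mulVec_mulVec, hu]
    have hvne : v ≠ vs := by
      intro h
      apply hne
      rw [huv, h, hus]
    have key := core L b lam vs hstat hposw v hvne
    have e1 : ∀ x y : Fin p → ℝ, (∑ j, (x j - y j) ^ 2) = (x - y) ⬝ᵥ (x - y) := by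
      intro x y
      simp [dotProduct, pow_two]
    rw [e1, e1, sum_sq_eq_dp, sum_sq_eq_dp, hus, huv, hLQ, hLQ, hdpQ, hdpQ]
    exact key
end

section
/- Let p ≥ 1 and r_1, …, r_p ≥ 1 be integers and set r = r_1 + ⋯ + r_p. Let A = diag(A_{r_1}, …, A_{r_p}) ∈ ℝ^{r×r} and B = diag(B_{r_1}, …, B_{r_p}) ∈ ℝ^{r×p} be the block-diagonal chain-of-integrators pair, where A_s ∈ ℝ^{s×s} is the upper shift matrix (entries (A_s)_{i,i+1} = 1 and all other entries 0) and B_s ∈ ℝ^{s×1} is the column vector with last entry 1 and all other entries 0. Then for every ς > 0 there exist a matrix K ∈ ℝ^{p×r}, a constant ϑ > 0, a symmetric positive definite matrix X ∈ ℝ^{r×r}, and a matrix R ∈ ℝ^{r×r} such that X(A − ς B K) + (A − ς B K)ᵀ X = −Rᵀ R − 2ϑ X and X B = Kᵀ. -/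
/-!
For a single chain of length `s`, the Lyapunov equation `A S + S Aᵀ + S = e_s e_sᵀ` is
solved by the Gramian `S = ∫₀^∞ e^{-t} e^{-At} e_s e_sᵀ e^{-Aᵀt} dt`, whose entries are the
signed binomials `S a b = (-1)^(a+b) * C(q + u, q)` with `q = s-1-a`, `u = s-1-b`; the equation
itself is Pascal's rule. Vandermonde's identity factors `S = F Fᵀ` with `F` triangular with
diagonal `±1`, so `S` is positive definite. Putting the chains side by side gives
`A S + S Aᵀ + S = B Bᵀ`, and then `X = (ς S)⁻¹`, `K = Bᵀ X` satisfy
`X A + Aᵀ X + X = ς X B Bᵀ X`, which is the claim with `ϑ = 1/2` and `Rᵀ R = ς X B Bᵀ X`.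
-/

open Matrix Finset
open scoped MatrixOrder

theorem Nat.sum_range_choose_mul_choose_eq {q u s : ℕ} (hq : q < s) :
    ∑ k ∈ range s, q.choose k * u.choose k = (q + u).choose q := by
  symm
  calc (q + u).choose q = ∑ k ∈ range (q + 1), q.choose k * u.choose (q - k) := by
        rw [Nat.add_choose_eq, Nat.sum_antidiagonal_eq_sum_range_succ_mk]
    _ = ∑ k ∈ range (q + 1), q.choose (q + 1 - 1 - k) * u.choose (q + 1 - 1 - k) :=
        sum_congr rfl fun k hk => by
          rw [Nat.add_sub_cancel, Nat.choose_symm (Nat.lt_succ_iff.mp (mem_range.mp hk))]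
    _ = ∑ k ∈ range (q + 1), q.choose k * u.choose k :=
        sum_range_reflect (fun k => q.choose k * u.choose k) (q + 1)
    _ = ∑ k ∈ range s, q.choose k * u.choose k :=
        sum_subset (range_subset_range.mpr hq) fun k _ hk => by
          rw [Nat.choose_eq_zero_of_lt (by simpa using hk), zero_mul]

section BlockDiagonal

variable {o R : Type*} {m' : o → Type*} [Fintype o] [DecidableEq o] [∀ i, Fintype (m' i)]

theorem Matrix.dotProduct_blockDiagonal'_mulVec [Semiring R]
    (M : ∀ i, Matrix (m' i) (m' i) R) (v x : (Σ i, m' i) → R) :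
    v ⬝ᵥ (blockDiagonal' M *ᵥ x) =
      ∑ i, (fun a => v ⟨i, a⟩) ⬝ᵥ (M i *ᵥ fun a => x ⟨i, a⟩) := by
  simp only [dotProduct, mulVec, Fintype.sum_sigma, blockDiagonal'_apply]
  refine sum_congr rfl fun i _ => sum_congr rfl fun a _ => ?_
  rw [sum_eq_single i (fun j _ hj => by simp [Ne.symm hj]) (by simp)]
  simp

theorem Matrix.PosDef.blockDiagonal' [Ring R] [PartialOrder R] [StarRing R]
    [IsOrderedAddMonoid R] {M : ∀ i, Matrix (m' i) (m' i) R} (hM : ∀ i, (M i).PosDef) :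
    (Matrix.blockDiagonal' M).PosDef := by
  refine .of_dotProduct_mulVec_pos ?_ fun x hx => ?_
  · rw [IsHermitian, blockDiagonal'_conjTranspose]
    exact congrArg _ (funext fun i => (hM i).isHermitian.eq)
  obtain ⟨i, hi⟩ : ∃ i, (fun a => x ⟨i, a⟩) ≠ 0 := by
    by_contra! h
    exact hx (funext fun ⟨i, a⟩ => congrFun (h i) a)
  rw [dotProduct_blockDiagonal'_mulVec]
  exact sum_pos' (fun j _ => (hM j).posSemidef.dotProduct_mulVec_nonneg _)
    ⟨i, mem_univ i, (hM i).dotProduct_mulVec_pos hi⟩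

end BlockDiagonal

section ClosedLoop

variable {m n : Type*} [Fintype m] [DecidableEq m] [Fintype n]

theorem Matrix.PosSemidef.exists_eq_transpose_mul_self {M : Matrix m m ℝ} (hM : M.PosSemidef) :
    ∃ R : Matrix m m ℝ, M = Rᵀ * R :=
  CStarAlgebra.nonneg_iff_eq_star_mul_self.mp hM.nonneg

theorem exists_closedLoop_lyapunov {A S : Matrix m m ℝ} {B : Matrix m n ℝ} (hS : S.PosDef)
    (hAS : A * S + S * Aᵀ + S = B * Bᵀ) {ς : ℝ} (hς : 0 < ς) :
    ∃ (K : Matrix n m ℝ) (ϑ : ℝ) (X R : Matrix m m ℝ), 0 < ϑ ∧ X.PosDef ∧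
      X * (A - ς • (B * K)) + (A - ς • (B * K))ᵀ * X = -(Rᵀ * R) - (2 * ϑ) • X ∧
      X * B = Kᵀ := by
  set P := ς • S
  set X := P⁻¹
  have hP : P.PosDef := hS.smul hς
  have hX : X.PosDef := hP.inv
  have hXt : Xᵀ = X := hX.isHermitian.eq
  have hdet : IsUnit P.det := isUnit_iff_ne_zero.mpr hP.det_pos.ne'
  have hXP : X * P = 1 := nonsing_inv_mul P hdet
  have hPX : P * X = 1 := mul_nonsing_inv P hdet
  have hAP : A * P + P * Aᵀ + P = ς • (B * Bᵀ) := by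
    simp only [P, ← hAS, smul_add, Matrix.mul_smul, Matrix.smul_mul]
  have riccati : X * A + Aᵀ * X + X = ς • (X * (B * (Bᵀ * X))) := by
    calc X * A + Aᵀ * X + X
        = X * (A * P + P * Aᵀ + P) * X := by
          rw [Matrix.mul_add, Matrix.mul_add, Matrix.add_mul, Matrix.add_mul, Matrix.mul_assoc X,
            Matrix.mul_assoc, hPX, Matrix.mul_one, ← Matrix.mul_assoc X P, hXP, Matrix.one_mul,
            Matrix.one_mul]
      _ = ς • (X * (B * (Bᵀ * X))) := by
          simp only [hAP, Matrix.mul_smul, Matrix.smul_mul, Matrix.mul_assoc]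
  obtain ⟨R, hR⟩ : ∃ R : Matrix m m ℝ, ς • (X * (B * (Bᵀ * X))) = Rᵀ * R := by
    have h := (posSemidef_conjTranspose_mul_self (Bᵀ * X)).smul hς.le
    rw [conjTranspose_eq_transpose_of_trivial, transpose_mul, transpose_transpose, hXt,
      Matrix.mul_assoc] at h
    exact h.exists_eq_transpose_mul_self
  have hXA : X * A = ς • (X * (B * (Bᵀ * X))) - Aᵀ * X - X := by rw [← riccati]; abel
  refine ⟨Bᵀ * X, 1 / 2, X, R, one_half_pos, hX, ?_,
    by rw [transpose_mul, transpose_transpose, hXt]⟩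
  rw [← hR, transpose_sub, transpose_smul, transpose_mul, transpose_mul, transpose_transpose, hXt,
    Matrix.mul_sub, Matrix.sub_mul, Matrix.mul_smul, Matrix.smul_mul, hXA,
    show (2 : ℝ) * (1 / 2) = 1 by norm_num, one_smul]
  simp only [Matrix.mul_assoc]
  abel

end ClosedLoop

namespace ChainIntegrator

def altChoose (q u : ℕ) : ℝ := (-1) ^ (q + u) * (q + u).choose q

theorem altChoose_pascal (q u : ℕ) :
    ((if 0 < q then altChoose (q - 1) u else 0) + (if 0 < u then altChoose q (u - 1) else 0)
      + altChoose q u) = if q = 0 ∧ u = 0 then 1 else 0 := by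
  rcases q with _ | q <;> rcases u with _ | u
  · simp [altChoose]
  · simp [altChoose, pow_succ]
  · simp [altChoose, pow_succ]
  · simp only [Nat.succ_pos, if_true, Nat.add_sub_cancel, Nat.succ_ne_zero, false_and, if_false,
      altChoose]
    rw [show q + (u + 1) = q + u + 1 by ring, show q + 1 + u = q + u + 1 by ring,
      show q + 1 + (u + 1) = q + u + 1 + 1 by ring, Nat.choose_succ_succ' (q + u + 1) q,
      pow_succ _ (q + u + 1)]
    push_cast
    ring

section Block

variable (s : ℕ)

def shiftMatrix : Matrix (Fin s) (Fin s) ℝ := of fun a b => if (a : ℕ) + 1 = b then 1 else 0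

def cornerMatrix : Matrix (Fin s) (Fin s) ℝ :=
  of fun a b => if (a : ℕ) + 1 = s ∧ (b : ℕ) + 1 = s then 1 else 0

def chainGramian : Matrix (Fin s) (Fin s) ℝ := of fun a b => altChoose (s - 1 - a) (s - 1 - b)

def chainGramianFactor : Matrix (Fin s) (Fin s) ℝ :=
  of fun a k => (-1) ^ (s - 1 - a) * (s - 1 - a).choose (s - 1 - k)

variable {s}

theorem shiftMatrix_mul_apply {α : Type*} (M : Matrix (Fin s) α ℝ) (a : Fin s) (b : α) :
    (shiftMatrix s * M) a b = if h : (a : ℕ) + 1 < s then M ⟨a + 1, h⟩ b else 0 := by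
  simp only [shiftMatrix, mul_apply, of_apply, ite_mul, one_mul, zero_mul]
  split_ifs with h
  · rw [sum_eq_single ⟨a + 1, h⟩ (fun j _ hj => if_neg fun e => hj (Fin.ext e.symm)) (by simp),
      if_pos rfl]
  · exact sum_eq_zero fun k _ => if_neg (by omega)

theorem mul_shiftMatrix_transpose_apply {α : Type*} (M : Matrix α (Fin s) ℝ) (a : α)
    (b : Fin s) :
    (M * (shiftMatrix s)ᵀ) a b = if h : (b : ℕ) + 1 < s then M a ⟨b + 1, h⟩ else 0 := by
  rw [← transpose_transpose M, ← transpose_mul, transpose_apply, shiftMatrix_mul_apply]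
  rfl

theorem chainGramian_lyapunov :
    shiftMatrix s * chainGramian s + chainGramian s * (shiftMatrix s)ᵀ + chainGramian s =
      cornerMatrix s := by
  ext a b
  have ha := a.isLt
  have hb := b.isLt
  have pascal := altChoose_pascal (s - 1 - a) (s - 1 - b)
  -- in the reversed index `q = s - 1 - a`, the shift `a ↦ a + 1` becomes `q ↦ q - 1`
  simp only [show 0 < s - 1 - a ↔ (a : ℕ) + 1 < s by omega,
    show 0 < s - 1 - b ↔ (b : ℕ) + 1 < s by omega, show s - 1 - a = 0 ↔ (a : ℕ) + 1 = s by omega,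
    show s - 1 - b = 0 ↔ (b : ℕ) + 1 = s by omega, show s - 1 - a - 1 = s - 1 - (a + 1) by omega,
    show s - 1 - b - 1 = s - 1 - (b + 1) by omega] at pascal
  simpa only [Matrix.add_apply, shiftMatrix_mul_apply, mul_shiftMatrix_transpose_apply,
    chainGramian, cornerMatrix, of_apply, dite_eq_ite] using pascal

theorem chainGramian_eq_mul_transpose :
    chainGramian s = chainGramianFactor s * (chainGramianFactor s)ᵀ := by
  ext a b
  simp only [chainGramian, chainGramianFactor, mul_apply, transpose_apply, of_apply, altChoose]
  rw [pow_add, ← Nat.sum_range_choose_mul_choose_eq (u := s - 1 - b) (by omega : s - 1 - a < s),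
    ← sum_range_reflect, Nat.cast_sum, mul_sum,
    ← Fin.sum_univ_eq_sum_range (fun k => (-1) ^ (s - 1 - a) * (-1) ^ (s - 1 - b) *
      (((s - 1 - a).choose (s - 1 - k) * (s - 1 - b).choose (s - 1 - k) : ℕ) : ℝ))]
  refine sum_congr rfl fun k _ => ?_
  push_cast
  ring

theorem det_chainGramianFactor_ne_zero : (chainGramianFactor s).det ≠ 0 := by
  rw [det_of_isUpperTriangular]
  · exact prod_ne_zero_iff.mpr fun a _ => by simp [chainGramianFactor]
  · intro a k (hka : k < a)
    have : s - 1 - (a : ℕ) < s - 1 - k := by have := a.isLt; omega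
    simp [chainGramianFactor, Nat.choose_eq_zero_of_lt this]

theorem chainGramian_posDef : (chainGramian s).PosDef := by
  rw [chainGramian_eq_mul_transpose, ← conjTranspose_eq_transpose_of_trivial]
  exact .mul_conjTranspose_self _ <| vecMul_injective_iff_isUnit.mpr <|
    (isUnit_iff_isUnit_det _).mpr (isUnit_iff_ne_zero.mpr det_chainGramianFactor_ne_zero)

end Block

def chainInput {p : ℕ} (r : Fin p → ℕ) : Matrix (Σ i, Fin (r i)) (Fin p) ℝ :=
  of fun x j => if x.1 = j ∧ (x.2 : ℕ) + 1 = r x.1 then 1 else 0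

theorem chainInput_mul_transpose {p : ℕ} (r : Fin p → ℕ) :
    chainInput r * (chainInput r)ᵀ = blockDiagonal' fun i => cornerMatrix (r i) := by
  ext ⟨i, a⟩ ⟨j, b⟩
  by_cases h : i = j
  · subst h
    simp only [chainInput, cornerMatrix, mul_apply, transpose_apply, of_apply,
      blockDiagonal'_apply_eq, ite_and, mul_ite, mul_one, mul_zero, sum_ite_eq, mem_univ, if_true]
    split_ifs <;> rfl
  · simp [chainInput, mul_apply, blockDiagonal'_apply_ne _ _ _ h, h, ite_and]

end ChainIntegrator

open ChainIntegrator

theorem stmt14_general (p : ℕ) (r : Fin p → ℕ)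
    (A : Matrix ((i : Fin p) × Fin (r i)) ((i : Fin p) × Fin (r i)) ℝ)
    (hA : A = Matrix.blockDiagonal' fun i =>
      Matrix.of fun a b : Fin (r i) => if (a : ℕ) + 1 = (b : ℕ) then (1 : ℝ) else 0)
    (B : Matrix ((i : Fin p) × Fin (r i)) (Fin p) ℝ)
    (hB : B = Matrix.of fun x j =>
      if x.1 = j ∧ (x.2 : ℕ) + 1 = r x.1 then (1 : ℝ) else 0) :
    ∀ ς : ℝ, 0 < ς →
      ∃ (K : Matrix (Fin p) ((i : Fin p) × Fin (r i)) ℝ) (ϑ : ℝ)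
        (X R : Matrix ((i : Fin p) × Fin (r i)) ((i : Fin p) × Fin (r i)) ℝ),
        0 < ϑ ∧ X.PosDef ∧
        X * (A - ς • (B * K)) + (A - ς • (B * K))ᵀ * X = -(Rᵀ * R) - (2 * ϑ) • X ∧
        X * B = Kᵀ := by
  intro ς hς
  refine exists_closedLoop_lyapunov (S := blockDiagonal' fun i => chainGramian (r i))
    (.blockDiagonal' fun i => chainGramian_posDef) ?_ hς
  change A = blockDiagonal' fun i => shiftMatrix (r i) at hA
  change B = chainInput r at hB
  rw [hA, hB, chainInput_mul_transpose, blockDiagonal'_transpose, ← blockDiagonal'_mul,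
    ← blockDiagonal'_mul, ← blockDiagonal'_add, ← blockDiagonal'_add]
  exact congrArg _ (funext fun i => chainGramian_lyapunov)

theorem stmt14 (p : ℕ) (hp : 1 ≤ p) (r : Fin p → ℕ) (hr : ∀ i, 1 ≤ r i)
    (A : Matrix ((i : Fin p) × Fin (r i)) ((i : Fin p) × Fin (r i)) ℝ)
    (hA : A = Matrix.blockDiagonal' fun i =>
      Matrix.of fun a b : Fin (r i) => if (a : ℕ) + 1 = (b : ℕ) then (1 : ℝ) else 0)
    (B : Matrix ((i : Fin p) × Fin (r i)) (Fin p) ℝ)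
    (hB : B = Matrix.of fun x j =>
      if x.1 = j ∧ (x.2 : ℕ) + 1 = r x.1 then (1 : ℝ) else 0) :
    ∀ ς : ℝ, 0 < ς →
      ∃ (K : Matrix (Fin p) ((i : Fin p) × Fin (r i)) ℝ) (ϑ : ℝ)
        (X R : Matrix ((i : Fin p) × Fin (r i)) ((i : Fin p) × Fin (r i)) ℝ),
        0 < ϑ ∧ X.PosDef ∧
        X * (A - ς • (B * K)) + (A - ς • (B * K))ᵀ * X = -(Rᵀ * R) - (2 * ϑ) • X ∧
        X * B = Kᵀ :=
  stmt14_general p r A hA B hB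
end

section
/- Let r, p ∈ ℕ, A ∈ ℝ^{r×r}, B ∈ ℝ^{r×p}, K ∈ ℝ^{p×r}, and let ς > 0, ϑ > 0, X ∈ ℝ^{r×r} symmetric positive definite, and R ∈ ℝ^{r×r} satisfy X(A − ς B K) + (A − ς B K)ᵀ X = −Rᵀ R − 2ϑ X and X B = Kᵀ. Let M ∈ ℝ^{p×p} be such that M + Mᵀ − 2ς I_p is positive semidefinite. Then for all ξ ∈ ℝ^r and w ∈ ℝ^p, 2 ξᵀ X ((A − ς B K) ξ − B (M − ς I_p) K ξ + B w) ≤ −2ϑ ξᵀ X ξ + 2 ξᵀ Kᵀ w. -/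
/-!
The Lyapunov equation makes the quadratic form of `X (A - ς B K)` at most `-ϑ ξᵀ X ξ`.
Since `X B = Kᵀ`, every `B`-term becomes an inner product with `K ξ`: the input term gives
`ξᵀ Kᵀ w`, and the feedback term is `(K ξ)ᵀ (M - ς I) (K ξ) ≥ 0` by the sector condition on `M`.
-/

open Matrix

section QuadraticForms

variable {n : Type*} [Fintype n]

theorem Matrix.dotProduct_transpose_mulVec_self {R : Type*} [CommSemiring R]
    (D : Matrix n n R) (x : n → R) : x ⬝ᵥ Dᵀ *ᵥ x = x ⬝ᵥ D *ᵥ x := by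
  rw [dotProduct_mulVec, vecMul_transpose, dotProduct_comm]

theorem Matrix.two_mul_dotProduct_mulVec_mulVec {R : Type*} [CommRing R] {X : Matrix n n R}
    (hX : Xᵀ = X) (C : Matrix n n R) (x : n → R) :
    2 * (x ⬝ᵥ X *ᵥ (C *ᵥ x)) = x ⬝ᵥ (X * C + Cᵀ * X) *ᵥ x := by
  have hsym : x ⬝ᵥ (Cᵀ * X) *ᵥ x = x ⬝ᵥ (X * C) *ᵥ x := by
    rw [← dotProduct_transpose_mulVec_self, transpose_mul, transpose_transpose, hX]
  rw [add_mulVec, dotProduct_add, hsym, mulVec_mulVec]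
  ring

theorem Matrix.two_mul_dotProduct_mulVec_mulVec_le_of_lyapunov {m : Type*} [Fintype m]
    {X C : Matrix n n ℝ} {R : Matrix m n ℝ} {ϑ : ℝ} (hX : Xᵀ = X)
    (hlyap : X * C + Cᵀ * X = -(Rᵀ * R) - (2 * ϑ) • X) (x : n → ℝ) :
    2 * (x ⬝ᵥ X *ᵥ (C *ᵥ x)) ≤ -2 * ϑ * (x ⬝ᵥ X *ᵥ x) := by
  have hR : 0 ≤ x ⬝ᵥ (Rᵀ * R) *ᵥ x := by
    simpa using (posSemidef_conjTranspose_mul_self R).dotProduct_mulVec_nonneg x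
  rw [two_mul_dotProduct_mulVec_mulVec hX, hlyap, sub_mulVec, neg_mulVec, smul_mulVec,
    dotProduct_sub, dotProduct_neg, dotProduct_smul, smul_eq_mul]
  linarith

theorem Matrix.dotProduct_mulVec_nonneg_of_posSemidef_add_transpose {N : Matrix n n ℝ}
    (hN : (N + Nᵀ).PosSemidef) (x : n → ℝ) : 0 ≤ x ⬝ᵥ N *ᵥ x := by
  have h := hN.dotProduct_mulVec_nonneg x
  rw [star_trivial, add_mulVec, dotProduct_add, dotProduct_transpose_mulVec_self] at h
  linarith

end QuadraticForms

theorem stmt15_general (r p : ℕ)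
    (A : Matrix (Fin r) (Fin r) ℝ) (B : Matrix (Fin r) (Fin p) ℝ)
    (K : Matrix (Fin p) (Fin r) ℝ) (ς ϑ : ℝ)
    (X : Matrix (Fin r) (Fin r) ℝ) (hX : X.PosDef)
    (R : Matrix (Fin r) (Fin r) ℝ)
    (hlyap : X * (A - ς • (B * K)) + (A - ς • (B * K))ᵀ * X = -(Rᵀ * R) - (2 * ϑ) • X)
    (hXB : X * B = Kᵀ)
    (M : Matrix (Fin p) (Fin p) ℝ)
    (hM : (M + Mᵀ - (2 * ς) • (1 : Matrix (Fin p) (Fin p) ℝ)).PosSemidef) :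
    ∀ (ξ : Fin r → ℝ) (w : Fin p → ℝ),
      2 * (ξ ⬝ᵥ (X *ᵥ ((A - ς • (B * K)) *ᵥ ξ -
          B *ᵥ ((M - ς • (1 : Matrix (Fin p) (Fin p) ℝ)) *ᵥ (K *ᵥ ξ)) + B *ᵥ w))) ≤
        -2 * ϑ * (ξ ⬝ᵥ (X *ᵥ ξ)) + 2 * (ξ ⬝ᵥ (Kᵀ *ᵥ w)) := by
  intro ξ w
  have hXt : Xᵀ = X := by simpa [conjTranspose_eq_transpose_of_trivial] using hX.isHermitian.eq
  have hdecay := two_mul_dotProduct_mulVec_mulVec_le_of_lyapunov hXt hlyap ξ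
  have hsector : 0 ≤ (K *ᵥ ξ) ⬝ᵥ (M - ς • 1) *ᵥ (K *ᵥ ξ) := by
    refine dotProduct_mulVec_nonneg_of_posSemidef_add_transpose ?_ _
    convert hM using 1
    rw [transpose_sub, transpose_smul, transpose_one, two_mul, add_smul]
    abel
  have hXB_mulVec (u : Fin p → ℝ) : ξ ⬝ᵥ X *ᵥ (B *ᵥ u) = (K *ᵥ ξ) ⬝ᵥ u := by
    rw [mulVec_mulVec, hXB, dotProduct_mulVec, vecMul_transpose]
  have hKt : ξ ⬝ᵥ Kᵀ *ᵥ w = (K *ᵥ ξ) ⬝ᵥ w := by rw [dotProduct_mulVec, vecMul_transpose]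
  rw [mulVec_add, mulVec_sub, dotProduct_add, dotProduct_sub, hXB_mulVec, hXB_mulVec, hKt]
  linarith

theorem stmt15 (r p : ℕ)
    (A : Matrix (Fin r) (Fin r) ℝ) (B : Matrix (Fin r) (Fin p) ℝ)
    (K : Matrix (Fin p) (Fin r) ℝ) (ς ϑ : ℝ) (hς : 0 < ς) (hϑ : 0 < ϑ)
    (X : Matrix (Fin r) (Fin r) ℝ) (hX : X.PosDef)
    (R : Matrix (Fin r) (Fin r) ℝ)
    (hlyap : X * (A - ς • (B * K)) + (A - ς • (B * K))ᵀ * X = -(Rᵀ * R) - (2 * ϑ) • X)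
    (hXB : X * B = Kᵀ)
    (M : Matrix (Fin p) (Fin p) ℝ)
    (hM : (M + Mᵀ - (2 * ς) • (1 : Matrix (Fin p) (Fin p) ℝ)).PosSemidef) :
    ∀ (ξ : Fin r → ℝ) (w : Fin p → ℝ),
      2 * (ξ ⬝ᵥ (X *ᵥ ((A - ς • (B * K)) *ᵥ ξ -
          B *ᵥ ((M - ς • (1 : Matrix (Fin p) (Fin p) ℝ)) *ᵥ (K *ᵥ ξ)) + B *ᵥ w))) ≤
        -2 * ϑ * (ξ ⬝ᵥ (X *ᵥ ξ)) + 2 * (ξ ⬝ᵥ (Kᵀ *ᵥ w)) :=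
  stmt15_general r p A B K ς ϑ X hX R hlyap hXB M hM
end

section
/- Let f : ℝ^n → ℝ^m and x ∈ ℝ^n, and suppose f is bounded on some closed ball centered at x of positive radius. Then ⋂_{δ>0} cl(co(f(cl(B(x,δ))))) = co({ y ∈ ℝ^m : there exists a sequence (x_b)_{b∈ℕ} in ℝ^n with x_b → x and f(x_b) → y }), where B(x,δ) is the open ball of radius δ centered at x. -/
/-!
Let `D` be the set of cluster values of `f` at `x`; local boundedness makes `D` compact, hence
(Carathéodory) so is `co D`. Every closed convex set `cl co f(B̄(x, δ))` contains `D`, giving `⊇`.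
Conversely, if `y ∉ co D`, a linear functional strictly separates `y` from `co D`; the open
half-space `{φ < u}` contains all cluster values, so by compactness it contains `f(B̄(x, δ))` for
some `δ > 0`, and then `cl co f(B̄(x, δ)) ⊆ {φ ≤ u}` misses `y`.
-/

open Set Filter Topology

section ConvexHull

variable {E : Type*} [AddCommGroup E] [Module ℝ E]

theorem convexHull_range_eq_image_stdSimplex {ι : Type*} [Fintype ι] (z : ι → E) :
    convexHull ℝ (range z) = Fintype.linearCombination ℝ z '' stdSimplex ℝ ι := by
  classical
  rw [← convexHull_rangle_single_eq_stdSimplex, LinearMap.image_convexHull, ← range_comp]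
  congr 2
  ext i
  simp [Fintype.linearCombination_apply_single]

/-- Carathéodory: `finrank + 1` points of `s` suffice. -/
theorem exists_mem_stdSimplex_of_mem_convexHull [FiniteDimensional ℝ E] {s : Set E} {x : E}
    (hx : x ∈ convexHull ℝ s) :
    ∃ w ∈ stdSimplex ℝ (Fin (Module.finrank ℝ E + 1)), ∃ z : Fin (Module.finrank ℝ E + 1) → E,
      (∀ i, z i ∈ s) ∧ ∑ i, w i • z i = x := by
  rw [convexHull_eq_union] at hx
  simp only [mem_iUnion] at hx
  obtain ⟨t, hts, hti, hxt⟩ := hx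
  have hcard : Fintype.card t ≤ Fintype.card (Fin (Module.finrank ℝ E + 1)) := by
    simpa using hti.card_le_finrank_succ.trans (Nat.succ_le_succ (Submodule.finrank_le _))
  obtain ⟨e⟩ := Function.Embedding.nonempty_of_card_le hcard
  have : Nonempty t := (convexHull_nonempty_iff.1 ⟨x, hxt⟩).to_subtype
  -- `Function.invFun e` lists the points of `t`, with repetitions, indexed by `Fin (finrank + 1)`.
  have hrange : range (Subtype.val ∘ Function.invFun e) = t := by
    rw [range_comp, (Function.invFun_surjective e.injective).range_eq, image_univ,
      Subtype.range_coe]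
  rw [← hrange, convexHull_range_eq_image_stdSimplex] at hxt
  obtain ⟨w, hw, rfl⟩ := hxt
  exact ⟨w, hw, _, fun i => hts (Function.invFun e i).2, rfl⟩

theorem convexHull_eq_image_stdSimplex_prod_pi [FiniteDimensional ℝ E] (s : Set E) :
    convexHull ℝ s = (fun p : (Fin (Module.finrank ℝ E + 1) → ℝ) × (_ → E) =>
      ∑ i, p.1 i • p.2 i) '' (stdSimplex ℝ _ ×ˢ univ.pi fun _ => s) := by
  refine Subset.antisymm (fun x hx => ?_) ?_
  · obtain ⟨w, hw, z, hz, rfl⟩ := exists_mem_stdSimplex_of_mem_convexHull hx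
    exact ⟨(w, z), ⟨hw, mem_univ_pi.2 hz⟩, rfl⟩
  · rintro _ ⟨⟨w, z⟩, ⟨⟨hw₀, hw₁⟩, hz⟩, rfl⟩
    exact mem_convexHull_of_exists_fintype w z hw₀ hw₁ (mem_univ_pi.1 hz) rfl

theorem IsCompact.convexHull [TopologicalSpace E] [IsTopologicalAddGroup E] [ContinuousSMul ℝ E]
    [FiniteDimensional ℝ E] {s : Set E} (hs : IsCompact s) : IsCompact (convexHull ℝ s) := by
  rw [convexHull_eq_image_stdSimplex_prod_pi]
  exact ((isCompact_stdSimplex ℝ _).prod (isCompact_univ_pi fun _ => hs)).image (by fun_prop)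

end ConvexHull

theorem mapClusterPt_iff_exists_seq {α X : Type*} [TopologicalSpace X] [FirstCountableTopology X]
    {l : Filter α} [l.IsCountablyGenerated] {f : α → X} {y : X} :
    MapClusterPt y l f ↔
      ∃ a : ℕ → α, Tendsto a atTop l ∧ Tendsto (fun n => f (a n)) atTop (𝓝 y) := by
  refine ⟨fun h => ?_, fun ⟨a, hal, hfa⟩ => hfa.mapClusterPt.of_comp hal⟩
  obtain ⟨a, hfa, hal⟩ := h.exists_seq_tendsto
  exact ⟨a, hal, hfa⟩

theorem biInter_closure_convexHull_image_eq_convexHull_mapClusterPt {α E : Type*}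
    [NormedAddCommGroup E] [NormedSpace ℝ E] [FiniteDimensional ℝ E] {l : Filter α} {f : α → E}
    {K : Set E} (hK : IsCompact K) (hfK : ∀ᶠ a in l, f a ∈ K) :
    ⋂ s ∈ l, closure (convexHull ℝ (f '' s)) = convexHull ℝ {y | MapClusterPt y l f} := by
  set D := {y | MapClusterPt y l f}
  have hD : IsCompact D := hK.of_isClosed_subset isClosed_setOfPred_clusterPt
    fun y hy => hK.isClosed.mem_of_mapClusterPt hy hfK
  refine Subset.antisymm (fun y hy => ?_) (subset_iInter₂ fun s hs => ?_)
  · by_contra hyD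
    obtain ⟨φ, u, hφD, hφy⟩ :=
      geometric_hahn_banach_closed_point (convex_convexHull ℝ D) hD.convexHull.isClosed hyD
    set U := {z | φ z < u}
    have hfU : f ⁻¹' U ∈ l := hK.tendsto_nhdsSet_of_mapClusterPt hfK (fun _ _ hz => hz) <|
      (isOpen_lt φ.continuous continuous_const).mem_nhdsSet.2
        fun z hz => hφD z (subset_convexHull ℝ D hz)
    have hUy : y ∈ closure (convexHull ℝ (f '' (f ⁻¹' U))) := mem_iInter₂.1 hy _ hfU
    have hhullU : convexHull ℝ (f '' (f ⁻¹' U)) ⊆ U :=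
      convexHull_min (image_preimage_subset f U) (convex_halfSpace_lt φ.toLinearMap.isLinear u)
    have : φ y ≤ u := closure_lt_subset_le φ.continuous continuous_const (closure_mono hhullU hUy)
    linarith
  · refine convexHull_min (fun y hy => ?_) (convex_convexHull ℝ _).closure
    exact closure_mono (subset_convexHull ℝ _)
      (clusterPt_iff_forall_mem_closure.1 hy (f '' s) (image_mem_map hs))

theorem stmt17 (n m : ℕ)
    (f : EuclideanSpace ℝ (Fin n) → EuclideanSpace ℝ (Fin m))
    (x : EuclideanSpace ℝ (Fin n)) (r : ℝ) (hr : 0 < r)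
    (hb : Bornology.IsBounded (f '' Metric.closedBall x r)) :
    ⋂ δ > (0 : ℝ), closure (convexHull ℝ (f '' closure (Metric.ball x δ))) =
      convexHull ℝ {y : EuclideanSpace ℝ (Fin m) |
        ∃ xb : ℕ → EuclideanSpace ℝ (Fin n),
          Tendsto xb atTop (𝓝 x) ∧ Tendsto (fun b => f (xb b)) atTop (𝓝 y)} := by
  have hbasis : (𝓝 x).HasBasis (fun δ : ℝ => 0 < δ) fun δ => closure (Metric.ball x δ) :=
    Metric.nhds_basis_closedBall.congr (fun _ => Iff.rfl) fun δ hδ => (closure_ball x hδ.ne').symm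
  have hmono : Monotone fun s => closure (convexHull ℝ (f '' s)) :=
    fun _ _ h => closure_mono (convexHull_mono (image_mono h))
  have hfK : ∀ᶠ a in 𝓝 x, f a ∈ closure (f '' Metric.closedBall x r) :=
    mem_of_superset (Metric.closedBall_mem_nhds x hr) fun a ha =>
      subset_closure (mem_image_of_mem f ha)
  calc _ = ⋂ s ∈ 𝓝 x, closure (convexHull ℝ (f '' s)) := (hbasis.biInter_mem hmono).symm
    _ = convexHull ℝ {y | MapClusterPt y (𝓝 x) f} :=
      biInter_closure_convexHull_image_eq_convexHull_mapClusterPt hb.isCompact_closure hfK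
    _ = _ := by simp_rw [mapClusterPt_iff_exists_seq]
end
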